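/- arXiv:2306.09315 — 10 statements merged into one kernel-verified Lean document; each statement's English description precedes it below -/
import Mathlib

section
/- Let n ≥ 1 and let M be an n×n real matrix such that every off-diagonal entry of M is ≤ 0 and every row sum of M is ≥ 0. Let x ∈ ℝⁿ have all entries ≥ 0. Suppose that for every vector χ ∈ {0,1}ⁿ with χ ≠ 0 there exists an index j with (x − M·χ)_j < 0. Then for every vector z ∈ ℤⁿ with all entries ≥ 0 and z ≠ 0 there exists an index j with (x − M·z)_j < 0. -/
open Matrix

/-- Theorem `zchigeneral` at the level of the matrix `M`: if every off-diagonal entry of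
`M` is ≤ 0, every row sum of `M` is ≥ 0, `x` is entrywise nonnegative, and for every
nonzero 0-1 vector `χ` some entry of `x - M·χ` is negative, then for every nonzero
nonnegative integer vector `z` some entry of `x - M·z` is negative. -/
theorem stmt1 (n : ℕ) (hn : 1 ≤ n) (M : Matrix (Fin n) (Fin n) ℝ)
    (hoff : ∀ i j, i ≠ j → M i j ≤ 0)
    (hrow : ∀ i, 0 ≤ ∑ j, M i j)
    (x : Fin n → ℝ) (hx : ∀ i, 0 ≤ x i)
    (hchi : ∀ χ : Fin n → ℝ, (∀ i, χ i = 0 ∨ χ i = 1) → χ ≠ 0 →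
      ∃ j, (x - M.mulVec χ) j < 0) :
    ∀ z : Fin n → ℤ, (∀ i, 0 ≤ z i) → z ≠ 0 →
      ∃ j, (x - M.mulVec (fun i => (z i : ℝ))) j < 0 := by
  intro z hz hz0
  by_contra hcon
  push_neg at hcon
  obtain ⟨i0, -, hi0⟩ := Finset.exists_max_image Finset.univ z
    ⟨⟨0, hn⟩, Finset.mem_univ _⟩
  set m := z i0 with hm
  have hi0' : ∀ i, z i ≤ m := fun i => hi0 i (Finset.mem_univ _)
  have hm1 : 1 ≤ m := by
    obtain ⟨k, hk⟩ := Function.ne_iff.mp hz0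
    have h1 : 1 ≤ z k := by have := hz k; simp [Pi.zero_apply] at hk; omega
    exact le_trans h1 (hi0' k)
  set χ : Fin n → ℝ := fun i => if z i = m then 1 else 0 with hχ
  have hχ01 : ∀ i, χ i = 0 ∨ χ i = 1 := by
    intro i; by_cases h : z i = m <;> simp [hχ, h]
  have hχne : χ ≠ 0 := by
    intro h
    have := congrFun h i0
    simp [hχ] at this
    exact this hm.symm
  obtain ⟨j, hj⟩ := hchi χ hχ01 hχne
  have hj2 : 0 ≤ (x - M.mulVec fun i => (z i : ℝ)) j := hcon j
  simp only [Pi.sub_apply] at hj hj2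
  by_cases hjm : z j = m
  · have key : ∀ i ∈ Finset.univ, M j i * ((m : ℝ) - 1) ≤ M j i * ((z i : ℝ) - χ i) := by
      intro i _
      by_cases hi : i = j
      · subst hi; simp [hχ, hjm]
      · have hMle : M j i ≤ 0 := hoff j i (Ne.symm hi)
        have hle : ((z i : ℝ) - χ i) ≤ (m : ℝ) - 1 := by
          by_cases h : z i = m
          · simp [hχ, h]
          · have h2 : z i ≤ m - 1 := by have := hi0' i; omega
            have h3 : ((z i : ℝ)) ≤ (m : ℝ) - 1 := by exact_mod_cast h2
            simp [hχ, h]; linarith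
        nlinarith
    have sum_ge : 0 ≤ ∑ i, M j i * ((z i : ℝ) - χ i) := by
      have h1 : ((m : ℝ) - 1) * ∑ i, M j i ≤ ∑ i, M j i * ((z i : ℝ) - χ i) := by
        rw [Finset.mul_sum]
        refine Finset.sum_le_sum fun i hi => ?_
        rw [mul_comm]; exact key i hi
      have hm1' : (0 : ℝ) ≤ (m : ℝ) - 1 := by
        have : (1 : ℝ) ≤ (m : ℝ) := by exact_mod_cast hm1
        linarith
      have h2 : 0 ≤ ((m : ℝ) - 1) * ∑ i, M j i := mul_nonneg hm1' (hrow j)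
      linarith
    have hsplit : ∑ i, M j i * ((z i : ℝ) - χ i)
        = ∑ i, M j i * (z i : ℝ) - ∑ i, M j i * χ i := by
      rw [← Finset.sum_sub_distrib]
      congr 1; ext i; ring
    have hle : M.mulVec χ j ≤ M.mulVec (fun i => (z i : ℝ)) j := by
      simp only [Matrix.mulVec, dotProduct]
      rw [hsplit] at sum_ge
      linarith
    linarith
  · have hMχ : M.mulVec χ j ≤ 0 := by
      show ∑ i, M j i * χ i ≤ 0
      apply Finset.sum_nonpos
      intro i _
      by_cases h : z i = m
      · have hij : j ≠ i := by rintro rfl; exact hjm h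
        simp [hχ, h]; exact hoff j i hij
      · simp [hχ, h]
    have := hx j
    linarith
end

section
/- Let m ≥ 1 and let L be the 2m×2m integer matrix with L_{ii} = 2, L_{i,i+1} = L_{i+1,i} = 1 for 1 ≤ i ≤ 2m−1, and all other entries 0. Define f : ℤ^{2m} → ℤ/(2m+1)ℤ by f(x) = Σ_{j=1}^{2m} (−1)^{j+1} · j · x_j (mod 2m+1). Then f is a surjective additive group homomorphism whose kernel is exactly the image of L (as a ℤ-linear map ℤ^{2m} → ℤ^{2m}); hence f induces a group isomorphism ℤ^{2m}/im L ≅ ℤ/(2m+1)ℤ. -/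
open Matrix

/-- tridiagonal matrix entries (2 on diag, 1 off diag), ℕ-indexed. -/
def Ln (i j : ℕ) : ℤ :=
  if i = j then 2 else if i + 1 = j ∨ j + 1 = i then 1 else 0

lemma Ln_symm (i j : ℕ) : Ln i j = Ln j i := by
  unfold Ln
  simp only [eq_comm, or_comm]

lemma tri_sum (n : ℕ) (g : ℕ → ℤ) (j : ℕ) (hj : j < n) :
    ∑ i ∈ Finset.range n, Ln i j * g i =
      2 * g j + (if j = 0 then 0 else g (j - 1)) + (if j + 1 = n then 0 else g (j + 1)) := by
  have hpt : ∀ i, Ln i j * g i =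
      (if i = j then 2 * g i else 0) + (if i + 1 = j then g i else 0)
        + (if j + 1 = i then g i else 0) := by
    intro i
    unfold Ln
    split_ifs <;> first | ring1 | (exfalso; omega)
  rw [Finset.sum_congr rfl fun i _ => hpt i, Finset.sum_add_distrib, Finset.sum_add_distrib]
  congr 1
  · congr 1
    · rw [Finset.sum_ite_eq' (Finset.range n) j (fun i => 2 * g i),
        if_pos (Finset.mem_range.mpr hj)]
    · rcases Nat.eq_zero_or_pos j with h0 | h0
      · subst h0
        simp
      · obtain ⟨jj, rfl⟩ : ∃ jj, j = jj + 1 := ⟨j - 1, by omega⟩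
        have h1 : ∀ i, (if i + 1 = jj + 1 then g i else 0) = (if i = jj then g i else 0) := by
          intro i; simp [Nat.add_right_cancel_iff]
        rw [Finset.sum_congr rfl fun i _ => h1 i,
          Finset.sum_ite_eq' (Finset.range n) jj g, if_pos (Finset.mem_range.mpr (by omega)),
          if_neg (by omega)]
        simp
  · have h1 : ∀ i, (if j + 1 = i then g i else 0) = (if i = j + 1 then g i else 0) := by
      intro i; simp [eq_comm]
    rw [Finset.sum_congr rfl fun i _ => h1 i, Finset.sum_ite_eq' (Finset.range n) (j + 1) g]
    rcases eq_or_ne (j + 1) n with h | h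
    · rw [if_neg (by simp [h]), if_pos h]
    · rw [if_pos (Finset.mem_range.mpr (by omega)), if_neg h]

lemma lemA (n : ℕ) (hn : 2 ≤ n) (hne : Even n) (j : ℕ) (hj : j < n) :
    ∑ i ∈ Finset.range n, Ln i j * ((-1) ^ i * ((i : ℤ) + 1)) =
      if j + 1 = n then -((n : ℤ) + 1) else 0 := by
  simp only [tri_sum n (fun i => (-1) ^ i * ((i : ℤ) + 1)) j hj]
  rcases Nat.eq_zero_or_pos j with rfl | hpos
  · rw [if_pos rfl, if_neg (by omega), if_neg (by omega)]
    norm_num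
  · obtain ⟨jj, rfl⟩ : ∃ jj, j = jj + 1 := ⟨j - 1, by omega⟩
    rw [if_neg (by omega)]
    simp only [Nat.add_sub_cancel]
    rcases eq_or_ne (jj + 1 + 1) n with h | h
    · rw [if_pos h, if_pos h, ← h]
      have hjje : (-1 : ℤ) ^ jj = 1 :=
        Even.neg_one_pow (by obtain ⟨p, hp⟩ := hne; exact ⟨p - 1, by omega⟩)
      simp only [pow_succ, hjje]
      push_cast
      ring
    · rw [if_neg h, if_neg h]
      simp only [pow_succ]
      push_cast
      ring

/-- scaled inverse entries -/
def Cm (n j k : ℕ) : ℤ := (-1) ^ (j + k) * (((min j k : ℕ) : ℤ) + 1) * ((n : ℤ) - ((max j k : ℕ) : ℤ))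

lemma minmax_cast (j k : ℕ) :
    (((min j k : ℕ) : ℤ) + 1) * (((max j k : ℕ) : ℤ) + 1) = ((j : ℤ) + 1) * ((k : ℤ) + 1) := by
  rcases le_total j k with h | h
  · rw [min_eq_left h, max_eq_right h]
  · rw [min_eq_right h, max_eq_left h]; ring

lemma lemC (n j k : ℕ) :
    ((n : ℤ) + 1) ∣ Cm n j k + ((-1) ^ j * ((j : ℤ) + 1)) * ((-1) ^ k * ((k : ℤ) + 1)) := by
  refine ⟨(-1) ^ (j + k) * (((min j k : ℕ) : ℤ) + 1), ?_⟩
  have hmm := minmax_cast j k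
  unfold Cm
  rw [pow_add]
  linear_combination (-((-1 : ℤ) ^ j * (-1) ^ k)) * hmm

lemma lemB (n : ℕ) (hn : 2 ≤ n) (i k : ℕ) (hi : i < n) (hk : k < n) :
    ∑ j ∈ Finset.range n, Ln j i * Cm n j k = if i = k then ((n : ℤ) + 1) else 0 := by
  simp only [tri_sum n (fun j => Cm n j k) i hi]
  unfold Cm
  rcases lt_trichotomy i k with h | rfl | h
  · -- i < k
    rw [if_neg (show ¬i = k by omega), if_neg (show ¬i + 1 = n by omega)]
    rcases Nat.eq_zero_or_pos i with rfl | hpos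
    · rw [if_pos rfl]
      rw [min_eq_left (show (0 : ℕ) ≤ k by omega), max_eq_right (show (0 : ℕ) ≤ k by omega),
        min_eq_left (show (0 : ℕ) + 1 ≤ k by omega), max_eq_right (show (0 : ℕ) + 1 ≤ k by omega)]
      rw [show (0 : ℕ) + 1 + k = k + 1 by omega, show (0 : ℕ) + k = k by omega]
      simp only [pow_succ]
      push_cast
      ring
    · obtain ⟨ii, rfl⟩ : ∃ ii, i = ii + 1 := ⟨i - 1, by omega⟩
      rw [if_neg (by omega)]
      simp only [Nat.add_sub_cancel]
      rw [min_eq_left (show ii + 1 ≤ k by omega), max_eq_right (show ii + 1 ≤ k by omega),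
        min_eq_left (show ii ≤ k by omega), max_eq_right (show ii ≤ k by omega),
        min_eq_left (show ii + 1 + 1 ≤ k by omega), max_eq_right (show ii + 1 + 1 ≤ k by omega)]
      rw [show ii + 1 + k = ii + k + 1 by omega, show ii + 1 + 1 + k = ii + k + 1 + 1 by omega]
      simp only [pow_succ]
      push_cast
      ring
  · -- i = k
    rw [if_pos rfl]
    rcases Nat.eq_zero_or_pos i with rfl | hpos
    · rw [if_pos rfl, if_neg (show ¬(0 : ℕ) + 1 = n by omega)]
      rw [min_self, max_self,
        min_eq_right (show (0 : ℕ) ≤ 0 + 1 by omega), max_eq_left (show (0 : ℕ) ≤ 0 + 1 by omega)]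
      rw [show (0 : ℕ) + 1 + 0 = 0 + 1 by omega, show (0 : ℕ) + 0 = 0 by omega]
      simp only [pow_succ, pow_zero]
      push_cast
      ring
    · obtain ⟨ii, rfl⟩ : ∃ ii, i = ii + 1 := ⟨i - 1, by omega⟩
      rw [if_neg (by omega)]
      simp only [Nat.add_sub_cancel]
      have he : (-1 : ℤ) ^ (ii + ii) = 1 := Even.neg_one_pow ⟨ii, rfl⟩
      rw [min_self, max_self,
        min_eq_left (show ii ≤ ii + 1 by omega), max_eq_right (show ii ≤ ii + 1 by omega)]
      rcases eq_or_ne (ii + 1 + 1) n with h | h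
      · rw [if_pos h, ← h]
        rw [show ii + 1 + (ii + 1) = ii + ii + 1 + 1 by omega,
          show ii + (ii + 1) = ii + ii + 1 by omega]
        simp only [pow_succ, he]
        push_cast
        ring
      · rw [if_neg h]
        rw [min_eq_right (show ii + 1 ≤ ii + 1 + 1 by omega),
          max_eq_left (show ii + 1 ≤ ii + 1 + 1 by omega)]
        rw [show ii + 1 + (ii + 1) = ii + ii + 1 + 1 by omega,
          show ii + (ii + 1) = ii + ii + 1 by omega,
          show ii + 1 + 1 + (ii + 1) = ii + ii + 1 + 1 + 1 by omega]
        simp only [pow_succ, he]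
        push_cast
        ring
  · -- k < i
    rw [if_neg (show ¬i = k by omega)]
    obtain ⟨ii, rfl⟩ : ∃ ii, i = ii + 1 := ⟨i - 1, by omega⟩
    rw [if_neg (by omega)]
    simp only [Nat.add_sub_cancel]
    rw [min_eq_right (show k ≤ ii + 1 by omega), max_eq_left (show k ≤ ii + 1 by omega),
      min_eq_right (show k ≤ ii by omega), max_eq_left (show k ≤ ii by omega),
      min_eq_right (show k ≤ ii + 1 + 1 by omega), max_eq_left (show k ≤ ii + 1 + 1 by omega)]
    rw [show ii + 1 + k = ii + k + 1 by omega, show ii + 1 + 1 + k = ii + k + 1 + 1 by omega]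
    simp only [pow_succ]
    rcases eq_or_ne (ii + 1 + 1) n with h | h
    · rw [if_pos h, ← h]
      push_cast
      ring
    · rw [if_neg h]
      push_cast
      ring

/-- Lemma `SuhoStatistic`: for the reduced signed Laplacian `L` of the all-negative odd
cycle `-C_{2m+1}` (tridiagonal, `2` on the diagonal, `1` on the off-diagonals), the map
`f(x) = Σ_{j=1}^{2m} (-1)^{j+1} j x_j (mod 2m+1)` is a surjective additive homomorphism
with kernel exactly the image of `L`, hence induces `ℤ^{2m}/im L ≃ ℤ/(2m+1)ℤ`.
(With 0-based indices `i = j - 1`, the coefficient `(-1)^{j+1}·j` becomes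
`(-1)^i·(i+1)`.) -/
theorem stmt4 (m : ℕ) (hm : 1 ≤ m)
    (L : Matrix (Fin (2 * m)) (Fin (2 * m)) ℤ)
    (hL : ∀ i j : Fin (2 * m), L i j =
      if i = j then 2
      else if (i : ℕ) + 1 = (j : ℕ) ∨ (j : ℕ) + 1 = (i : ℕ) then 1
      else 0)
    (f : (Fin (2 * m) → ℤ) → ZMod (2 * m + 1))
    (hf : ∀ x, f x =
      ((∑ j : Fin (2 * m), (-1) ^ (j : ℕ) * ((j : ℕ) + 1) * x j : ℤ) : ZMod (2 * m + 1))) :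
    Function.Surjective f ∧
    (∀ x y, f (x + y) = f x + f y) ∧
    (∀ x, f x = 0 ↔ x ∈ LinearMap.range (Matrix.toLin' L)) ∧
    Nonempty (((Fin (2 * m) → ℤ) ⧸ LinearMap.range (Matrix.toLin' L)) ≃+
      ZMod (2 * m + 1)) := by
  have hn2 : 2 ≤ 2 * m := by omega
  haveI : NeZero (2 * m + 1) := ⟨by omega⟩
  have hL' : ∀ i j : Fin (2 * m), L i j = Ln i.val j.val := by
    intro i j
    rw [hL i j]
    unfold Ln
    simp only [Fin.ext_iff]
  -- additivity
  have hadd : ∀ x y, f (x + y) = f x + f y := by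
    intro x y
    rw [hf, hf, hf, ← Int.cast_add]
    congr 1
    rw [← Finset.sum_add_distrib]
    refine Finset.sum_congr rfl fun j _ => ?_
    simp only [Pi.add_apply]
    ring
  -- surjectivity
  have hsurj : Function.Surjective f := by
    intro z
    refine ⟨fun j => if j = (⟨0, by omega⟩ : Fin (2 * m)) then ((z.val : ℤ)) else 0, ?_⟩
    rw [hf]
    have h1 : ∀ j : Fin (2 * m), (-1 : ℤ) ^ (j : ℕ) * ((j : ℕ) + 1) *
        (if j = (⟨0, by omega⟩ : Fin (2 * m)) then ((z.val : ℤ)) else 0)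
        = if j = (⟨0, by omega⟩ : Fin (2 * m)) then ((z.val : ℤ)) else 0 := by
      intro j
      split_ifs with h
      · subst h; simp
      · ring
    rw [Finset.sum_congr rfl fun j _ => h1 j,
      Finset.sum_ite_eq' Finset.univ (⟨0, by omega⟩ : Fin (2 * m)) (fun _ => (z.val : ℤ)),
      if_pos (Finset.mem_univ _)]
    simp [ZMod.natCast_val, ZMod.cast_id]
  -- kernel characterization
  have hker : ∀ x, f x = 0 ↔ x ∈ LinearMap.range (Matrix.toLin' L) := by
    intro x
    constructor
    · intro hx0
      set X : ℕ → ℤ := fun i => if h : i < 2 * m then x ⟨i, h⟩ else 0 with hX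
      have hXx : ∀ j : Fin (2 * m), X j.val = x j := by
        intro j
        simp [hX, j.isLt]
      set S : ℤ := ∑ i ∈ Finset.range (2 * m), ((-1) ^ i * ((i : ℤ) + 1)) * X i with hSdef
      have hSfin : (∑ j : Fin (2 * m), (-1) ^ (j : ℕ) * ((j : ℕ) + 1) * x j : ℤ) = S := by
        rw [hSdef, ← Fin.sum_univ_eq_sum_range (fun i => ((-1) ^ i * ((i : ℤ) + 1)) * X i) (2 * m)]
        refine Finset.sum_congr rfl fun j _ => ?_
        rw [hXx j]
      have hScast : ((S : ZMod (2 * m + 1))) = 0 := by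
        rw [← hSfin, ← hf x]
        exact hx0
      have hSdvd : ((2 * m + 1 : ℕ) : ℤ) ∣ S :=
        (ZMod.intCast_zmod_eq_zero_iff_dvd S (2 * m + 1)).mp hScast
      have hSdvd' : (((2 * m : ℕ) : ℤ) + 1) ∣ S := by
        have he : (((2 * m : ℕ) : ℤ) + 1) = ((2 * m + 1 : ℕ) : ℤ) := by push_cast; ring
        rw [he]; exact hSdvd
      set N : ℕ → ℤ := fun j => ∑ k ∈ Finset.range (2 * m), Cm (2 * m) j k * X k with hN
      have hNdvd : ∀ j, (((2 * m : ℕ) : ℤ) + 1) ∣ N j := by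
        intro j
        have key : N j + ((-1) ^ j * ((j : ℤ) + 1)) * S =
            ∑ k ∈ Finset.range (2 * m),
              (Cm (2 * m) j k + ((-1) ^ j * ((j : ℤ) + 1)) * ((-1) ^ k * ((k : ℤ) + 1))) * X k := by
          rw [hN, hSdef, Finset.mul_sum, ← Finset.sum_add_distrib]
          refine Finset.sum_congr rfl fun k _ => ?_
          ring
        have hdvd2 : (((2 * m : ℕ) : ℤ) + 1) ∣ N j + ((-1) ^ j * ((j : ℤ) + 1)) * S := by
          rw [key]
          exact Finset.dvd_sum fun k _ => Dvd.dvd.mul_right (lemC (2 * m) j k) _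
        have hSd : (((2 * m : ℕ) : ℤ) + 1) ∣ ((-1) ^ j * ((j : ℤ) + 1)) * S :=
          Dvd.dvd.mul_left hSdvd' _
        have := dvd_sub hdvd2 hSd
        simpa using this
      have hDne : (((2 * m : ℕ) : ℤ) + 1) ≠ 0 := by positivity
      refine ⟨fun j => N j.val / (((2 * m : ℕ) : ℤ) + 1), ?_⟩
      rw [Matrix.toLin'_apply]
      funext i
      have hy : ∀ j : Fin (2 * m),
          (((2 * m : ℕ) : ℤ) + 1) * (N j.val / (((2 * m : ℕ) : ℤ) + 1)) = N j.val :=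
        fun j => Int.mul_ediv_cancel' (hNdvd j.val)
      refine mul_left_cancel₀ hDne ?_
      calc (((2 * m : ℕ) : ℤ) + 1) *
            (L.mulVec (fun j => N j.val / (((2 * m : ℕ) : ℤ) + 1)) i)
          = ∑ j : Fin (2 * m), Ln i.val j.val * N j.val := by
            simp only [Matrix.mulVec, dotProduct, Finset.mul_sum]
            refine Finset.sum_congr rfl fun j _ => ?_
            rw [hL' i j, mul_left_comm, hy j]
        _ = ∑ j ∈ Finset.range (2 * m), Ln i.val j * N j :=
            Fin.sum_univ_eq_sum_range (fun j => Ln i.val j * N j) (2 * m)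
        _ = ∑ k ∈ Finset.range (2 * m),
              (∑ j ∈ Finset.range (2 * m), Ln j i.val * Cm (2 * m) j k) * X k := by
            have e1 : ∀ j ∈ Finset.range (2 * m), Ln i.val j * N j
                = ∑ k ∈ Finset.range (2 * m), Ln j i.val * Cm (2 * m) j k * X k := by
              intro j _
              simp only [hN]
              rw [Finset.mul_sum]
              exact Finset.sum_congr rfl fun k _ => by rw [Ln_symm i.val j]; ring
            rw [Finset.sum_congr rfl e1, Finset.sum_comm]
            exact Finset.sum_congr rfl fun k _ => (Finset.sum_mul _ _ _).symm
        _ = ∑ k ∈ Finset.range (2 * m),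
              (if i.val = k then (((2 * m : ℕ) : ℤ) + 1) else 0) * X k := by
            refine Finset.sum_congr rfl fun k hk => ?_
            rw [lemB (2 * m) hn2 i.val k i.isLt (Finset.mem_range.mp hk)]
        _ = (((2 * m : ℕ) : ℤ) + 1) * x i := by
            have e2 : ∀ k ∈ Finset.range (2 * m),
                (if i.val = k then (((2 * m : ℕ) : ℤ) + 1) else 0) * X k
                  = if i.val = k then (((2 * m : ℕ) : ℤ) + 1) * X k else 0 :=
              fun k _ => by split_ifs <;> ring
            rw [Finset.sum_congr rfl e2,
              Finset.sum_ite_eq (Finset.range (2 * m)) i.val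
                (fun k => (((2 * m : ℕ) : ℤ) + 1) * X k),
              if_pos (Finset.mem_range.mpr i.isLt), hXx i]
    · rintro ⟨y, rfl⟩
      rw [Matrix.toLin'_apply, hf]
      set Y : ℕ → ℤ := fun j => if h : j < 2 * m then y ⟨j, h⟩ else 0 with hY
      have hYy : ∀ j : Fin (2 * m), Y j.val = y j := by
        intro j
        simp [hY, j.isLt]
      have h2 : ∀ i : Fin (2 * m), (L.mulVec y) i
          = ∑ j : Fin (2 * m), Ln i.val j.val * Y j.val := by
        intro i
        simp only [Matrix.mulVec, dotProduct]
        exact Finset.sum_congr rfl fun j _ => by rw [hL' i j, hYy j]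
      have h3 : (∑ j : Fin (2 * m), (-1) ^ (j : ℕ) * ((j : ℕ) + 1) * L.mulVec y j : ℤ)
          = ∑ j ∈ Finset.range (2 * m),
              (∑ i ∈ Finset.range (2 * m), Ln i j * ((-1) ^ i * ((i : ℤ) + 1))) * Y j := by
        calc (∑ p : Fin (2 * m), (-1) ^ (p : ℕ) * ((p : ℕ) + 1) * L.mulVec y p : ℤ)
            = ∑ p : Fin (2 * m), ∑ j : Fin (2 * m),
                (Ln p.val j.val * ((-1) ^ (p : ℕ) * (((p : ℕ) : ℤ) + 1))) * Y j.val := by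
              refine Finset.sum_congr rfl fun p _ => ?_
              rw [h2 p, Finset.mul_sum]
              exact Finset.sum_congr rfl fun j _ => by ring
          _ = ∑ j : Fin (2 * m), ∑ p : Fin (2 * m),
                (Ln p.val j.val * ((-1) ^ (p : ℕ) * (((p : ℕ) : ℤ) + 1))) * Y j.val :=
              Finset.sum_comm
          _ = ∑ j : Fin (2 * m),
                (∑ p ∈ Finset.range (2 * m), Ln p j.val * ((-1) ^ p * ((p : ℤ) + 1))) * Y j.val := by
              refine Finset.sum_congr rfl fun j _ => ?_
              rw [← Finset.sum_mul]
              congr 1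
              exact Fin.sum_univ_eq_sum_range
                (fun p => Ln p j.val * ((-1) ^ p * ((p : ℤ) + 1))) (2 * m)
          _ = ∑ j ∈ Finset.range (2 * m),
                (∑ p ∈ Finset.range (2 * m), Ln p j * ((-1) ^ p * ((p : ℤ) + 1))) * Y j :=
              Fin.sum_univ_eq_sum_range
                (fun j => (∑ p ∈ Finset.range (2 * m), Ln p j * ((-1) ^ p * ((p : ℤ) + 1))) * Y j)
                (2 * m)
      rw [h3, Int.cast_sum]
      refine Finset.sum_eq_zero fun j hj => ?_
      rw [Int.cast_mul, lemA (2 * m) hn2 ⟨m, by omega⟩ j (Finset.mem_range.mp hj)]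
      split_ifs with hcond
      · rw [Int.cast_neg]
        have hc0 : (((((2 * m : ℕ) : ℤ)) + 1 : ℤ) : ZMod (2 * m + 1)) = 0 := by
          have he : ((((2 * m : ℕ) : ℤ)) + 1 : ℤ) = ((2 * m + 1 : ℕ) : ℤ) := by push_cast; ring
          rw [he, Int.cast_natCast, ZMod.natCast_self]
        rw [hc0]
        ring
      · rw [Int.cast_zero, zero_mul]
  refine ⟨hsurj, hadd, hker, ?_⟩
  let F : (Fin (2 * m) → ℤ) →+ ZMod (2 * m + 1) :=
    { toFun := f
      map_zero' := by rw [hf]; simp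
      map_add' := hadd }
  have hker_le : LinearMap.range (Matrix.toLin' L) ≤ LinearMap.ker F.toIntLinearMap := by
    intro x hx
    exact LinearMap.mem_ker.mpr ((hker x).mpr hx)
  have hker_ge : LinearMap.ker F.toIntLinearMap ≤ LinearMap.range (Matrix.toLin' L) := by
    intro x hx
    exact (hker x).mp (LinearMap.mem_ker.mp hx)
  let Q := Submodule.liftQ (LinearMap.range (Matrix.toLin' L)) F.toIntLinearMap hker_le
  have hQsurj : Function.Surjective Q := by
    intro z
    obtain ⟨x, hx⟩ := hsurj z
    exact ⟨Submodule.Quotient.mk x, by simp only [Q, Submodule.liftQ_apply]; exact hx⟩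
  have hQinj : Function.Injective Q := by
    rw [← LinearMap.ker_eq_bot]
    exact Submodule.ker_liftQ_eq_bot _ _ _ hker_ge
  exact ⟨(LinearEquiv.ofBijective Q ⟨hQinj, hQsurj⟩).toAddEquiv⟩
end

section
/- Let m ≥ 1. Let L be the 2m×2m integer matrix with L_{ii} = 2, L_{i,i+1} = L_{i+1,i} = 1, other entries 0, and let M be the 2m×2m integer matrix with M_{ii} = 2, M_{i,i+1} = M_{i+1,i} = −1, other entries 0; both are invertible over ℚ. If c ∈ ℤ^{2m} is a z-superstable configuration for the chip-firing pair (L, M), then c is palindromic: c_i = c_{2m+1−i} for all 1 ≤ i ≤ 2m. -/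
/-!
Write `ε k = (-1)^k` and `t k = min (k + 1) (2m - k)` for the distance from `k` to the ends
`-1, 2m` of the path. The function `k ↦ min (t k) (t j)` is linear except for kinks at `j` and
at its mirror image `rev j`, so the matrix `K k j = ε (k + j) * min (t k) (t j)` satisfies
`L K = 1 - P` with `P` the reversal permutation matrix. Hence `c ∘ rev = c - L z` for the
integer vector `z = K c`. Since `L` and `M` commute with reversal, `c ∘ rev` is z-superstable as
well. Finally, two z-superstable configurations `c` and `c - L z` coincide when `M` has
nonpositive off-diagonal entries: if `z⁺ ≠ 0`, then firing `z⁺` from `c` breaks validity at a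
vertex where `z > 0`, and there `M z⁻` is `≤ 0`, so `c - L z` would be invalid there as well;
symmetrically `z⁻ = 0`.
-/

open Matrix

/-- `c ∈ S⁺` for the chip-firing pair `(L, M)`: every entry of `M·L⁻¹·c` (over ℚ) is
nonnegative. -/
def cfValid {n : ℕ} (L M : Matrix (Fin n) (Fin n) ℤ) (c : Fin n → ℤ) : Prop :=
  ∀ i, 0 ≤ (((M.map (Int.cast : ℤ → ℚ)) * (L.map (Int.cast : ℤ → ℚ))⁻¹).mulVec
    (fun j => (c j : ℚ))) i

/-- `c` is z-superstable for the pair `(L, M)`: `c` is valid and for every nonzero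
nonnegative integer vector `z`, `c - L·z` is not valid. -/
def cfZSuperstable {n : ℕ} (L M : Matrix (Fin n) (Fin n) ℤ) (c : Fin n → ℤ) : Prop :=
  cfValid L M c ∧
    ∀ z : Fin n → ℤ, (∀ i, 0 ≤ z i) → z ≠ 0 → ¬ cfValid L M (c - L.mulVec z)

section Tridiagonal

variable {R : Type*}

def tridiagonal [Zero R] (N : ℕ) (d a : R) : Matrix (Fin N) (Fin N) R :=
  Matrix.of fun i j => if i = j then d else if (i : ℕ) + 1 = j ∨ (j : ℕ) + 1 = i then a else 0

theorem tridiagonal_submatrix_rev [Zero R] (N : ℕ) (d a : R) :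
    (tridiagonal N d a).submatrix Fin.revPerm Fin.revPerm = tridiagonal N d a := by
  ext i j
  simp only [tridiagonal, submatrix_apply, of_apply, Fin.revPerm_apply, Fin.rev_inj, Fin.val_rev]
  congr 1
  apply if_congr _ rfl rfl
  omega

theorem tridiagonal_apply_nonpos [Zero R] [Preorder R] {N : ℕ} {d a : R} (ha : a ≤ 0)
    {i j : Fin N} (hij : i ≠ j) : tridiagonal N d a i j ≤ 0 := by
  simp only [tridiagonal, of_apply, if_neg hij]
  split_ifs
  exacts [ha, le_rfl]

theorem Fin.sum_ite_intCast_eq [AddCommMonoid R] {N : ℕ} (g : ℤ → R) (t : ℤ)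
    (ht : g t ≠ 0 → 0 ≤ t ∧ t < N) :
    ∑ k : Fin N, (if (k : ℤ) = t then g k else 0) = g t := by
  by_cases hg : g t = 0
  · rw [hg]
    refine Finset.sum_eq_zero fun k _ => ?_
    split_ifs with hk
    · rw [hk, hg]
    · rfl
  · obtain ⟨h0, hN⟩ := ht hg
    rw [Finset.sum_eq_single_of_mem (⟨t.toNat, by omega⟩ : Fin N) (Finset.mem_univ _)]
    · simp [h0]
    · intro k _ hk
      rw [if_neg]
      intro h
      exact hk (Fin.ext (by simp; omega))

theorem tridiagonal_mulVec_apply [Ring R] {N : ℕ} (d a : R) (f : ℤ → R) (h₀ : f (-1) = 0)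
    (hN : f N = 0) (i : Fin N) :
    (tridiagonal N d a *ᵥ fun k => f k) i = d * f i + a * f (i - 1) + a * f (i + 1) := by
  have hsplit : ∀ k : Fin N, tridiagonal N d a i k * f k = (if (k : ℤ) = i then d * f k else 0)
      + (if (k : ℤ) = i - 1 then a * f k else 0) + (if (k : ℤ) = i + 1 then a * f k else 0) := by
    intro k
    simp only [tridiagonal, of_apply, Fin.ext_iff]
    split_ifs <;> first | omega | simp
  simp only [mulVec, dotProduct, hsplit, Finset.sum_add_distrib]
  rw [Fin.sum_ite_intCast_eq (fun k => d * f k) i (fun _ => by omega),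
    Fin.sum_ite_intCast_eq (fun k => a * f k) (i - 1),
    Fin.sum_ite_intCast_eq (fun k => a * f k) (i + 1)]
  · intro h
    refine ⟨by omega, ?_⟩
    by_contra h'
    rw [show (i : ℤ) + 1 = N by omega, hN, mul_zero] at h
    exact h rfl
  · intro h
    refine ⟨?_, by omega⟩
    by_contra h'
    rw [show (i : ℤ) - 1 = -1 by omega, h₀, mul_zero] at h
    exact h rfl

end Tridiagonal

def tent (N k : ℤ) : ℤ := min (k + 1) (N - k)

theorem second_difference_min_tent (N i j : ℤ) :
    2 * min (tent N i) (tent N j) - min (tent N (i - 1)) (tent N j)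
      - min (tent N (i + 1)) (tent N j)
      = (if i = j then 1 else 0) + (if i = N - 1 - j then 1 else 0) := by
  simp only [tent]
  split_ifs <;> omega

def signedTentMatrix (N : ℕ) : Matrix (Fin N) (Fin N) ℤ :=
  Matrix.of fun k j => (((k : ℤ) + j).negOnePow : ℤ) * min (tent N k) (tent N j)

theorem tridiagonal_mul_signedTentMatrix_apply (N : ℕ) (i j : Fin N) :
    (tridiagonal N (2 : ℤ) 1 * signedTentMatrix N) i j = (((i : ℤ) + j).negOnePow : ℤ)
      * ((if (i : ℤ) = j then 1 else 0) + (if (i : ℤ) = N - 1 - j then 1 else 0)) := by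
  set f : ℤ → ℤ := fun k => ((k + j).negOnePow : ℤ) * min (tent N k) (tent N j)
  have hj := j.isLt
  change (tridiagonal N 2 1 *ᵥ fun k => f k) i = _
  rw [tridiagonal_mulVec_apply 2 1 f (by simp [f, tent]; omega) (by simp [f, tent]; omega),
    ← second_difference_min_tent]
  simp only [f, show (i : ℤ) - 1 + j = i + j - 1 by ring, show (i : ℤ) + 1 + j = i + j + 1 by ring,
    Int.negOnePow_sub, Int.negOnePow_succ, Int.negOnePow_one]
  push_cast
  ring

theorem tridiagonal_mul_signedTentMatrix (m : ℕ) :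
    tridiagonal (2 * m) 2 1 * signedTentMatrix (2 * m) = 1 - Fin.revPerm.permMatrix ℤ := by
  ext i j
  have hP : (1 - Fin.revPerm.permMatrix ℤ) i j
      = (if (i : ℤ) = j then 1 else 0) - if (i : ℤ) = 2 * m - 1 - j then 1 else 0 := by
    simp only [Equiv.Perm.permMatrix, Matrix.sub_apply, one_apply, PEquiv.toMatrix_apply,
      Equiv.toPEquiv_apply, Option.mem_def, Option.some.injEq, Fin.revPerm_apply]
    congr 1 <;> refine if_congr ?_ rfl rfl <;> rw [Fin.ext_iff]
    · omega
    · rw [Fin.val_rev]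
      omega
  rw [tridiagonal_mul_signedTentMatrix_apply, hP]
  push_cast
  split_ifs with hij hrev hrev
  · omega
  · rw [hij, ← two_mul, Int.negOnePow_two_mul]
    simp
  · rw [hrev, show 2 * (m : ℤ) - 1 - j + j = 2 * (m - 1) + 1 by ring,
      Int.negOnePow_odd _ (odd_two_mul_add_one _)]
    simp
  · simp

theorem exists_tridiagonal_mulVec_eq_sub_comp_rev (m : ℕ) (c : Fin (2 * m) → ℤ) :
    ∃ z, tridiagonal (2 * m) 2 1 *ᵥ z = c - c ∘ Fin.revPerm :=
  ⟨signedTentMatrix (2 * m) *ᵥ c, by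
    rw [mulVec_mulVec, tridiagonal_mul_signedTentMatrix, sub_mulVec, one_mulVec, permMatrix_mulVec]⟩

theorem mulVec_comp_eq_of_submatrix_eq {ι R : Type*} [Fintype ι] [NonUnitalNonAssocSemiring R]
    {A : Matrix ι ι R} (σ : Equiv.Perm ι) (hA : A.submatrix σ σ = A) (v : ι → R) :
    A *ᵥ (v ∘ σ) = (A *ᵥ v) ∘ σ := by
  conv_lhs => rw [← hA]
  rw [submatrix_mulVec_equiv, Function.comp_assoc, Equiv.self_comp_symm, Function.comp_id]

theorem mulVec_apply_nonpos_of_apply_eq_zero {ι : Type*} [Fintype ι] {A : Matrix ι ι ℤ}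
    (hA : ∀ i j, i ≠ j → A i j ≤ 0) {w : ι → ℤ} (hw : 0 ≤ w) {i : ι} (hwi : w i = 0) :
    (A *ᵥ w) i ≤ 0 := by
  refine Finset.sum_nonpos fun j _ => ?_
  obtain rfl | hij := eq_or_ne i j
  · simp [hwi]
  · exact mul_nonpos_of_nonpos_of_nonneg (hA i j hij) (hw j)

section ChipFiring

variable {n : ℕ} {L M : Matrix (Fin n) (Fin n) ℤ}

noncomputable def cfTransform (L M : Matrix (Fin n) (Fin n) ℤ) (c : Fin n → ℤ) : Fin n → ℚ :=
  (M.map (Int.cast : ℤ → ℚ) * (L.map (Int.cast : ℤ → ℚ))⁻¹) *ᵥ fun j => (c j : ℚ)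

theorem cfValid_iff {c : Fin n → ℤ} : cfValid L M c ↔ 0 ≤ cfTransform L M c := Iff.rfl

theorem cfTransform_sub_mulVec (hL : IsUnit (L.map (Int.cast : ℤ → ℚ))) (c z : Fin n → ℤ) :
    cfTransform L M (c - L *ᵥ z) = cfTransform L M c - fun i => ((M *ᵥ z) i : ℚ) := by
  have hcast : ∀ (A : Matrix (Fin n) (Fin n) ℤ) (v : Fin n → ℤ),
      (fun i => ((A *ᵥ v) i : ℚ)) = A.map (Int.cast : ℤ → ℚ) *ᵥ fun j => (v j : ℚ) :=
    fun A v => funext fun i => (Int.castRingHom ℚ).map_mulVec A v i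
  have hsub : (fun j => ((c - L *ᵥ z) j : ℚ))
      = (fun j => (c j : ℚ)) - L.map (Int.cast : ℤ → ℚ) *ᵥ fun j => (z j : ℚ) := by
    rw [← hcast]
    ext j
    simp
  have hLL : (L.map (Int.cast : ℤ → ℚ))⁻¹ * L.map (Int.cast : ℤ → ℚ) = 1 :=
    nonsing_inv_mul _ ((isUnit_iff_isUnit_det _).mp hL)
  rw [cfTransform, cfTransform, hsub, mulVec_sub, mulVec_mulVec, mul_assoc, hLL, mul_one, hcast]

theorem cfTransform_comp_perm (σ : Equiv.Perm (Fin n)) (hL : L.submatrix σ σ = L)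
    (hM : M.submatrix σ σ = M) (c : Fin n → ℤ) :
    cfTransform L M (c ∘ σ) = cfTransform L M c ∘ σ := by
  have hA : (M.map (Int.cast : ℤ → ℚ) * (L.map (Int.cast : ℤ → ℚ))⁻¹).submatrix σ σ
      = M.map (Int.cast : ℤ → ℚ) * (L.map (Int.cast : ℤ → ℚ))⁻¹ := by
    rw [← submatrix_mul_equiv _ _ _ σ, ← inv_submatrix_equiv, submatrix_map, submatrix_map, hL, hM]
  exact mulVec_comp_eq_of_submatrix_eq σ hA fun j => (c j : ℚ)

theorem cfValid_comp_perm_iff (σ : Equiv.Perm (Fin n)) (hL : L.submatrix σ σ = L)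
    (hM : M.submatrix σ σ = M) {c : Fin n → ℤ} : cfValid L M (c ∘ σ) ↔ cfValid L M c := by
  rw [cfValid_iff, cfValid_iff, cfTransform_comp_perm σ hL hM]
  exact ⟨fun h i => by simpa using h (σ.symm i), fun h i => h (σ i)⟩

theorem cfZSuperstable.comp_perm {c : Fin n → ℤ} (hc : cfZSuperstable L M c)
    (σ : Equiv.Perm (Fin n)) (hL : L.submatrix σ σ = L) (hM : M.submatrix σ σ = M) :
    cfZSuperstable L M (c ∘ σ) := by
  refine ⟨(cfValid_comp_perm_iff σ hL hM).2 hc.1, fun z hz hz0 hv => ?_⟩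
  have hz0' : z ∘ σ.symm ≠ 0 := fun h => hz0 (funext fun i => by simpa using congrFun h (σ i))
  refine hc.2 (z ∘ σ.symm) (fun i => hz _) hz0' ?_
  rw [← cfValid_comp_perm_iff σ hL hM, Pi.sub_comp, ← mulVec_comp_eq_of_submatrix_eq σ hL,
    Function.comp_assoc, Equiv.symm_comp_self, Function.comp_id]
  exact hv

theorem cfZSuperstable.posPart_eq_zero (hL : IsUnit (L.map (Int.cast : ℤ → ℚ)))
    (hM : ∀ i j, i ≠ j → M i j ≤ 0) {c z : Fin n → ℤ} (hc : cfZSuperstable L M c)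
    (hz : cfValid L M (c - L *ᵥ z)) : z⁺ = 0 := by
  by_contra hne
  obtain ⟨i, hi⟩ : ∃ i, cfTransform L M c i - ((M *ᵥ z⁺) i : ℚ) < 0 := by
    have h := hc.2 z⁺ (posPart_nonneg z) hne
    simpa [cfValid_iff, cfTransform_sub_mulVec hL, Pi.le_def] using h
  have hzi : 0 < z i := by
    by_contra! h
    have hMz := mulVec_apply_nonpos_of_apply_eq_zero hM (posPart_nonneg z) (i := i)
      (by rw [Pi.posPart_apply, _root_.posPart_eq_zero.mpr h])
    have hci : 0 ≤ cfTransform L M c i := hc.1 i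
    have : ((M *ᵥ z⁺) i : ℚ) ≤ 0 := by exact_mod_cast hMz
    linarith
  have hMz : (M *ᵥ z⁻) i ≤ 0 := mulVec_apply_nonpos_of_apply_eq_zero hM (negPart_nonneg z)
    (by rw [Pi.negPart_apply, negPart_eq_zero.mpr hzi.le])
  have h : 0 ≤ cfTransform L M (c - L *ᵥ z) i := hz i
  rw [cfTransform_sub_mulVec hL, ← posPart_sub_negPart z, mulVec_sub] at h
  have : ((M *ᵥ z⁻) i : ℚ) ≤ 0 := by exact_mod_cast hMz
  simp only [Pi.sub_apply, Int.cast_sub] at h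
  linarith

theorem cfZSuperstable.eq_zero_of_sub_mulVec (hL : IsUnit (L.map (Int.cast : ℤ → ℚ)))
    (hM : ∀ i j, i ≠ j → M i j ≤ 0) {c d z : Fin n → ℤ} (hc : cfZSuperstable L M c)
    (hd : cfZSuperstable L M d) (hcd : d = c - L *ᵥ z) : z = 0 := by
  have hpos : z⁺ = 0 := hc.posPart_eq_zero hL hM (hcd ▸ hd.1)
  have hneg : z⁻ = 0 := by
    rw [← posPart_neg]
    refine hd.posPart_eq_zero hL hM ?_
    rw [hcd, mulVec_neg, sub_neg_eq_add, sub_add_cancel]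
    exact hc.1
  rw [← posPart_sub_negPart z, hpos, hneg, sub_zero]

end ChipFiring

theorem stmt5_general (m : ℕ)
    (L M : Matrix (Fin (2 * m)) (Fin (2 * m)) ℤ)
    (hL : ∀ i j : Fin (2 * m), L i j =
      if i = j then 2
      else if (i : ℕ) + 1 = (j : ℕ) ∨ (j : ℕ) + 1 = (i : ℕ) then 1
      else 0)
    (hM : ∀ i j : Fin (2 * m), M i j =
      if i = j then 2
      else if (i : ℕ) + 1 = (j : ℕ) ∨ (j : ℕ) + 1 = (i : ℕ) then -1
      else 0)
    (hLinv : IsUnit (L.map (Int.cast : ℤ → ℚ)))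
    (c : Fin (2 * m) → ℤ) (hc : cfZSuperstable L M c) :
    ∀ i : Fin (2 * m), c i = c i.rev := by
  obtain rfl : L = tridiagonal (2 * m) 2 1 := Matrix.ext hL
  obtain rfl : M = tridiagonal (2 * m) 2 (-1) := Matrix.ext hM
  obtain ⟨z, hz⟩ := exists_tridiagonal_mulVec_eq_sub_comp_rev m c
  have hrev := hc.comp_perm Fin.revPerm (tridiagonal_submatrix_rev _ _ _)
    (tridiagonal_submatrix_rev _ _ _)
  have hz0 : z = 0 := hc.eq_zero_of_sub_mulVec hLinv
    (fun _ _ => tridiagonal_apply_nonpos (by norm_num)) hrev (by rw [hz, sub_sub_cancel])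
  rw [hz0, mulVec_zero, eq_comm, sub_eq_zero] at hz
  exact fun i => congrFun hz i

/-- Lemma `symmetry`: every z-superstable configuration of the all-negative odd cycle
`-C_{2m+1}` is palindromic. -/
theorem stmt5 (m : ℕ) (hm : 1 ≤ m)
    (L M : Matrix (Fin (2 * m)) (Fin (2 * m)) ℤ)
    (hL : ∀ i j : Fin (2 * m), L i j =
      if i = j then 2
      else if (i : ℕ) + 1 = (j : ℕ) ∨ (j : ℕ) + 1 = (i : ℕ) then 1
      else 0)
    (hM : ∀ i j : Fin (2 * m), M i j =
      if i = j then 2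
      else if (i : ℕ) + 1 = (j : ℕ) ∨ (j : ℕ) + 1 = (i : ℕ) then -1
      else 0)
    (hLinv : IsUnit (L.map (Int.cast : ℤ → ℚ)))
    (hMinv : IsUnit (M.map (Int.cast : ℤ → ℚ)))
    (c : Fin (2 * m) → ℤ) (hc : cfZSuperstable L M c) :
    ∀ i : Fin (2 * m), c i = c i.rev :=
  stmt5_general m L M hL hM hLinv c hc
end

section
/- Let n ≥ 3 and let A be the n×n integer matrix with A_{ii} = 3 for all i, A_{ij} = 1 whenever i − j ≡ 1 or i − j ≡ −1 (mod n) with i ≠ j, and A_{ij} = 0 otherwise. Then det A = 5 · (fib n)², where fib n denotes the n-th Fibonacci number (fib 0 = 0, fib 1 = 1). -/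
/-!
Let `P` be the permutation matrix of the cyclic shift `finRotate n`. Then `A = P + Pᵀ + 3`, and
since `PᵀP = 1` and `φ² + ψ² = 3`, `φ²ψ² = 1`, we get `A P = P² + 3P + 1 = (P + φ²)(P + ψ²)`.
Expanding along the first column, `det (P + a) = aⁿ - (-1)ⁿ`; in particular `det P = -(-1)ⁿ`.
Hence `det A = φ²ⁿ + ψ²ⁿ - 2(-1)ⁿ`, which is `5 fib(n)²` by Binet's formula.
-/

open Matrix

theorem Nat.add_one_mod_eq_iff {a b n : ℕ} (ha : a < n) (hb : b < n) :
    (a + 1) % n = b ↔ a + 1 = b ∨ a + 1 = n ∧ b = 0 := by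
  rcases Nat.lt_or_ge (a + 1) n with h | h
  · rw [Nat.mod_eq_of_lt h]
    omega
  · rw [show a + 1 = n by omega, Nat.mod_self]
    omega

namespace Matrix

theorem permMatrix_finRotate_apply {R : Type*} [Zero R] [One R] {n : ℕ} (i j : Fin n) :
    (finRotate n).permMatrix R i j = if ((i : ℕ) + 1) % n = j then 1 else 0 := by
  rcases n with _ | n
  · exact i.elim0
  · simp [PEquiv.toMatrix_apply, Fin.ext_iff, Fin.val_add]

theorem permMatrix_transpose_mul_self {n R : Type*} [DecidableEq n] [Fintype n]
    [NonAssocSemiring R] (σ : Equiv.Perm n) :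
    (σ.permMatrix R)ᵀ * σ.permMatrix R = 1 := by
  rw [transpose_permMatrix, ← permMatrix_mul, mul_inv_cancel, permMatrix_one]

theorem permMatrix_add_transpose_add_smul_one_mul_self {n R : Type*} [DecidableEq n] [Fintype n]
    [CommRing R] (σ : Equiv.Perm n) {u v : R} (huv : u * v = 1) :
    (σ.permMatrix R + (σ.permMatrix R)ᵀ + (u + v) • 1) * σ.permMatrix R =
      (σ.permMatrix R + u • 1) * (σ.permMatrix R + v • 1) := by
  simp only [add_mul, mul_add, smul_mul_assoc, mul_smul_comm, one_mul, mul_one,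
    permMatrix_transpose_mul_self]
  linear_combination (norm := module) huv.symm • (1 : Matrix n n R)

theorem det_permMatrix_finRotate_add_smul_one {R : Type*} [CommRing R] (n : ℕ) (a : R) :
    ((finRotate (n + 1)).permMatrix R + a • 1).det = a ^ (n + 1) - (-1) ^ (n + 1) := by
  rcases n with _ | n
  · simp [add_comm]
  set M : Matrix (Fin (n + 2)) (Fin (n + 2)) R := of fun i j =>
      (if (i : ℕ) + 1 = j ∨ (i : ℕ) + 1 = n + 2 ∧ (j : ℕ) = 0 then 1 else 0) +
        if (i : ℕ) = j then a else 0 with hM_def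
  have hM : (finRotate (n + 2)).permMatrix R + a • 1 = M := by
    ext i j
    rw [hM_def, of_apply, Matrix.add_apply, permMatrix_finRotate_apply, Matrix.smul_apply,
      one_apply]
    simp only [Nat.add_one_mod_eq_iff i.isLt j.isLt, Fin.ext_iff, smul_eq_mul, mul_ite, mul_one,
      mul_zero]
  rw [hM]
  -- In the first column only the entries in rows `0` and `n + 1` are nonzero, and both
  -- complementary minors are triangular.
  have h_zero {i j : Fin (n + 2)} (h₁ : ¬((i : ℕ) + 1 = j ∨ (i : ℕ) + 1 = n + 2 ∧ (j : ℕ) = 0))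
      (h₂ : (i : ℕ) ≠ j) : M i j = 0 := by
    rw [hM_def, of_apply, if_neg h₁, if_neg h₂, add_zero]
  have h_mid (i : Fin n) : M i.castSucc.succ 0 = 0 := h_zero (by simp; omega) (by simp)
  have h_top : (M.submatrix Fin.succ Fin.succ).det = a ^ (n + 1) := by
    rw [det_of_isUpperTriangular]
    · simp [M]
    · intro i j (hij : j < i)
      exact h_zero (by simp; omega) (by simp; omega)
  have h_bot : (M.submatrix Fin.castSucc Fin.succ).det = 1 := by
    rw [det_of_isLowerTriangular]
    · simp [M]
    · intro i j (hij : i < j)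
      exact h_zero (by simp; omega) (by simp; omega)
  rw [det_succ_column_zero, Fin.sum_univ_succ, Fin.sum_univ_castSucc]
  simp only [h_mid, mul_zero, zero_mul, Finset.sum_const_zero, zero_add, Fin.succAbove_zero,
    Fin.succ_last, Fin.succAbove_last, h_top, h_bot]
  have h_corner : M 0 0 = a := by simp [M]
  have h_last : M (Fin.last (n + 1)) 0 = 1 := by simp [M]
  rw [h_corner, h_last, Fin.val_zero, Fin.val_last, Nat.succ_eq_add_one]
  ring

theorem det_permMatrix_finRotate {R : Type*} [CommRing R] (n : ℕ) :
    ((finRotate (n + 1)).permMatrix R).det = -(-1) ^ (n + 1) := by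
  simpa [zero_pow (Nat.succ_ne_zero n)] using det_permMatrix_finRotate_add_smul_one (R := R) n 0

theorem eq_permMatrix_finRotate_add_transpose_add_smul_one {R : Type*} [NonAssocSemiring R]
    {n : ℕ} (hn : 3 ≤ n) {A : Matrix (Fin n) (Fin n) R}
    (hA : ∀ i j : Fin n, A i j =
      if i = j then 3
      else if ((i : ℕ) + 1) % n = (j : ℕ) ∨ ((j : ℕ) + 1) % n = (i : ℕ) then 1
      else 0) :
    A = (finRotate n).permMatrix R + ((finRotate n).permMatrix R)ᵀ + (3 : R) • 1 := by
  ext i j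
  rw [hA, Matrix.add_apply, Matrix.add_apply, transpose_apply, permMatrix_finRotate_apply,
    permMatrix_finRotate_apply, Matrix.smul_apply, one_apply]
  simp only [Nat.add_one_mod_eq_iff i.isLt j.isLt, Nat.add_one_mod_eq_iff j.isLt i.isLt,
    Fin.ext_iff, smul_eq_mul, mul_ite, mul_one, mul_zero]
  split_ifs <;> first | omega | norm_num

end Matrix

open Real
open scoped goldenRatio

theorem Real.five_mul_fib_sq (n : ℕ) :
    5 * (Nat.fib n : ℝ) ^ 2 = (φ ^ 2) ^ n + (ψ ^ 2) ^ n - 2 * (-1) ^ n := by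
  rw [coe_fib_eq, div_pow, sq_sqrt (by norm_num), mul_div_cancel₀ _ (by norm_num),
    ← goldenRatio_mul_goldenConj, mul_pow, ← pow_mul, ← pow_mul, pow_mul', pow_mul']
  ring

/-- Proposition `OddUnbalanced`: the reduced signed Laplacian `A` of the all-negative
wheel `-W_n` (diagonal `3`, entry `1` at cyclically adjacent positions, `0` otherwise)
has determinant `5·(fib n)²`. -/
theorem stmt7 (n : ℕ) (hn : 3 ≤ n) (A : Matrix (Fin n) (Fin n) ℤ)
    (hA : ∀ i j : Fin n, A i j =
      if i = j then 3
      else if ((i : ℕ) + 1) % n = (j : ℕ) ∨ ((j : ℕ) + 1) % n = (i : ℕ) then 1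
      else 0) :
    A.det = 5 * (Nat.fib n : ℤ) ^ 2 := by
  obtain ⟨m, rfl⟩ : ∃ m, n = m + 1 := ⟨n - 1, by omega⟩
  have h_sum : φ ^ 2 + ψ ^ 2 = 3 := by
    rw [goldenRatio_sq, goldenConj_sq]
    linarith [goldenRatio_add_goldenConj]
  have h_prod : φ ^ 2 * ψ ^ 2 = 1 := by
    rw [← mul_pow, goldenRatio_mul_goldenConj]
    norm_num
  have hA' : A.map (Int.cast : ℤ → ℝ) = (finRotate (m + 1)).permMatrix ℝ +
      ((finRotate (m + 1)).permMatrix ℝ)ᵀ + (φ ^ 2 + ψ ^ 2) • 1 := by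
    rw [h_sum]
    refine eq_permMatrix_finRotate_add_transpose_add_smul_one hn fun i j => ?_
    simp only [map_apply, hA, apply_ite (Int.cast : ℤ → ℝ), Int.cast_ofNat, Int.cast_one,
      Int.cast_zero]
  have h_det :=
    congrArg det (permMatrix_add_transpose_add_smul_one_mul_self (finRotate (m + 1)) h_prod)
  rw [← hA', det_mul, det_mul, det_permMatrix_finRotate, det_permMatrix_finRotate_add_smul_one,
    det_permMatrix_finRotate_add_smul_one, ← Int.cast_det] at h_det
  have h_xy : (φ ^ 2) ^ (m + 1) * (ψ ^ 2) ^ (m + 1) = 1 := by rw [← mul_pow, h_prod, one_pow]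
  have h_s : ((-1 : ℝ) ^ (m + 1)) ^ 2 = 1 := by rw [← pow_mul, pow_mul', neg_one_sq, one_pow]
  have h_real : (A.det : ℝ) = 5 * (Nat.fib (m + 1) : ℝ) ^ 2 := by
    rw [five_mul_fib_sq]
    linear_combination (-(-1) ^ (m + 1)) * h_det - (-1) ^ (m + 1) * h_xy
      - ((A.det : ℝ) - (φ ^ 2) ^ (m + 1) - (ψ ^ 2) ^ (m + 1) + (-1) ^ (m + 1)) * h_s
  exact_mod_cast h_real
end

section
/- Let n ≥ 4 be even and let B be the n×n integer matrix with B_{ii} = 3 for all i, B_{12} = B_{21} = 1, B_{ij} = −1 for all other pairs i ≠ j with i − j ≡ ±1 (mod n), and B_{ij} = 0 otherwise. Then det B = (fib(n−1) + fib(n+1))², where fib denotes the Fibonacci sequence (fib 0 = 0, fib 1 = 1); that is, det B = ℓ_n² where ℓ_n is the n-th Lucas number. -/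
open Matrix Real

namespace Stmt8Aux

/-- signed cyclic shift -/
noncomputable def PM (n : ℕ) : Matrix (Fin n) (Fin n) ℝ :=
  Matrix.of fun i j =>
    if ((i : ℕ) + 1) % n = (j : ℕ) then (if (i : ℕ) = 0 then -1 else 1) else 0

lemma mod_succ_char {n i : ℕ} (hi : i < n) :
    ((i + 1) % n = i + 1 ∧ i + 1 ≠ n) ∨ ((i + 1) % n = 0 ∧ i + 1 = n) := by
  rcases eq_or_lt_of_le (Nat.succ_le_of_lt hi) with h | h
  · right; exact ⟨by rw [← h]; exact Nat.mod_self _, h⟩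
  · left; exact ⟨Nat.mod_eq_of_lt h, by omega⟩

lemma det_aux (m : ℕ) (hm : 3 ≤ m) (hme : Odd m) (c : ℝ) :
    (c • (1 : Matrix (Fin (m+1)) (Fin (m+1)) ℝ) - PM (m+1)).det = c ^ (m+1) + 1 := by
  have hm1 : 0 < m + 1 := Nat.succ_pos m
  set A : Matrix (Fin (m+1)) (Fin (m+1)) ℝ := c • 1 - PM (m+1) with hA
  have hAentry : ∀ i j : Fin (m+1), A i j =
      (if i = j then c else 0) -
      (if ((i:ℕ)+1) % (m+1) = (j:ℕ) then (if (i:ℕ) = 0 then -1 else 1) else 0) := by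
    intro i j
    simp [hA, PM, Matrix.sub_apply, Matrix.smul_apply, Matrix.one_apply, smul_eq_mul, mul_ite,
      mul_one, mul_zero]
  rw [Matrix.det_succ_column_zero]
  rw [← Finset.add_sum_erase _ _ (Finset.mem_univ (0 : Fin (m+1)))]
  have hlast_mem : (Fin.last m) ∈ (Finset.univ.erase (0 : Fin (m+1))) := by
    rw [Finset.mem_erase]
    exact ⟨by simp [Fin.ext_iff]; omega, Finset.mem_univ _⟩
  rw [← Finset.add_sum_erase _ _ hlast_mem]
  have hrest : ∑ i ∈ ((Finset.univ.erase (0 : Fin (m+1))).erase (Fin.last m)),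
      (-1:ℝ) ^ (i : ℕ) * A i 0 * det (A.submatrix i.succAbove Fin.succ) = 0 := by
    apply Finset.sum_eq_zero
    intro i hi
    have h1 : i ≠ Fin.last m := (Finset.mem_erase.mp hi).1
    have h2 : i ≠ (0 : Fin (m+1)) := (Finset.mem_erase.mp (Finset.mem_erase.mp hi).2).1
    have h1' : (i : ℕ) ≠ m := fun h => h1 (Fin.ext h)
    have h2' : (i : ℕ) ≠ 0 := fun h => h2 (Fin.ext h)
    have : A i 0 = 0 := by
      rw [hAentry]
      rcases mod_succ_char (n := m+1) (i := (i:ℕ)) i.isLt with ⟨ha, hb⟩ | ⟨ha, hb⟩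
      · rw [ha]
        have : ¬ (i = (0 : Fin (m+1))) := h2
        rw [if_neg this, if_neg (by simp only [Fin.val_zero]; omega)]; ring
      · omega
    rw [this]; ring
  rw [hrest, add_zero]
  -- the 0 term
  have hd0 : det (A.submatrix (Fin.succAbove 0) Fin.succ) = c ^ m := by
    rw [Matrix.det_of_upperTriangular]
    · have hdiag : ∀ i : Fin m, (A.submatrix (Fin.succAbove 0) Fin.succ) i i = c := by
        intro i
        simp only [Matrix.submatrix_apply, Fin.succAbove_zero]
        rw [hAentry]
        have hi : ((i : ℕ) + 1) < m + 1 := by omega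
        have c2 : ¬ ((((i.succ:Fin (m+1)):ℕ)+1) % (m+1) = ((i.succ:Fin (m+1)):ℕ)) := by
          simp only [Fin.val_succ]
          rcases mod_succ_char (n := m+1) (i := ((i:ℕ)+1)) (by omega) with ⟨h, h'⟩ | ⟨h, h'⟩ <;>
            rw [h] <;> omega
        rw [if_pos rfl, if_neg c2, sub_zero]
      calc _ = ∏ i : Fin m, (A.submatrix (Fin.succAbove 0) Fin.succ) i i := rfl
        _ = ∏ _i : Fin m, c := Finset.prod_congr rfl (fun i _ => hdiag i)
        _ = c ^ m := by simp
    · intro i j hij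
      simp only [Matrix.submatrix_apply, Fin.succAbove_zero, id_eq] at hij ⊢
      rw [hAentry]
      have hij' : (j : ℕ) < (i : ℕ) := hij
      have ha := mod_succ_char (n := m+1) (i := ((i:ℕ)+1)) (by omega)
      have c1 : ¬ (i.succ = j.succ) := by
        simp only [Fin.ext_iff, Fin.val_succ]; omega
      have c2 : ¬ ((((i.succ:Fin (m+1)):ℕ)+1) % (m+1) = ((j.succ:Fin (m+1)):ℕ)) := by
        simp only [Fin.val_succ]
        rcases ha with ⟨h, h'⟩ | ⟨h, h'⟩ <;> rw [h] <;> omega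
      rw [if_neg c1, if_neg c2, sub_zero]
  -- the last term
  have hdl : det (A.submatrix (Fin.succAbove (Fin.last m)) Fin.succ) = 1 := by
    rw [Matrix.det_of_lowerTriangular]
    · have hdiag : ∀ i : Fin m, (A.submatrix (Fin.succAbove (Fin.last m)) Fin.succ) i i =
          (if (i : ℕ) = 0 then 1 else -1) := by
        intro i
        simp only [Matrix.submatrix_apply, Fin.succAbove_last]
        rw [hAentry]
        have ha : ((i:ℕ) + 1) % (m+1) = (i:ℕ) + 1 := Nat.mod_eq_of_lt (by omega)
        have hne : ¬ (i.castSucc = i.succ) := by simp [Fin.ext_iff]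
        simp [hne, Fin.val_succ, Fin.coe_castSucc, ha]
        split_ifs <;> ring
      calc _ = ∏ i : Fin m, (if (i : ℕ) = 0 then (1:ℝ) else -1) :=
            Finset.prod_congr rfl (fun i _ => hdiag i)
        _ = 1 := by
            set z : Fin m := ⟨0, by omega⟩ with hz
            rw [← Finset.mul_prod_erase _ _ (Finset.mem_univ z)]
            have : ∀ i ∈ Finset.univ.erase z, (if (i : ℕ) = 0 then (1:ℝ) else -1) = -1 := by
              intro i hi
              have hne := (Finset.mem_erase.mp hi).1
              have hne' : (i:ℕ) ≠ 0 := fun h => hne (Fin.ext h)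
              rw [if_neg hne']
            rw [Finset.prod_congr rfl this, Finset.prod_const, Finset.card_erase_of_mem
              (Finset.mem_univ _), Finset.card_univ, Fintype.card_fin]
            rw [hz]
            simp only [if_pos rfl]
            have : Even (m - 1) := by
              rcases hme with ⟨k, hk⟩; exact ⟨k, by omega⟩
            simp [this.neg_one_pow]
    · intro i j hij
      simp only [Matrix.submatrix_apply, Fin.succAbove_last, OrderDual.toDual_lt_toDual] at hij ⊢
      rw [hAentry]
      have hij' : (i : ℕ) < (j : ℕ) := hij
      have c1 : ¬ (i.castSucc = j.succ) := by
        simp only [Fin.ext_iff, Fin.val_succ, Fin.coe_castSucc]; omega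
      have c2 : ¬ ((((i.castSucc : Fin (m+1)):ℕ)+1) % (m+1) = ((j.succ : Fin (m+1)):ℕ)) := by
        simp only [Fin.val_succ, Fin.coe_castSucc]
        rw [Nat.mod_eq_of_lt (by omega : (i:ℕ) + 1 < m + 1)]; omega
      rw [if_neg c1, if_neg c2, sub_zero]
  have hA00 : A 0 0 = c := by
    rw [hAentry]
    have : (1 : ℕ) % (m+1) = 1 := Nat.mod_eq_of_lt (by omega)
    simp [this]
  have hAl0 : A (Fin.last m) 0 = -1 := by
    rw [hAentry]
    have h1 : ¬ (Fin.last m = (0 : Fin (m+1))) := by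
      simp only [Fin.ext_iff, Fin.val_last, Fin.val_zero]; omega
    have h2 : ((Fin.last m : ℕ) + 1) % (m+1) = ((0 : Fin (m+1)) : ℕ) := by
      simp only [Fin.val_last, Fin.val_zero]; exact Nat.mod_self (m+1)
    rw [if_neg h1, if_pos h2, if_neg (by simp only [Fin.val_last]; omega), zero_sub]
  rw [hA00, hd0, hAl0, hdl]
  have hml : ((Fin.last m : ℕ)) = m := rfl
  rw [hml]
  have h9 : ((-1:ℝ)) ^ m = -1 := hme.neg_one_pow
  rw [h9]
  simp [pow_succ]
  ring

lemma PM_mul_transpose (n : ℕ) (hn : 2 ≤ n) : PM n * (PM n)ᵀ = 1 := by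
  have hn0 : 0 < n := by omega
  ext i j
  simp only [Matrix.mul_apply, Matrix.transpose_apply, PM, Matrix.of_apply]
  set ci : Fin n := ⟨((i:ℕ)+1) % n, Nat.mod_lt _ hn0⟩ with hci
  set cj : Fin n := ⟨((j:ℕ)+1) % n, Nat.mod_lt _ hn0⟩ with hcj
  have hterm : ∀ k : Fin n,
      (if ((i:ℕ)+1) % n = (k:ℕ) then (if (i:ℕ) = 0 then (-1:ℝ) else 1) else 0) *
      (if ((j:ℕ)+1) % n = (k:ℕ) then (if (j:ℕ) = 0 then (-1:ℝ) else 1) else 0) =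
      if k = ci then (if ci = cj then
        (if (i:ℕ) = 0 then (-1:ℝ) else 1) * (if (j:ℕ) = 0 then (-1:ℝ) else 1) else 0) else 0 := by
    intro k
    have e1 : (((i:ℕ)+1) % n = (k:ℕ)) ↔ k = ci := by
      rw [Fin.ext_iff]; exact eq_comm
    have e2 : (((j:ℕ)+1) % n = (k:ℕ)) ↔ k = cj := by
      rw [Fin.ext_iff]; exact eq_comm
    simp only [e1, e2]
    by_cases h1 : k = ci <;> by_cases h2 : k = cj
    · rw [if_pos h1, if_pos h2, if_pos h1, if_pos (h1 ▸ h2 ▸ rfl : ci = cj)]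
    · rw [if_pos h1, if_neg h2, if_pos h1, if_neg (fun h => h2 (h1.trans h)), mul_zero]
    · rw [if_neg h1, if_neg h1, zero_mul]
    · rw [if_neg h1, if_neg h1, zero_mul]
  rw [Finset.sum_congr rfl (fun k _ => hterm k), Finset.sum_ite_eq' Finset.univ ci,
    if_pos (Finset.mem_univ ci)]
  have hchar : ∀ a : ℕ, a < n → ((a+1) % n = a+1 ∧ a+1 ≠ n) ∨ ((a+1) % n = 0 ∧ a+1 = n) :=
    fun a ha => mod_succ_char ha
  rw [Matrix.one_apply]
  by_cases hij : i = j
  · subst hij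
    rw [if_pos rfl, if_pos rfl]
    split_ifs <;> norm_num
  · have : ¬ (ci = cj) := by
      intro h
      apply hij
      rw [hci, hcj, Fin.mk.injEq] at h
      apply Fin.ext
      rcases hchar (i:ℕ) i.isLt with ⟨ha, hb⟩ | ⟨ha, hb⟩ <;>
        rcases hchar (j:ℕ) j.isLt with ⟨hc, hd⟩ | ⟨hc, hd⟩ <;> omega
    rw [if_neg this, if_neg hij]

lemma det_PM_sub (m : ℕ) (hm : 3 ≤ m) (hme : Odd m) (c : ℝ) :
    (PM (m+1) - c • (1 : Matrix (Fin (m+1)) (Fin (m+1)) ℝ)).det = c ^ (m+1) + 1 := by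
  have h1 : PM (m+1) - c • 1 = -(c • (1 : Matrix (Fin (m+1)) (Fin (m+1)) ℝ) - PM (m+1)) := by
    abel
  rw [h1, Matrix.det_neg, det_aux m hm hme c, Fintype.card_fin]
  have : Even (m+1) := Odd.add_one hme
  rw [this.neg_one_pow, one_mul]

lemma det_PM (m : ℕ) (hm : 3 ≤ m) (hme : Odd m) : (PM (m+1)).det = 1 := by
  have := det_PM_sub m hm hme 0
  simpa using this

lemma B_map_eq (n : ℕ) (hn : 4 ≤ n) (B : Matrix (Fin n) (Fin n) ℤ)
    (hB : ∀ i j : Fin n, B i j =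
      if i = j then 3
      else if ((i : ℕ) + 1) % n = (j : ℕ) ∨ ((j : ℕ) + 1) % n = (i : ℕ) then
        (if ((i : ℕ) = 0 ∧ (j : ℕ) = 1) ∨ ((i : ℕ) = 1 ∧ (j : ℕ) = 0) then 1 else -1)
      else 0) :
    B.map (Int.cast : ℤ → ℝ) = (3:ℝ) • 1 - PM n - (PM n)ᵀ := by
  ext i j
  rw [Matrix.map_apply, hB i j]
  simp only [Matrix.sub_apply, Matrix.smul_apply, Matrix.one_apply, Matrix.transpose_apply,
    PM, Matrix.of_apply, smul_eq_mul, mul_ite, mul_one, mul_zero, Fin.ext_iff,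
    apply_ite (fun z : ℤ => (z : ℝ))]
  rcases mod_succ_char (n := n) i.isLt with ⟨hi1, hi2⟩ | ⟨hi1, hi2⟩ <;>
    rcases mod_succ_char (n := n) j.isLt with ⟨hj1, hj2⟩ | ⟨hj1, hj2⟩ <;>
    rw [hi1, hj1] <;>
    have hi' := i.isLt <;> have hj' := j.isLt <;>
    split_ifs <;> first | (exfalso; omega) | (push_cast; norm_num)

end Stmt8Aux

/-- Proposition `EvenUnbalanced`: for even `n ≥ 4`, the reduced signed Laplacian `B` of
the unbalanced signed wheel (all cycle edges positive except the one between the first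
two vertices) has determinant `ℓ_n² = (fib(n-1) + fib(n+1))²`.  Diagonal entries are `3`,
the entries at positions (1,2) and (2,1) (1-based) equal `1`, all other cyclically
adjacent entries equal `-1`, and the rest are `0`. -/
theorem stmt8 (n : ℕ) (hn : 4 ≤ n) (hne : Even n) (B : Matrix (Fin n) (Fin n) ℤ)
    (hB : ∀ i j : Fin n, B i j =
      if i = j then 3
      else if ((i : ℕ) + 1) % n = (j : ℕ) ∨ ((j : ℕ) + 1) % n = (i : ℕ) then
        (if ((i : ℕ) = 0 ∧ (j : ℕ) = 1) ∨ ((i : ℕ) = 1 ∧ (j : ℕ) = 0) then 1 else -1)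
      else 0) :
    B.det = ((Nat.fib (n - 1) + Nat.fib (n + 1) : ℕ) : ℤ) ^ 2 := by
  obtain ⟨m, rfl⟩ : ∃ m, n = m + 1 := ⟨n - 1, by omega⟩
  have hm : 3 ≤ m := by omega
  have hme : Odd m := by
    rcases hne with ⟨k, hk⟩; exact ⟨k - 1, by omega⟩
  have hBmap := Stmt8Aux.B_map_eq (m+1) hn B hB
  set P := Stmt8Aux.PM (m+1) with hP
  have hPPt : P * Pᵀ = 1 := Stmt8Aux.PM_mul_transpose (m+1) (by omega)
  have hPtP : Pᵀ * P = 1 := mul_eq_one_comm.mp hPPt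
  set a : ℝ := goldenRatio ^ 2 with haa
  set b : ℝ := goldenConj ^ 2 with hbb
  have hab : a * b = 1 := by
    rw [haa, hbb, ← mul_pow, goldenRatio_mul_goldenConj]; norm_num
  have hsum : a + b = 3 := by
    rw [haa, hbb, goldenRatio_sq, goldenConj_sq]
    have h := goldenRatio_add_goldenConj
    linarith
  have e1 : (P - a • 1) * (P - b • 1) = P * P - (a + b) • P + (a * b) • 1 := by
    rw [Matrix.sub_mul, Matrix.mul_sub, Matrix.mul_sub, Matrix.smul_mul, Matrix.mul_smul,
      Matrix.smul_mul, Matrix.one_mul, Matrix.mul_one, Matrix.mul_smul, Matrix.mul_one,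
      smul_smul, add_smul]
    abel
  have e2 : Pᵀ * ((P - a • 1) * (P - b • 1)) = P - (3:ℝ) • 1 + Pᵀ := by
    rw [e1, Matrix.mul_add, Matrix.mul_sub, ← Matrix.mul_assoc, hPtP, Matrix.one_mul,
      Matrix.mul_smul, hPtP, Matrix.mul_smul, Matrix.mul_one, hsum, hab, one_smul]
  have factor : B.map (Int.cast : ℤ → ℝ) = -(Pᵀ * ((P - a • 1) * (P - b • 1))) := by
    rw [hBmap, e2]
    abel
  have hdeta : (P - a • 1).det = a ^ (m+1) + 1 := Stmt8Aux.det_PM_sub m hm hme a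
  have hdetb : (P - b • 1).det = b ^ (m+1) + 1 := Stmt8Aux.det_PM_sub m hm hme b
  have hdetPt : Pᵀ.det = 1 := by
    rw [Matrix.det_transpose]; exact Stmt8Aux.det_PM m hm hme
  have hcast : ((B.det : ℤ) : ℝ) = (B.map (Int.cast : ℤ → ℝ)).det :=
    RingHom.map_det (Int.castRingHom ℝ) B
  rw [factor, Matrix.det_neg, Matrix.det_mul, Matrix.det_mul, hdeta, hdetb, hdetPt,
    Fintype.card_fin, (Even.neg_one_pow (by exact hne)), one_mul, one_mul] at hcast
  set x : ℝ := goldenRatio ^ (m+1) with hx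
  set y : ℝ := goldenConj ^ (m+1) with hy
  have hax : a ^ (m+1) = x ^ 2 := by rw [haa, hx, ← pow_mul, ← pow_mul, Nat.mul_comm]
  have hby : b ^ (m+1) = y ^ 2 := by rw [hbb, hy, ← pow_mul, ← pow_mul, Nat.mul_comm]
  have hxy : x * y = 1 := by
    rw [hx, hy, ← mul_pow, goldenRatio_mul_goldenConj]
    exact hne.neg_one_pow
  have key : (Nat.fib m : ℝ) + Nat.fib (m+2) = x + y := by
    have k1 := goldenRatio_mul_fib_succ_add_fib m
    have k2 := fib_succ_sub_goldenRatio_mul_fib (m+1)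
    rw [hx, hy]
    push_cast at k1 k2 ⊢
    linarith
  have hfin : ((B.det : ℤ) : ℝ) =
      (((Nat.fib ((m+1) - 1) + Nat.fib ((m+1) + 1) : ℕ) : ℤ) : ℝ) ^ 2 := by
    rw [hcast, hax, hby]
    have hm1 : (m + 1) - 1 = m := rfl
    rw [hm1]
    push_cast
    rw [key]
    nlinarith [hxy]
  exact_mod_cast hfin
end

section
/- Let m ≥ 1, let n = 2m+1, and let A be the n×n integer matrix with A_{ii} = 3 for all i, A_{ij} = 1 whenever i − j ≡ ±1 (mod n) with i ≠ j, and A_{ij} = 0 otherwise. Then the abelian group ℤⁿ/(image of A as a ℤ-linear map) is isomorphic to ℤ/(fib(2m+1))ℤ × ℤ/(5·fib(2m+1))ℤ, where fib denotes the Fibonacci sequence (fib 0 = 0, fib 1 = 1). -/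
/-!
Index the coordinates by `ℤ/n`. Then `A` is multiplication by `X⁻¹ + 3 + X = X⁻¹ (X² + 3X + 1)`
on `ℤ[X]/(Xⁿ - 1)`, so its cokernel is `ℤ[X]/(Xⁿ - 1, X² + 3X + 1)`, that is, `ℤ²` modulo the
image of `βⁿ - 1`, where `β` is the companion matrix of `X² + 3X + 1`. The entries of the powers
of `β` are Fibonacci numbers of even index. For odd `n`, the doubling formulas and Cassini's
identity give `βⁿ - 1 = F_n • N` with `det N = 5` and `N` primitive, so the Smith normal form of
`βⁿ - 1` is `diag(F_n, 5 F_n)`.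
-/

def cycleMatrix (n : ℕ) (d : ℤ) : Matrix (Fin n) (Fin n) ℤ :=
  Matrix.of fun i j =>
    if i = j then d
    else if ((i : ℕ) + 1) % n = (j : ℕ) ∨ ((j : ℕ) + 1) % n = (i : ℕ) then 1
    else 0

section
open Matrix
open Fin.NatCast
variable {n : ℕ} [NeZero n] (d : ℤ)

theorem cycleMatrix_apply (hn : 2 ≤ n) (i j : Fin n) :
    cycleMatrix n d i j = if i = j then d else if i + 1 = j ∨ j + 1 = i then 1 else 0 := by
  have val_add_one (i : Fin n) : ((i + 1 : Fin n) : ℕ) = ((i : ℕ) + 1) % n := by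
    rw [Fin.val_add, Fin.val_one', Nat.mod_eq_of_lt (by omega : 1 < n)]
  simp only [cycleMatrix, Matrix.of_apply, Fin.ext_iff, val_add_one]

theorem cycleMatrix_mulVec_single (hn : 3 ≤ n) (j : Fin n) :
    cycleMatrix n d *ᵥ Pi.single j 1 =
      Pi.single (j - 1) 1 + d • Pi.single j 1 + Pi.single (j + 1) 1 := by
  have h1 : (1 : Fin n) ≠ 0 := by
    rw [Ne, Fin.ext_iff, Fin.val_one', Nat.mod_eq_of_lt (by omega)]; simp
  have h2 : (1 + 1 : Fin n) ≠ 0 := by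
    simp only [Ne, Fin.ext_iff, Fin.val_add, Fin.val_one', Fin.val_zero]
    rw [Nat.mod_eq_of_lt (by omega : 1 < n), Nat.mod_eq_of_lt (by omega : 2 < n)]
    omega
  have hl : j - 1 ≠ j := by simpa [sub_eq_self] using h1
  have hr : j + 1 ≠ j := by simpa using h1
  have hlr : j - 1 ≠ j + 1 := fun h => h2 (by
    rwa [sub_eq_iff_eq_add, add_assoc, left_eq_add] at h)
  ext i
  rw [mulVec_single_one, col_apply, cycleMatrix_apply d (by omega)]
  simp only [← eq_sub_iff_add_eq, eq_comm (a := j + 1), Pi.add_apply, Pi.smul_apply,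
    Pi.single_apply, smul_eq_mul]
  split_ifs <;> simp_all

theorem cycleMatrix_mulVec_single_natCast (hn : 3 ≤ n) (k : ℕ) :
    cycleMatrix n d *ᵥ Pi.single ((k + 1 : ℕ) : Fin n) 1 =
      Pi.single (k : Fin n) 1 + d • Pi.single ((k + 1 : ℕ) : Fin n) 1
        + Pi.single ((k + 2 : ℕ) : Fin n) 1 := by
  have hl : ((k + 1 : ℕ) : Fin n) - 1 = k := by push_cast; exact add_sub_cancel_right _ _
  have hr : ((k + 1 : ℕ) : Fin n) + 1 = ((k + 2 : ℕ) : Fin n) := by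
    push_cast; rw [add_assoc, one_add_one_eq_two]
  rw [cycleMatrix_mulVec_single d hn, hl, hr]

end

def Module.End.ofEntries (p q r s : ℤ) : Module.End ℤ (ℤ × ℤ) :=
  (p • LinearMap.fst ℤ ℤ ℤ + q • LinearMap.snd ℤ ℤ ℤ).prod
    (r • LinearMap.fst ℤ ℤ ℤ + s • LinearMap.snd ℤ ℤ ℤ)

@[simp]
theorem Module.End.ofEntries_apply (p q r s : ℤ) (z : ℤ × ℤ) :
    Module.End.ofEntries p q r s z = (p * z.1 + q * z.2, r * z.1 + s * z.2) := rfl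

theorem Int.fib_add_two_eq_three_mul_sub (m : ℤ) :
    Int.fib (m + 2) = 3 * Int.fib m - Int.fib (m - 2) := by
  have h₁ := Int.fib_add_two (m - 2)
  have h₂ := Int.fib_add_two (m - 1)
  have h₃ := Int.fib_add_two m
  simp only [sub_add_cancel, show m - 2 + 1 = m - 1 by ring, show m - 1 + 2 = m + 1 by ring,
    show m - 1 + 1 = m by ring] at h₁ h₂
  linarith

theorem Int.fib_natCast_add_one (n : ℕ) : Int.fib (n + 1) = Nat.fib (n + 1) := by
  exact_mod_cast Int.fib_natCast (n + 1)

theorem Nat.fib_add_one_sq_sub_of_odd {n : ℕ} (hn : Odd n) :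
    (fib (n + 1) : ℤ) ^ 2 - fib n * fib (n + 1) - fib n ^ 2 = -1 := by
  have h := Int.fib_succ_mul_fib_pred_sub_fib_sq n
  have h₁ := Int.fib_add_two ((n : ℤ) - 1)
  rw [sub_add_cancel, show (n : ℤ) - 1 + 2 = n + 1 by ring] at h₁
  rw [Int.natAbs_natCast, hn.neg_one_pow, Int.fib_natCast, Int.fib_natCast_add_one] at h
  rw [Int.fib_natCast, Int.fib_natCast_add_one] at h₁
  linear_combination h + fib (n + 1) * h₁

namespace cycleMatrix

open Module.End LinearMap Submodule

section companion

variable (d : ℤ)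

/-- Multiplication by `X` on `ℤ[X]/(X² + dX + 1)`, in the basis `1, X`. -/
def companion : Module.End ℤ (ℤ × ℤ) := ofEntries 0 (-1) 1 (-d)

def orbit (k : ℕ) : ℤ × ℤ := (companion d ^ k) (1, 0)

theorem orbit_zero : orbit d 0 = (1, 0) := rfl

theorem orbit_succ (k : ℕ) : orbit d (k + 1) = companion d (orbit d k) := by
  rw [orbit, pow_succ', Module.End.mul_apply, orbit]

theorem orbit_one : orbit d 1 = (0, 1) := by
  simp [orbit_succ, orbit_zero, companion]

theorem orbit_add_two (k : ℕ) : orbit d k + d • orbit d (k + 1) + orbit d (k + 2) = 0 := by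
  simp only [orbit_succ d (k + 1), orbit_succ d k, companion, ofEntries_apply]
  ext <;> simp only [Prod.fst_add, Prod.snd_add, Prod.smul_fst, Prod.smul_snd, smul_eq_mul,
    Prod.fst_zero, Prod.snd_zero] <;> ring

theorem companion_pow_orbit (j k : ℕ) : (companion d ^ j) (orbit d k) = orbit d (j + k) := by
  rw [orbit, orbit, pow_add, Module.End.mul_apply]

theorem companion_pow_apply (j : ℕ) (z : ℤ × ℤ) :
    (companion d ^ j) z = z.1 • orbit d j + z.2 • orbit d (j + 1) := by
  have hz : z = z.1 • orbit d 0 + z.2 • orbit d 1 := by ext <;> simp [orbit_zero, orbit_one]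
  conv_lhs => rw [hz]
  rw [map_add, map_smul, map_smul, companion_pow_orbit, companion_pow_orbit, add_zero]

end companion

section cokernel

open Fin.NatCast

variable (d : ℤ) (n : ℕ)

def orbitMap : (Fin n → ℤ) →ₗ[ℤ] ℤ × ℤ := Fintype.linearCombination ℤ fun t : Fin n => orbit d t

theorem orbitMap_single (t : Fin n) (x : ℤ) : orbitMap d n (Pi.single t x) = x • orbit d t :=
  Fintype.linearCombination_apply_single ℤ _ t x

theorem mkQ_orbit_add_mul (j q : ℕ) :
    (range (companion d ^ n - 1)).mkQ (orbit d (j + n * q)) =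
      (range (companion d ^ n - 1)).mkQ (orbit d j) := by
  induction q with
  | zero => rw [mul_zero, add_zero]
  | succ q ih =>
    rw [← ih, mul_add_one, ← add_assoc, add_comm _ n, mkQ_apply, mkQ_apply,
      Submodule.Quotient.eq]
    exact ⟨orbit d (j + n * q), by
      rw [LinearMap.sub_apply, companion_pow_orbit, Module.End.one_apply]⟩

variable [NeZero n]

def headMap : ℤ × ℤ →ₗ[ℤ] (Fin n → ℤ) :=
  (LinearMap.single ℤ (fun _ => ℤ) 0).coprod (LinearMap.single ℤ (fun _ => ℤ) 1)

theorem orbitMap_headMap (hn : 2 ≤ n) (z : ℤ × ℤ) : orbitMap d n (headMap n z) = z := by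
  have h1 : ((1 : Fin n) : ℕ) = 1 := by rw [Fin.val_one', Nat.mod_eq_of_lt (by omega)]
  rw [headMap, LinearMap.coprod_apply, map_add, LinearMap.single_apply, LinearMap.single_apply,
    orbitMap_single, orbitMap_single, Fin.val_zero, h1, orbit_zero, orbit_one]
  ext <;> simp

theorem mkQ_orbitMap_single_natCast (k : ℕ) :
    (range (companion d ^ n - 1)).mkQ (orbitMap d n (Pi.single (k : Fin n) 1)) =
      (range (companion d ^ n - 1)).mkQ (orbit d k) := by
  rw [orbitMap_single, one_smul, Fin.val_natCast, ← mkQ_orbit_add_mul d n (k % n) (k / n),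
    Nat.mod_add_div]

theorem range_toLin'_le_ker_mkQ_comp_orbitMap (hn : 3 ≤ n) :
    range (Matrix.toLin' (cycleMatrix n d)) ≤
      ker ((range (companion d ^ n - 1)).mkQ ∘ₗ orbitMap d n) := by
  rw [range_le_ker_iff]
  ext j : 2
  obtain ⟨k, rfl⟩ : ∃ k : ℕ, ((k + 1 : ℕ) : Fin n) = j :=
    ⟨j + n - 1, by rw [Nat.sub_add_cancel (by omega), Nat.cast_add, Fin.natCast_self, add_zero,
      Fin.cast_val_eq_self]⟩
  simp only [comp_apply, single_apply, Matrix.toLin'_apply,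
    cycleMatrix_mulVec_single_natCast d hn, map_add, map_smul, mkQ_orbitMap_single_natCast,
    LinearMap.zero_apply]
  rw [← map_smul, ← map_add, ← map_add, orbit_add_two, map_zero]

/-- The columns of `cycleMatrix n d` impose on the `Pi.single k 1` the recurrence of `orbit d`. -/
theorem mkQ_headMap_orbit (hn : 3 ≤ n) (k : ℕ) :
    (range (Matrix.toLin' (cycleMatrix n d))).mkQ (headMap n (orbit d k)) =
      (range (Matrix.toLin' (cycleMatrix n d))).mkQ (Pi.single (k : Fin n) 1) := by
  induction k using Nat.twoStepInduction with
  | zero => simp [orbit_zero, headMap]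
  | one => simp [orbit_one, headMap]
  | more k ih₀ ih₁ =>
    have hcol : (range (Matrix.toLin' (cycleMatrix n d))).mkQ
        (Matrix.toLin' (cycleMatrix n d) (Pi.single ((k + 1 : ℕ) : Fin n) 1)) = 0 :=
      (Submodule.Quotient.mk_eq_zero _).mpr (mem_range_self _ _)
    rw [Matrix.toLin'_apply, cycleMatrix_mulVec_single_natCast d hn, map_add, map_add, map_smul]
      at hcol
    have horb : orbit d (k + 2) = -(orbit d k + d • orbit d (k + 1)) :=
      eq_neg_of_add_eq_zero_right (orbit_add_two d k)
    rw [horb, map_neg, map_neg, map_add, map_add, map_smul, map_smul, ih₀, ih₁,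
      eq_neg_of_add_eq_zero_right hcol]

theorem range_le_ker_mkQ_comp_headMap (hn : 3 ≤ n) :
    range (companion d ^ n - 1) ≤
      ker ((range (Matrix.toLin' (cycleMatrix n d))).mkQ ∘ₗ headMap n) := by
  have key (j : ℕ) : (range (Matrix.toLin' (cycleMatrix n d))).mkQ
      (headMap n ((companion d ^ n - 1) (orbit d j))) = 0 := by
    rw [LinearMap.sub_apply, companion_pow_orbit, Module.End.one_apply, map_sub, map_sub,
      mkQ_headMap_orbit d n hn, mkQ_headMap_orbit d n hn, Nat.cast_add, Fin.natCast_self,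
      zero_add, sub_self]
  rw [range_le_ker_iff]
  ext
  · simpa [orbit_zero] using key 0
  · simpa [orbit_one] using key 1

theorem mkQ_headMap_orbitMap (hn : 3 ≤ n) (v : Fin n → ℤ) :
    (range (Matrix.toLin' (cycleMatrix n d))).mkQ (headMap n (orbitMap d n v)) =
      (range (Matrix.toLin' (cycleMatrix n d))).mkQ v := by
  rw [← LinearMap.comp_apply (f := headMap n), ← LinearMap.comp_apply]
  congr 1
  ext t : 2
  simp only [LinearMap.comp_apply, single_apply, orbitMap_single, one_smul,
    mkQ_headMap_orbit d n hn, Fin.cast_val_eq_self]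

theorem ker_mkQ_comp_orbitMap (hn : 3 ≤ n) :
    ker ((range (companion d ^ n - 1)).mkQ ∘ₗ orbitMap d n) =
      range (Matrix.toLin' (cycleMatrix n d)) := by
  refine le_antisymm (fun v hv => ?_) (range_toLin'_le_ker_mkQ_comp_orbitMap d n hn)
  rw [mem_ker, comp_apply, mkQ_apply, Submodule.Quotient.mk_eq_zero] at hv
  have := range_le_ker_mkQ_comp_headMap d n hn hv
  rwa [mem_ker, comp_apply, mkQ_headMap_orbitMap d n hn, mkQ_apply,
    Submodule.Quotient.mk_eq_zero] at this

noncomputable def cokernelEquiv (hn : 3 ≤ n) :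
    ((Fin n → ℤ) ⧸ range (Matrix.toLin' (cycleMatrix n d))) ≃ₗ[ℤ]
      (ℤ × ℤ) ⧸ range (companion d ^ n - 1) :=
  (quotEquivOfEq _ _ (ker_mkQ_comp_orbitMap d n hn).symm).trans
    (quotKerEquivOfSurjective _ <| (mkQ_surjective _).comp fun z =>
      ⟨headMap n z, orbitMap_headMap d n (by omega) z⟩)

end cokernel

section fibonacci

theorem orbit_three (k : ℕ) :
    orbit 3 k = (-1) ^ (k + 1) • (Int.fib (2 * k - 2), Int.fib (2 * k)) := by
  induction k with
  | zero => simp [orbit_zero]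
  | succ k ih =>
    rw [orbit_succ, ih, map_smul, companion, ofEntries_apply]
    push_cast
    rw [show 2 * ((k : ℤ) + 1) = 2 * k + 2 by ring, Int.fib_add_two_eq_three_mul_sub]
    ext <;> simp only [Prod.smul_fst, Prod.smul_snd, smul_eq_mul, add_sub_cancel_right] <;> ring

def cofactor (a b : ℤ) : Module.End ℤ (ℤ × ℤ) :=
  ofEntries (3 * b - 4 * a) (-(2 * b - a)) (2 * b - a) (-(3 * b + a))

theorem companion_three_pow_sub_one_of_odd {n : ℕ} (hn : Odd n) :
    companion 3 ^ n - 1 = (Nat.fib n : ℤ) • cofactor (Nat.fib n) (Nat.fib (n + 1)) := by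
  have hcas := Nat.fib_add_one_sq_sub_of_odd hn
  have ha := Int.fib_natCast n
  have hb := Int.fib_natCast_add_one n
  set a : ℤ := (Nat.fib n : ℤ)
  set b : ℤ := (Nat.fib (n + 1) : ℤ)
  have hprev : Int.fib (n - 1) = b - a := by
    have := Int.fib_add_two ((n : ℤ) - 1)
    rw [sub_add_cancel, show (n : ℤ) - 1 + 2 = n + 1 by ring, ha, hb] at this
    linarith
  have hnext : Int.fib (n + 2) = a + b := by rw [Int.fib_add_two, ha, hb]
  have h₀ : Int.fib (2 * n - 2) = (b - a) * (3 * a - b) := by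
    rw [show 2 * (n : ℤ) - 2 = 2 * (n - 1) by ring, Int.fib_two_mul, sub_add_cancel, hprev, ha]
    ring
  have h₁ : Int.fib (2 * n) = a * (2 * b - a) := by rw [Int.fib_two_mul, ha, hb]
  have h₂ : Int.fib (2 * n + 2) = b * (2 * a + b) := by
    rw [show 2 * (n : ℤ) + 2 = 2 * (n + 1) by ring, Int.fib_two_mul, add_assoc, one_add_one_eq_two,
      hnext, hb]
    ring
  have hsign : ((-1) ^ (n + 1) : ℤ) = 1 := (hn.add_one).neg_one_pow
  refine LinearMap.ext fun z => ?_
  rw [LinearMap.sub_apply, companion_pow_apply, orbit_three, orbit_three, pow_succ _ (n + 1),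
    hsign, Module.End.one_apply, LinearMap.smul_apply, cofactor, ofEntries_apply]
  push_cast
  rw [show 2 * ((n : ℤ) + 1) - 2 = 2 * n by ring, show 2 * ((n : ℤ) + 1) = 2 * n + 2 by ring,
    h₀, h₁, h₂]
  ext <;> simp only [Prod.fst_sub, Prod.snd_sub, Prod.fst_add, Prod.snd_add, Prod.smul_fst,
    Prod.smul_snd, smul_eq_mul]
  · linear_combination (-z.1) * hcas
  · linear_combination (-z.2) * hcas

/-- If `b ^ 2 - a * b - a ^ 2 = -1`, then `reducer a b * cofactor a b = !![1, 1; 0, 5]`. -/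
def reducer (a b : ℤ) : Module.End ℤ (ℤ × ℤ) :=
  ofEntries (-b) (b - a) (-(2 * b - a)) (3 * b - 4 * a)

theorem reducer_surjective {a b : ℤ} (hab : b ^ 2 - a * b - a ^ 2 = -1) :
    Function.Surjective (reducer a b) := fun z =>
  ⟨ofEntries (3 * b - 4 * a) (a - b) (2 * b - a) (-b) z, by
    ext <;> simp only [reducer, ofEntries_apply]
    · linear_combination (-z.1) * hab
    · linear_combination (-z.2) * hab⟩

def residues (k l : ℕ) : ℤ × ℤ →ₗ[ℤ] ZMod k × ZMod l :=
  (Int.castAddHom (ZMod k)).toIntLinearMap.prodMap (Int.castAddHom (ZMod l)).toIntLinearMap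

theorem residues_surjective (k l : ℕ) : Function.Surjective (residues k l) :=
  ZMod.intCast_surjective.prodMap ZMod.intCast_surjective

theorem mem_ker_residues {k l : ℕ} {z : ℤ × ℤ} :
    z ∈ ker (residues k l) ↔ (k : ℤ) ∣ z.1 ∧ (l : ℤ) ∣ z.2 := by
  rw [LinearMap.mem_ker]
  simp [residues, Prod.ext_iff, ZMod.intCast_zmod_eq_zero_iff_dvd]

theorem range_smul_cofactor {a : ℕ} {b : ℤ} (hab : b ^ 2 - a * b - a ^ 2 = -1) :
    range ((a : ℤ) • cofactor a b) = ker (residues a (5 * a) ∘ₗ reducer a b) := by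
  ext z
  rw [LinearMap.mem_ker, LinearMap.comp_apply, ← LinearMap.mem_ker, mem_ker_residues, reducer,
    ofEntries_apply, LinearMap.mem_range]
  push_cast
  constructor
  · rintro ⟨w, rfl⟩
    simp only [LinearMap.smul_apply, cofactor, ofEntries_apply, Prod.smul_fst, Prod.smul_snd,
      smul_eq_mul]
    exact ⟨⟨w.1 + w.2, by linear_combination (-(a * w.1 + a * w.2)) * hab⟩,
      ⟨w.2, by linear_combination (-(5 * a * w.2)) * hab⟩⟩
  · rintro ⟨⟨s, hs⟩, ⟨t, ht⟩⟩
    refine ⟨(s - t, t), ?_⟩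
    ext <;> simp only [LinearMap.smul_apply, cofactor, ofEntries_apply, Prod.smul_fst,
      Prod.smul_snd, smul_eq_mul]
    · linear_combination -(3 * b - 4 * a) * hs + (b - a) * ht - z.1 * hab
    · linear_combination -(2 * b - a) * hs + b * ht - z.2 * hab

noncomputable def cokernelEquivZMod {n : ℕ} (hn : Odd n) :
    ((ℤ × ℤ) ⧸ range (companion 3 ^ n - 1)) ≃ₗ[ℤ]
      ZMod (Nat.fib n) × ZMod (5 * Nat.fib n) :=
  have hcas := Nat.fib_add_one_sq_sub_of_odd hn
  (quotEquivOfEq _ _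
      (by rw [companion_three_pow_sub_one_of_odd hn, range_smul_cofactor hcas])).trans
    (quotKerEquivOfSurjective (residues _ _ ∘ₗ reducer _ _)
      ((residues_surjective _ _).comp (reducer_surjective hcas)))

end fibonacci

end cycleMatrix

open cycleMatrix in
/-- Lemma `OddCycleUnbalanced`: for `n = 2m+1`, the cokernel of the reduced signed
Laplacian `A` of the all-negative odd wheel `-W_{2m+1}` (diagonal `3`, entry `1` at
cyclically adjacent positions, `0` otherwise) is `ℤ_{fib(2m+1)} ⊕ ℤ_{5·fib(2m+1)}`. -/
theorem stmt9 (m : ℕ) (hm : 1 ≤ m) (A : Matrix (Fin (2 * m + 1)) (Fin (2 * m + 1)) ℤ)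
    (hA : ∀ i j : Fin (2 * m + 1), A i j =
      if i = j then 3
      else if ((i : ℕ) + 1) % (2 * m + 1) = (j : ℕ) ∨
              ((j : ℕ) + 1) % (2 * m + 1) = (i : ℕ) then 1
      else 0) :
    Nonempty (((Fin (2 * m + 1) → ℤ) ⧸ LinearMap.range (Matrix.toLin' A)) ≃+
      (ZMod (Nat.fib (2 * m + 1)) × ZMod (5 * Nat.fib (2 * m + 1)))) := by
  obtain rfl : A = cycleMatrix (2 * m + 1) 3 := Matrix.ext hA
  exact ⟨((cokernelEquiv 3 _ (by omega)).trans
    (cokernelEquivZMod (odd_two_mul_add_one m))).toAddEquiv⟩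
end

section
/- Let n ≥ 3 and let L be the (n−1)×(n−1) integer matrix L = (n−2)·I + J, i.e. L_{ii} = n−1 for all i and L_{ij} = 1 for all i ≠ j. Then the abelian group ℤ^{n−1}/(image of L as a ℤ-linear map) is isomorphic to (ℤ/(n−2)ℤ)^{n−3} × ℤ/((n−2)(2n−3))ℤ. -/
set_option linter.unusedTactic false

open Matrix

theorem aux11 (k : ℕ) (L : Matrix (Fin (k+2)) (Fin (k+2)) ℤ)
    (hL : ∀ i j, L i j = if i = j then ((k:ℤ)+2) else 1) :
    Nonempty (((Fin (k+2) → ℤ) ⧸ LinearMap.range (Matrix.toLin' L)) ≃+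
      ((Fin k → ZMod (k+1)) × ZMod ((k+1)*(2*k+3)))) := by
  have hco : Nat.Coprime (k+1) (2*k+3) := by
    have h : 2*k+3 = 1 + (k+1)*2 := by ring
    rw [h]
    exact (Nat.coprime_add_mul_left_right (k+1) 1 2).mpr (Nat.coprime_one_right (k+1))
  let c := ZMod.chineseRemainder hco
  let idx : Fin k → Fin (k+2) := fun j => ⟨j.val+1, by omega⟩
  let lst : Fin (k+2) := ⟨k+1, by omega⟩
  let ev : Fin (k+2) → ((Fin (k+2) → ℤ) →+ ℤ) := fun i => Pi.evalAddMonoidHom _ i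
  let d : Fin (k+2) → ((Fin (k+2) → ℤ) →+ ℤ) := fun i => ev i - ev 0
  let cast1 : ℤ →+ ZMod (k+1) := Int.castAddHom _
  let cast2 : ℤ →+ ZMod (2*k+3) := Int.castAddHom _
  let g1 : (Fin (k+2) → ℤ) →+ (Fin k → ZMod (k+1)) :=
    Pi.addMonoidHom fun j => cast1.comp (d (idx j))
  let g2 : (Fin (k+2) → ℤ) →+ ZMod (k+1) := cast1.comp (d lst)
  let g3 : (Fin (k+2) → ℤ) →+ ZMod (2*k+3) := cast2.comp (∑ i, ev i)
  let f0 : (Fin (k+2) → ℤ) →+ ((Fin k → ZMod (k+1)) × ZMod ((k+1)*(2*k+3))) :=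
    g1.prod ((c.symm : ZMod (k+1) × ZMod (2*k+3) ≃+* ZMod ((k+1)*(2*k+3))).toRingHom.toAddMonoidHom.comp (g2.prod g3))
  let f := f0.toIntLinearMap
  have hfapp : ∀ v : Fin (k+2) → ℤ, f v =
      (fun j => ((v (idx j) - v 0 : ℤ) : ZMod (k+1)),
        c.symm (((v lst - v 0 : ℤ) : ZMod (k+1)), ((∑ i, v i : ℤ) : ZMod (2*k+3)))) := by
    intro v
    refine Prod.ext (funext fun j => ?_) ?_
    · simp [f, f0, g1, d, ev, cast1, Pi.addMonoidHom, AddMonoidHom.pi_apply]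
    · simp [f, f0, g1, g2, g3, d, ev, cast1, cast2, AddMonoidHom.finset_sum_apply]
  -- value of L as a linear map
  have hLw : ∀ (w : Fin (k+2) → ℤ) (i : Fin (k+2)),
      Matrix.toLin' L w i = ((k:ℤ)+1) * w i + ∑ j, w j := by
    intro w i
    have hrw : ∀ j, L i j * w j = w j + (if i = j then ((k:ℤ)+1) * w j else 0) := by
      intro j; rw [hL]; split <;> ring
    simp only [Matrix.toLin'_apply, Matrix.mulVec, dotProduct, hrw, Finset.sum_add_distrib,
      Finset.sum_ite_eq, Finset.mem_univ, if_true]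
    ring
  -- surjectivity
  haveI : NeZero (2*k+3) := ⟨by omega⟩
  have hsurj : Function.Surjective f := by
    rintro ⟨b, y⟩
    obtain ⟨Y, hY⟩ := ZMod.intCast_surjective (n := k+1) (c y).1
    choose B hB using fun j => ZMod.intCast_surjective (n := k+1) (b j)
    have hunit : IsUnit ((k+2 : ℕ) : ZMod (2*k+3)) := by
      rw [ZMod.isUnit_iff_coprime]
      have h : 2*k+3 = (k+1) + (k+2)*1 := by ring
      rw [h]
      refine (Nat.coprime_add_mul_left_right (k+2) (k+1) 1).mpr ?_
      have h2 : k+2 = 1+(k+1) := by ring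
      rw [h2]
      exact Nat.coprime_add_self_left.mpr (Nat.coprime_one_left _)
    obtain ⟨t, ht⟩ := ZMod.intCast_surjective (n := 2*k+3)
      ((hunit.unit⁻¹ : (ZMod (2*k+3))ˣ) * ((c y).2 - (((∑ j, B j) + Y : ℤ) : ZMod (2*k+3))))
    refine ⟨Fin.cons t (Fin.snoc (fun j => t + B j) (t + Y)), ?_⟩
    set v : Fin (k+2) → ℤ := Fin.cons t (Fin.snoc (fun j => t + B j) (t + Y)) with hvdef
    have hv0 : v 0 = t := rfl
    have hvidx : ∀ j : Fin k, v (idx j) = t + B j := by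
      intro j
      have h1 : idx j = Fin.succ (Fin.castSucc j) := rfl
      rw [h1, hvdef, Fin.cons_succ, Fin.snoc_castSucc]
    have hvlst : v lst = t + Y := by
      have h1 : lst = Fin.succ (Fin.last k) := rfl
      rw [h1, hvdef, Fin.cons_succ, Fin.snoc_last]
    have hvsum : (∑ i, v i) = ((k:ℤ)+2) * t + ((∑ j, B j) + Y) := by
      rw [hvdef, Fin.sum_cons, Fin.sum_snoc, Finset.sum_add_distrib, Finset.sum_const,
        Finset.card_univ, Fintype.card_fin]
      push_cast
      ring
    rw [hfapp]
    refine Prod.ext (funext fun j => ?_) ?_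
    · simp only [hvidx, hv0]
      have : t + B j - t = B j := by ring
      rw [this, hB]
    · simp only [hvlst, hv0, hvsum]
      have h1 : ((t + Y - t : ℤ) : ZMod (k+1)) = (c y).1 := by
        have : t + Y - t = Y := by ring
        rw [this, hY]
      have h2 : ((((k:ℤ)+2) * t + ((∑ j, B j) + Y) : ℤ) : ZMod (2*k+3)) = (c y).2 := by
        push_cast
        rw [ht]
        have hcast : ((k : ZMod (2*k+3)) + 2) = ((k+2 : ℕ) : ZMod (2*k+3)) := by push_cast; ring
        rw [hcast]
        rw [← mul_assoc, hunit.mul_val_inv, one_mul]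
        push_cast
        ring
      rw [h1, h2]
      exact c.symm_apply_apply y
  -- kernel equals range
  have hker : LinearMap.ker f = LinearMap.range (Matrix.toLin' L) := by
    ext v
    simp only [LinearMap.mem_ker, LinearMap.mem_range]
    constructor
    · intro hv
      rw [hfapp] at hv
      have hsnd : (((v lst - v 0 : ℤ) : ZMod (k+1)), ((∑ i, v i : ℤ) : ZMod (2*k+3)))
          = (0 : ZMod (k+1) × ZMod (2*k+3)) := by
        apply (c.symm : ZMod (k+1) × ZMod (2*k+3) ≃+* _).injective
        have := congrArg Prod.snd hv
        simpa using this
      have hd : ∀ i : Fin (k+2), ((k:ℤ)+1) ∣ (v i - v 0) := by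
        intro i
        rcases Nat.lt_or_ge i.val (k+1) with h | h
        · rcases Nat.eq_zero_or_pos i.val with h0 | h0
          · have hi : i = 0 := by ext; simpa using h0
            simp [hi]
          · set j0 : Fin k := ⟨i.val - 1, by omega⟩ with hj0
            have h1 : ((v (idx j0) - v 0 : ℤ) : ZMod (k+1)) = 0 := by
              simpa using congrFun (congrArg Prod.fst hv) j0
            have hi : idx j0 = i := by ext; simp [idx, hj0]; omega
            rw [hi] at h1
            have := (ZMod.intCast_zmod_eq_zero_iff_dvd _ _).mp h1
            exact_mod_cast this
        · have hi : i = lst := by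
            ext
            have := i.isLt
            simp only [lst]
            omega
          have h2 : ((v lst - v 0 : ℤ) : ZMod (k+1)) = 0 := congrArg Prod.fst hsnd
          rw [hi]
          exact_mod_cast (ZMod.intCast_zmod_eq_zero_iff_dvd _ _).mp h2
      have hdS : (2*(k:ℤ)+3) ∣ (∑ i, v i) := by
        have h3 : ((∑ i, v i : ℤ) : ZMod (2*k+3)) = 0 := congrArg Prod.snd hsnd
        exact_mod_cast (ZMod.intCast_zmod_eq_zero_iff_dvd _ _).mp h3
      set u : Fin (k+2) → ℤ := fun i => (v i - v 0) / ((k:ℤ)+1) with hudef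
      have hu : ∀ i, ((k:ℤ)+1) * u i = v i - v 0 := fun i => Int.mul_ediv_cancel' (hd i)
      have hs : (∑ i, v i) = ((k:ℤ)+2) * v 0 + ((k:ℤ)+1) * ∑ i, u i := by
        have hvi : ∀ i, v i = v 0 + ((k:ℤ)+1) * u i := fun i => by linarith [hu i]
        calc (∑ i, v i) = ∑ i, (v 0 + ((k:ℤ)+1) * u i) :=
              Finset.sum_congr rfl fun i _ => hvi i
        _ = ((k:ℤ)+2) * v 0 + ((k:ℤ)+1) * ∑ i, u i := by
              rw [Finset.sum_add_distrib, ← Finset.mul_sum, Finset.sum_const,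
                Finset.card_univ, Fintype.card_fin]
              push_cast
              ring
      have hd0 : (2*(k:ℤ)+3) ∣ (v 0 - ∑ i, u i) := by
        have hcop : IsCoprime (2*(k:ℤ)+3) ((k:ℤ)+2) := ⟨-1, 2, by ring⟩
        refine hcop.dvd_of_dvd_mul_right ?_
        have e : (v 0 - ∑ i, u i) * ((k:ℤ)+2) = (∑ i, v i) - (2*(k:ℤ)+3) * (∑ i, u i) := by
          rw [hs]; ring
        rw [e]
        exact dvd_sub hdS ⟨∑ i, u i, rfl⟩
      obtain ⟨w0, hw0⟩ := hd0
      refine ⟨fun i => w0 + u i, funext fun i => ?_⟩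
      rw [hLw]
      show ((k:ℤ)+1) * (w0 + u i) + ∑ j, (w0 + u j) = v i
      rw [Finset.sum_add_distrib, Finset.sum_const, Finset.card_univ, Fintype.card_fin]
      push_cast
      linear_combination hu i - hw0
    · rintro ⟨w, rfl⟩
      rw [hfapp]
      have hz1 : ∀ i : Fin (k+2),
          ((Matrix.toLin' L w i - Matrix.toLin' L w 0 : ℤ) : ZMod (k+1)) = 0 := by
        intro i
        rw [hLw, hLw]
        have e : ((k:ℤ)+1) * w i + (∑ j, w j) - (((k:ℤ)+1) * w 0 + ∑ j, w j)
            = ((k:ℤ)+1) * (w i - w 0) := by ring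
        rw [e, ZMod.intCast_zmod_eq_zero_iff_dvd]
        push_cast
        exact dvd_mul_right _ _
      have hz2 : ((∑ i, Matrix.toLin' L w i : ℤ) : ZMod (2*k+3)) = 0 := by
        have e : (∑ i, Matrix.toLin' L w i) = (2*(k:ℤ)+3) * ∑ j, w j := by
          calc (∑ i, Matrix.toLin' L w i) = ∑ i, (((k:ℤ)+1) * w i + ∑ j, w j) :=
                Finset.sum_congr rfl fun i _ => hLw w i
          _ = (2*(k:ℤ)+3) * ∑ j, w j := by
                rw [Finset.sum_add_distrib, ← Finset.mul_sum, Finset.sum_const,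
                  Finset.card_univ, Fintype.card_fin]
                push_cast
                ring
        rw [e, ZMod.intCast_zmod_eq_zero_iff_dvd]
        push_cast
        exact dvd_mul_right _ _
      refine Prod.ext (funext fun j => ?_) ?_
      · simpa using hz1 (idx j)
      · exact (congrArg (c.symm : ZMod (k+1) × ZMod (2*k+3) ≃+* _)
          (Prod.ext (hz1 lst) hz2)).trans (map_zero _)
  exact ⟨((Submodule.quotEquivOfEq _ _ hker.symm).trans
    (f.quotKerEquivOfSurjective hsurj)).toAddEquiv⟩

/-- Proposition `Completecrit`: the cokernel of `L = (n-2)·I + J` of size `(n-1)×(n-1)`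
(the reduced signed Laplacian of the negative complete graph `-K_n`) is
`(ℤ/(n-2)ℤ)^{n-3} × ℤ/((n-2)(2n-3))ℤ`. -/
theorem stmt11 (n : ℕ) (hn : 3 ≤ n) (L : Matrix (Fin (n - 1)) (Fin (n - 1)) ℤ)
    (hL : ∀ i j : Fin (n - 1), L i j = if i = j then ((n : ℤ) - 1) else 1) :
    Nonempty (((Fin (n - 1) → ℤ) ⧸ LinearMap.range (Matrix.toLin' L)) ≃+
      ((Fin (n - 3) → ZMod (n - 2)) × ZMod ((n - 2) * (2 * n - 3)))) := by
  obtain ⟨k, rfl⟩ : ∃ k, n = k + 3 := ⟨n - 3, by omega⟩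
  rw [show 2 * (k + 3) - 3 = 2*k+3 by omega]
  exact aux11 k L fun i j => by
    rw [hL i j]
    split
    · push_cast; ring
    · rfl
end

section
/- Let n ≥ 2 and let ε : {1,…,n−1} → {1,−1} be arbitrary. Let L be the n×n integer matrix with L_{11} = L_{nn} = 2, L_{ii} = 3 for 1 < i < n, L_{i,i+1} = L_{i+1,i} = ε(i) for 1 ≤ i ≤ n−1, and all other entries 0. Then the abelian group ℤⁿ/(image of L as a ℤ-linear map) is cyclic, isomorphic to ℤ/(fib(2n))ℤ, where fib denotes the Fibonacci sequence (fib 0 = 0, fib 1 = 1). -/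
open Matrix

private def cseq (ε : ℕ → ℤ) : ℕ → ℤ
  | 0 => 1
  | 1 => -2 * ε 1
  | (j+2) => -ε (j+2) * (3 * cseq ε (j+1) + ε (j+1) * cseq ε j)

private def sseq (ε : ℕ → ℤ) : ℕ → ℤ
  | 0 => 1
  | (j+1) => -ε (j+1) * sseq ε j

private lemma fib_step (j : ℕ) :
    (Nat.fib (2*(j+2)+1) : ℤ) = 3 * Nat.fib (2*(j+1)+1) - Nat.fib (2*j+1) := by
  have h1 := Nat.fib_add_two (n := 2*j+1)
  have h2 := Nat.fib_add_two (n := 2*j+2)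
  have h3 := Nat.fib_add_two (n := 2*j+3)
  have e1 : 2*(j+2)+1 = 2*j+3+2 := by ring
  have e2 : 2*(j+1)+1 = 2*j+1+2 := by ring
  rw [e1, e2]
  push_cast [h3, h2, h1]
  ring

private lemma cseq_eq (ε : ℕ → ℤ) : ∀ j, cseq ε j = sseq ε j * (Nat.fib (2*j+1) : ℤ) := by
  intro j
  induction j using Nat.twoStepInduction with
  | zero => simp [cseq, sseq]
  | one => norm_num [cseq, sseq]; ring
  | more j ih2 ih1 =>
      rw [show cseq ε (j+2) = -ε (j+2) * (3 * cseq ε (j+1) + ε (j+1) * cseq ε j) from rfl,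
        ih1, ih2, fib_step]
      rw [show sseq ε (j+2) = -ε (j+2) * sseq ε (j+1) from rfl,
        show sseq ε (j+1) = -ε (j+1) * sseq ε j from rfl]
      ring

private def evec (n a : ℕ) : Fin n → ℤ := fun i => if (i : ℕ) = a then 1 else 0

private lemma evec_zero (n a : ℕ) (h : n ≤ a) : evec n a = 0 := by
  funext i; simp only [evec]
  rw [if_neg (by omega), Pi.zero_apply]

private lemma sum_mul_evec (n a : ℕ) (c : ℕ → ℤ) :
    (∑ i : Fin n, c i * evec n a i) = if a < n then c a else 0 := by
  by_cases h : a < n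
  · rw [if_pos h, Finset.sum_eq_single (⟨a, h⟩ : Fin n)]
    · simp [evec]
    · intro b _ hb
      have : (b : ℕ) ≠ a := fun hc => hb (Fin.ext hc)
      simp [evec, this]
    · simp
  · rw [if_neg h]
    apply Finset.sum_eq_zero; intro i _
    have : (i : ℕ) ≠ a := by omega
    simp [evec, this]

private lemma pi_sum_evec (n : ℕ) (x : Fin n → ℤ) :
    ∑ i : Fin n, x i • evec n (i : ℕ) = x := by
  funext j
  rw [Finset.sum_apply]
  rw [Finset.sum_eq_single j]
  · simp [evec]
  · intro b _ hb
    have : (j : ℕ) ≠ (b : ℕ) := fun hc => hb (Fin.ext hc.symm)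
    simp [evec, this]
  · simp

private def gmap (n : ℕ) (ε : ℕ → ℤ) (m : ℕ) : (Fin n → ℤ) →ₗ[ℤ] ZMod m where
  toFun x := ((∑ i : Fin n, cseq ε i * x i : ℤ) : ZMod m)
  map_add' x y := by
    push_cast [Pi.add_apply, mul_add, Finset.sum_add_distrib]; rfl
  map_smul' a x := by
    push_cast [Pi.smul_apply, smul_eq_mul]
    rw [id_eq, zsmul_eq_mul, Finset.mul_sum]
    congr 1; funext i; push_cast; ring

/-- Theorem `FanGroup`: the reduced signed Laplacian `L` of an arbitrary signed fan graph
`(F_n)_φ` (diagonal `2, 3, …, 3, 2`, off-diagonal signs `ε(i) ∈ {±1}` on the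
tridiagonal) has cyclic cokernel `ℤ/fib(2n)ℤ`. -/
theorem stmt13 (n : ℕ) (hn : 2 ≤ n) (ε : ℕ → ℤ)
    (hε : ∀ i, 1 ≤ i → i ≤ n - 1 → ε i = 1 ∨ ε i = -1)
    (L : Matrix (Fin n) (Fin n) ℤ)
    (hL : ∀ i j : Fin n, L i j =
      if i = j then (if (i : ℕ) = 0 ∨ (i : ℕ) = n - 1 then 2 else 3)
      else if (i : ℕ) + 1 = (j : ℕ) then ε ((i : ℕ) + 1)
      else if (j : ℕ) + 1 = (i : ℕ) then ε ((j : ℕ) + 1)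
      else 0) :
    Nonempty (((Fin n → ℤ) ⧸ LinearMap.range (Matrix.toLin' L)) ≃+ ZMod (Nat.fib (2 * n))) := by
  obtain ⟨k, rfl⟩ : ∃ k, n = k + 2 := ⟨n - 2, by omega⟩
  have hsq : ∀ i, 1 ≤ i → i ≤ k + 1 → ε i * ε i = 1 := by
    intro i h1 h2
    rcases hε i h1 (by omega) with h | h <;> rw [h] <;> norm_num
  have hcolfun : ∀ j : Fin (k+2), (fun i => L i j) =
      (if (j : ℕ) = 0 ∨ (j : ℕ) = k + 1 then (2:ℤ) else 3) • evec (k+2) (j : ℕ)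
      + (if (j : ℕ) = 0 then 0 else ε (j : ℕ) • evec (k+2) ((j : ℕ) - 1))
      + ε ((j : ℕ) + 1) • evec (k+2) ((j : ℕ) + 1) := by
    intro j
    funext i
    rw [hL]
    simp only [Pi.add_apply, apply_ite (fun f : Fin (k+2) → ℤ => f i), Pi.smul_apply,
      Pi.zero_apply, evec, smul_eq_mul, mul_ite, mul_one, mul_zero,
      Fin.ext_iff, show k + 2 - 1 = k + 1 from rfl]
    have hi := i.isLt
    have hj := j.isLt
    split_ifs
    any_goals (exfalso; omega)
    all_goals (try norm_num)
    all_goals (congr 1 <;> omega)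
  -- abbreviations
  set R := LinearMap.range (Matrix.toLin' L) with hR
  set m := Nat.fib (2 * (k + 2)) with hm
  -- columns are in the range
  have hmem : ∀ j : Fin (k+2), (fun i => L i j) ∈ R := by
    intro j
    refine ⟨Pi.single j 1, ?_⟩
    rw [Matrix.toLin'_apply, Matrix.mulVec_single]
    funext i; simp
  -- the key integer column sums
  have keyZ : ∀ j : Fin (k+2), (∑ i : Fin (k+2), cseq ε i * L i j)
      = if (j : ℕ) = k + 1 then sseq ε (k+1) * (m : ℤ) else 0 := by
    intro j
    have hc := congrFun (hcolfun j)
    have hj := j.isLt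
    rcases Nat.lt_or_ge (j : ℕ) 1 with h0 | h1
    · -- j = 0
      have hj0 : (j : ℕ) = 0 := by omega
      have hc' : ∀ i, L i j = 2 * evec (k+2) 0 i + ε 1 * evec (k+2) 1 i := by
        intro i
        rw [hc i, if_pos (Or.inl hj0), if_pos hj0, hj0]
        simp [Pi.add_apply, Pi.smul_apply, smul_eq_mul]
      have expand : (∑ i : Fin (k+2), cseq ε i * L i j)
          = 2 * (∑ i : Fin (k+2), cseq ε i * evec (k+2) 0 i)
            + ε 1 * (∑ i : Fin (k+2), cseq ε i * evec (k+2) 1 i) := by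
        rw [Finset.mul_sum, Finset.mul_sum, ← Finset.sum_add_distrib]
        exact Finset.sum_congr rfl fun i _ => by rw [hc' i]; ring
      rw [expand, sum_mul_evec, sum_mul_evec, if_pos (by omega : (0:ℕ) < k + 2),
        if_pos (by omega : (1:ℕ) < k + 2), if_neg (by omega)]
      have hs1 := hsq 1 le_rfl (by omega)
      simp only [cseq]
      linear_combination (-2 : ℤ) * hs1
    · rcases Nat.lt_or_ge (j : ℕ) (k+1) with hmid | hlast
      · -- middle
        obtain ⟨a, ha⟩ : ∃ a, (j : ℕ) = a + 1 := ⟨(j:ℕ) - 1, by omega⟩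
        have hc' : ∀ i, L i j = 3 * evec (k+2) (a+1) i + ε (a+1) * evec (k+2) a i
            + ε (a+2) * evec (k+2) (a+2) i := by
          intro i
          rw [hc i, if_neg (by omega : ¬((j:ℕ) = 0 ∨ (j:ℕ) = k + 1)),
            if_neg (by omega : ¬(j:ℕ) = 0), ha, show a+1-1 = a from rfl,
            show a+1+1 = a+2 from by omega]
          simp [Pi.add_apply, Pi.smul_apply, smul_eq_mul]
        have expand : (∑ i : Fin (k+2), cseq ε i * L i j)
            = 3 * (∑ i : Fin (k+2), cseq ε i * evec (k+2) (a+1) i)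
              + ε (a+1) * (∑ i : Fin (k+2), cseq ε i * evec (k+2) a i)
              + ε (a+2) * (∑ i : Fin (k+2), cseq ε i * evec (k+2) (a+2) i) := by
          rw [Finset.mul_sum, Finset.mul_sum, Finset.mul_sum, ← Finset.sum_add_distrib,
            ← Finset.sum_add_distrib]
          exact Finset.sum_congr rfl fun i _ => by rw [hc' i]; ring
        rw [expand, sum_mul_evec, sum_mul_evec, sum_mul_evec,
          if_pos (by omega : a + 1 < k + 2), if_pos (by omega : a < k + 2),
          if_pos (by omega : a + 2 < k + 2), if_neg (by omega)]
        have hs2 := hsq (a + 2) (by omega) (by omega)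
        have hdef : cseq ε (a + 2) = -ε (a+2) * (3 * cseq ε (a+1) + ε (a+1) * cseq ε a) := rfl
        rw [hdef]
        linear_combination (-(3 * cseq ε (a+1) + ε (a+1) * cseq ε a) : ℤ) * hs2
      · -- last column
        have hjl : (j : ℕ) = k + 1 := by omega
        have hc' : ∀ i, L i j = 2 * evec (k+2) (k+1) i + ε (k+1) * evec (k+2) k i
            + ε (k+2) * evec (k+2) (k+2) i := by
          intro i
          rw [hc i, if_pos (Or.inr hjl : (j:ℕ) = 0 ∨ (j:ℕ) = k + 1),
            if_neg (by omega : ¬(j:ℕ) = 0), hjl, show k+1-1 = k from rfl]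
          simp only [show k+1+1 = k+2 from by omega]
          simp [Pi.add_apply, Pi.smul_apply, smul_eq_mul]
        have expand : (∑ i : Fin (k+2), cseq ε i * L i j)
            = 2 * (∑ i : Fin (k+2), cseq ε i * evec (k+2) (k+1) i)
              + ε (k+1) * (∑ i : Fin (k+2), cseq ε i * evec (k+2) k i)
              + ε (k+2) * (∑ i : Fin (k+2), cseq ε i * evec (k+2) (k+2) i) := by
          rw [Finset.mul_sum, Finset.mul_sum, Finset.mul_sum, ← Finset.sum_add_distrib,
            ← Finset.sum_add_distrib]
          exact Finset.sum_congr rfl fun i _ => by rw [hc' i]; ring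
        rw [expand, sum_mul_evec, sum_mul_evec, sum_mul_evec,
          if_pos (by omega : k + 1 < k + 2), if_pos (by omega : k < k + 2),
          if_neg (by omega : ¬ k + 2 < k + 2), if_pos hjl]
        have h1 := cseq_eq ε (k+1)
        have h2 := cseq_eq ε k
        have hs : sseq ε (k+1) = -ε (k+1) * sseq ε k := rfl
        have hfib : (m : ℤ) = 2 * (Nat.fib (2*(k+1)+1) : ℤ) - (Nat.fib (2*k+1) : ℤ) := by
          have e1 := Nat.fib_add_two (n := 2*k+1)
          have e2 := Nat.fib_add_two (n := 2*k+2)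
          have hnat : Nat.fib (2*(k+2)) + Nat.fib (2*k+1) = 2 * Nat.fib (2*(k+1)+1) := by
            simp only [show 2*k+1+2 = 2*k+3 from by ring, show 2*k+2+2 = 2*k+4 from by ring,
              show 2*k+2+1 = 2*k+3 from by ring, show 2*k+1+1 = 2*k+2 from by ring] at e1 e2
            rw [show 2*(k+2) = 2*k+4 from by ring, show 2*(k+1)+1 = 2*k+3 from by ring]
            omega
          have hc2 := congrArg (Nat.cast : ℕ → ℤ) hnat
          push_cast at hc2
          rw [hm]
          linarith
        rw [h1, h2, hs, hfib]
        ring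
  
  -- hfib (hoisted)
  have hfib : (m : ℤ) = 2 * (Nat.fib (2*(k+1)+1) : ℤ) - (Nat.fib (2*k+1) : ℤ) := by
    have e1 := Nat.fib_add_two (n := 2*k+1)
    have e2 := Nat.fib_add_two (n := 2*k+2)
    have hnat : Nat.fib (2*(k+2)) + Nat.fib (2*k+1) = 2 * Nat.fib (2*(k+1)+1) := by
      simp only [show 2*k+1+2 = 2*k+3 from by ring, show 2*k+2+2 = 2*k+4 from by ring,
        show 2*k+2+1 = 2*k+3 from by ring, show 2*k+1+1 = 2*k+2 from by ring] at e1 e2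
      rw [show 2*(k+2) = 2*k+4 from by ring, show 2*(k+1)+1 = 2*k+3 from by ring]
      omega
    have hc2 := congrArg (Nat.cast : ℕ → ℤ) hnat
    push_cast at hc2
    rw [hm]
    linarith
  -- generators identities in the quotient
  have hB : ∀ a, a < k + 2 → cseq ε a • evec (k+2) 0 - evec (k+2) a ∈ R := by
    intro a
    induction a using Nat.twoStepInduction with
    | zero => intro _; simp [cseq]
    | one =>
        intro _
        have hs1 := hsq 1 le_rfl (by omega)
        have hcol := hcolfun ⟨0, by omega⟩
        simp only [show ((⟨0, by omega⟩ : Fin (k+2)) : ℕ) = 0 from rfl] at hcol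
        simp only [true_or, if_true] at hcol
        have hid : cseq ε 1 • evec (k+2) 0 - evec (k+2) 1
            = (-ε 1) • (fun i => L i ⟨0, by omega⟩) := by
          rw [hcol]
          funext i
          simp only [Pi.smul_apply, Pi.sub_apply, Pi.add_apply, Pi.zero_apply, smul_eq_mul,
            show (0:ℕ)+1 = 1 from rfl, cseq]
          linear_combination (evec (k+2) 1 i) * hs1
        rw [hid]
        exact Submodule.smul_mem R _ (hmem _)
    | more a ihA ihB =>
        intro h2
        have hsa := hsq (a+2) (by omega) (by omega)
        have hcol := hcolfun ⟨a+1, by omega⟩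
        simp only [show ((⟨a+1, by omega⟩ : Fin (k+2)) : ℕ) = a + 1 from rfl] at hcol
        rw [if_neg (by omega), if_neg (by omega)] at hcol
        simp only [show a+1-1 = a from rfl, show a+1+1 = a+2 from by omega] at hcol
        have hid : cseq ε (a+2) • evec (k+2) 0 - evec (k+2) (a+2)
            = (-ε (a+2)) • ((3:ℤ) • (cseq ε (a+1) • evec (k+2) 0 - evec (k+2) (a+1))
              + ε (a+1) • (cseq ε a • evec (k+2) 0 - evec (k+2) a)
              + (fun i => L i ⟨a+1, by omega⟩)) := by
          rw [hcol]
          funext i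
          simp only [Pi.smul_apply, Pi.sub_apply, Pi.add_apply, Pi.zero_apply, smul_eq_mul,
            show cseq ε (a+2) = -ε (a+2) * (3 * cseq ε (a+1) + ε (a+1) * cseq ε a) from rfl]
          linear_combination (evec (k+2) (a+2) i) * hsa
        rw [hid]
        exact Submodule.smul_mem R _ (Submodule.add_mem R (Submodule.add_mem R
          (Submodule.smul_mem R _ (ihB (by omega)))
          (Submodule.smul_mem R _ (ihA (by omega)))) (hmem _))
  -- squares of sign sequence
  have hss : ∀ j, j ≤ k + 1 → sseq ε j * sseq ε j = 1 := by
    intro j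
    induction j with
    | zero => intro _; simp [sseq]
    | succ a ih =>
        intro h
        have h1 := hsq (a+1) (by omega) (by omega)
        have h2 := ih (by omega)
        show (-ε (a+1) * sseq ε a) * (-ε (a+1) * sseq ε a) = 1
        linear_combination (sseq ε a * sseq ε a) * h1 + h2
  -- scalar identity for the last column
  have hscalar : 2 * cseq ε (k+1) + ε (k+1) * cseq ε k = sseq ε (k+1) * (m:ℤ) := by
    rw [cseq_eq, cseq_eq, show sseq ε (k+1) = -ε (k+1) * sseq ε k from rfl, hfib]
    ring
  -- m • e0 lies in the range
  have hm0 : ((m:ℕ):ℤ) • evec (k+2) 0 ∈ R := by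
    have hcol := hcolfun ⟨k+1, by omega⟩
    simp only [show ((⟨k+1, by omega⟩ : Fin (k+2)) : ℕ) = k + 1 from rfl] at hcol
    simp only [or_true, if_true] at hcol
    rw [if_neg (by omega : ¬(k+1 = 0))] at hcol
    simp only [show k+1-1 = k from rfl, show k+1+1 = k+2 from by omega] at hcol
    rw [evec_zero (k+2) (k+2) le_rfl, smul_zero, add_zero] at hcol
    have h1 : (sseq ε (k+1) * (m:ℤ)) • evec (k+2) 0
        = (2:ℤ) • (cseq ε (k+1) • evec (k+2) 0 - evec (k+2) (k+1))
          + ε (k+1) • (cseq ε k • evec (k+2) 0 - evec (k+2) k)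
          + (fun i => L i ⟨k+1, by omega⟩) := by
      rw [hcol]
      funext i
      simp only [Pi.smul_apply, Pi.sub_apply, Pi.add_apply, smul_eq_mul]
      linear_combination (evec (k+2) 0 i) * hscalar.symm
    have h2 : (sseq ε (k+1) * (m:ℤ)) • evec (k+2) 0 ∈ R := by
      rw [h1]
      exact Submodule.add_mem R (Submodule.add_mem R
        (Submodule.smul_mem R _ (hB (k+1) (by omega)))
        (Submodule.smul_mem R _ (hB k (by omega)))) (hmem _)
    have h3 := Submodule.smul_mem R (sseq ε (k+1)) h2
    rwa [smul_smul, show sseq ε (k+1) * (sseq ε (k+1) * (m:ℤ)) = ((m:ℕ):ℤ) from by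
      linear_combination (m:ℤ) * hss (k+1) le_rfl] at h3
  -- the reduced map to ZMod m
  have hker : R ≤ LinearMap.ker (gmap (k+2) ε m) := by
    rintro x ⟨v, rfl⟩
    rw [LinearMap.mem_ker]
    show ((∑ i : Fin (k+2), cseq ε i * (Matrix.toLin' L v) i : ℤ) : ZMod m) = 0
    have hre : (∑ i : Fin (k+2), cseq ε i * (Matrix.toLin' L v) i)
        = ∑ j : Fin (k+2), (∑ i : Fin (k+2), cseq ε i * L i j) * v j := by
      simp only [Matrix.toLin'_apply, Matrix.mulVec, dotProduct, Finset.mul_sum]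
      rw [Finset.sum_comm]
      refine Finset.sum_congr rfl fun j _ => ?_
      rw [Finset.sum_mul]
      exact Finset.sum_congr rfl fun i _ => by ring
    rw [hre]
    have hterm : ∀ j : Fin (k+2), (∑ i : Fin (k+2), cseq ε i * L i j) * v j
        = (m:ℤ) * (if (j:ℕ) = k+1 then sseq ε (k+1) * v j else 0) := by
      intro j; rw [keyZ j]; split_ifs <;> ring
    rw [Finset.sum_congr rfl fun j _ => hterm j, ← Finset.mul_sum,
      Int.cast_mul, Int.cast_natCast, ZMod.natCast_self, zero_mul]
  set Q := (Fin (k+2) → ℤ) ⧸ R with hQ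
  let gbar : Q →ₗ[ℤ] ZMod m := Submodule.liftQ R (gmap (k+2) ε m) hker
  let q0 : Q := Submodule.Quotient.mk (evec (k+2) 0)
  have hψ0 : ((zmultiplesHom Q) q0) ((m:ℕ):ℤ) = 0 := by
    rw [zmultiplesHom_apply]
    show ((m:ℕ):ℤ) • (Submodule.Quotient.mk (evec (k+2) 0) : Q) = 0
    rw [← Submodule.Quotient.mk_smul]
    exact (Submodule.Quotient.mk_eq_zero R).mpr hm0
  let ψ : ZMod m →+ Q := ZMod.lift m ⟨(zmultiplesHom Q) q0, hψ0⟩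
  have hψ : ∀ a : ℤ, ψ (a : ZMod m) = a • q0 := by
    intro a
    show ZMod.lift m ⟨(zmultiplesHom Q) q0, hψ0⟩ (a : ZMod m) = a • q0
    rw [ZMod.lift_coe]
    exact zmultiplesHom_apply Q q0 a
  have hg0 : gbar q0 = 1 := by
    show Submodule.liftQ R (gmap (k+2) ε m) hker (Submodule.Quotient.mk (evec (k+2) 0)) = 1
    rw [Submodule.liftQ_apply]
    show ((∑ i : Fin (k+2), cseq ε i * evec (k+2) 0 i : ℤ) : ZMod m) = 1
    rw [sum_mul_evec, if_pos (by omega : (0:ℕ) < k + 2)]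
    simp [cseq]
  refine ⟨{ toFun := gbar, invFun := ψ, map_add' := map_add gbar,
            left_inv := ?_, right_inv := ?_ }⟩
  · -- left inverse
    intro q
    obtain ⟨x, rfl⟩ := Submodule.Quotient.mk_surjective R q
    have hgx : gbar (Submodule.Quotient.mk x)
        = ((∑ i : Fin (k+2), cseq ε i * x i : ℤ) : ZMod m) := by
      show Submodule.liftQ R (gmap (k+2) ε m) hker (Submodule.Quotient.mk x) = _
      rw [Submodule.liftQ_apply]
      rfl
    rw [hgx, hψ]
    show (∑ i : Fin (k+2), cseq ε i * x i) • q0 = Submodule.Quotient.mk x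
    have hdiff : (∑ i : Fin (k+2), cseq ε (i:ℕ) * x i) • evec (k+2) 0 - x
        = ∑ i : Fin (k+2), x i • (cseq ε (i:ℕ) • evec (k+2) 0 - evec (k+2) (i:ℕ)) := by
      simp only [smul_sub, Finset.sum_sub_distrib]
      congr 1
      · rw [Finset.sum_smul]
        refine Finset.sum_congr rfl fun i _ => ?_
        rw [smul_smul, mul_comm]
      · exact (pi_sum_evec _ x).symm
    have hmemd : (∑ i : Fin (k+2), cseq ε (i:ℕ) * x i) • evec (k+2) 0 - x ∈ R := by
      rw [hdiff]
      exact Submodule.sum_smul_mem R _ fun i _ => hB (i:ℕ) i.isLt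
    show (∑ i : Fin (k+2), cseq ε (i:ℕ) * x i) • (Submodule.Quotient.mk (evec (k+2) 0) : Q)
        = Submodule.Quotient.mk x
    rw [← Submodule.Quotient.mk_smul]
    exact (Submodule.Quotient.eq R).mpr hmemd
  · -- right inverse
    intro z
    obtain ⟨a, rfl⟩ := ZMod.intCast_surjective z
    show gbar (ψ (a : ZMod m)) = (a : ZMod m)
    rw [hψ, map_zsmul, hg0]
    simp
end

section
/- Let G be a finite connected simple graph with vertices v₁,…,v_n and sink q, let M be its n×n reduced Laplacian (M_{ii} = deg(v_i), M_{ij} = −1 if {v_i,v_j} is an edge and 0 otherwise for i ≠ j), and let L = M + N where N is a symmetric integer matrix with entries in {0,2} that is 0 on the diagonal and supported on positions where M_{ij} = −1; assume L is invertible over ℚ. Suppose e_G ∈ ℤⁿ has all entries ≥ 0, e_G is a critical configuration for the chip-firing pair (M, M), and e_G = M·v for some v ∈ ℤⁿ. Then the vector e = L·M⁻¹·e_G (computed over ℚ) has integer entries, e lies in L·ℤⁿ, and e is a critical configuration for the chip-firing pair (L, M). -/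
/-!
Writing configurations as `c = L·u`, validity for `(L, M)` only depends on `M·u`:
`M·L⁻¹·(L·u) = M·u`. Firing a site subtracts a column of `L`, so it changes `u` by a
standard basis vector whatever `L` is, and every configuration met along the way to an
`L·u` is again of the form `L·u'`. Hence `L·u` is critical for `(L, M)` exactly when `M·u`
is critical for `(M, M)`; with `e_G = M·v` this gives the critical configuration `L·v`.
-/

open Matrix

/-- `c` is stable for the pair `(L, M)`: no single site can be legally fired. -/
def cfStable {n : ℕ} (L M : Matrix (Fin n) (Fin n) ℤ) (c : Fin n → ℤ) : Prop :=
  ∀ i, ¬ cfValid L M (c - L.mulVec (Pi.single i 1))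

/-- There is a legal firing sequence from `d` to `c`: firing the sites in the list `l`
one at a time, every intermediate configuration is valid and the final result is `c`. -/
def cfLegal {n : ℕ} (L M : Matrix (Fin n) (Fin n) ℤ) (d c : Fin n → ℤ) : Prop :=
  ∃ l : List (Fin n),
    (∀ t ≤ l.length, cfValid L M (d - L.mulVec (fun i => ((l.take t).count i : ℤ)))) ∧
    c = d - L.mulVec (fun i => (l.count i : ℤ))

/-- `c` is reachable for the pair `(L, M)`: there is a valid configuration `d` from which
every site can be fired, together with a legal firing sequence from `d` to `c`. -/
def cfReachable {n : ℕ} (L M : Matrix (Fin n) (Fin n) ℤ) (c : Fin n → ℤ) : Prop :=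
  ∃ d : Fin n → ℤ, cfValid L M d ∧
    (∀ i, cfValid L M (d - L.mulVec (Pi.single i 1))) ∧ cfLegal L M d c

/-- `c` is critical for the pair `(L, M)`: valid, stable and reachable. -/
def cfCritical {n : ℕ} (L M : Matrix (Fin n) (Fin n) ℤ) (c : Fin n → ℤ) : Prop :=
  cfValid L M c ∧ cfStable L M c ∧ cfReachable L M c

namespace ChipFiring

variable {n : ℕ}

lemma intCast_mulVec (A : Matrix (Fin n) (Fin n) ℤ) (u : Fin n → ℤ) :
    (fun j => ((A *ᵥ u) j : ℚ)) = A.map (Int.cast : ℤ → ℚ) *ᵥ (fun j => (u j : ℚ)) := by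
  funext j
  simp [mulVec, dotProduct]

lemma mul_inv_mulVec_intCast_mulVec (A B : Matrix (Fin n) (Fin n) ℤ)
    (hB : IsUnit (B.map (Int.cast : ℤ → ℚ))) (u : Fin n → ℤ) :
    (A.map (Int.cast : ℤ → ℚ) * (B.map (Int.cast : ℤ → ℚ))⁻¹) *ᵥ
        (fun j => ((B *ᵥ u) j : ℚ)) = fun j => ((A *ᵥ u) j : ℚ) := by
  rw [intCast_mulVec B, mulVec_mulVec, Matrix.mul_assoc,
    nonsing_inv_mul _ ((isUnit_iff_isUnit_det _).mp hB), Matrix.mul_one, intCast_mulVec]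

lemma cfValid_mulVec_iff (L M : Matrix (Fin n) (Fin n) ℤ)
    (hL : IsUnit (L.map (Int.cast : ℤ → ℚ))) (u : Fin n → ℤ) :
    cfValid L M (L *ᵥ u) ↔ ∀ i, 0 ≤ (M *ᵥ u) i := by
  simp only [cfValid, mul_inv_mulVec_intCast_mulVec M L hL, Int.cast_nonneg_iff]

/-- Without an inverse, `L⁻¹ = 0` makes every configuration valid, so none is stable. -/
lemma isUnit_of_cfStable [NeZero n] {L M : Matrix (Fin n) (Fin n) ℤ} {c : Fin n → ℤ}
    (hc : cfStable L M c) : IsUnit (L.map (Int.cast : ℤ → ℚ)) := by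
  by_contra hL
  rw [isUnit_iff_isUnit_det] at hL
  apply hc 0
  intro i
  rw [nonsing_inv_apply_not_isUnit _ hL, Matrix.mul_zero, zero_mulVec]
  rfl

section Transfer

variable {L L' M : Matrix (Fin n) (Fin n) ℤ}
  (hL : IsUnit (L.map (Int.cast : ℤ → ℚ))) (hL' : IsUnit (L'.map (Int.cast : ℤ → ℚ)))
include hL hL'

lemma cfValid_mulVec_congr (u : Fin n → ℤ) :
    cfValid L M (L *ᵥ u) ↔ cfValid L' M (L' *ᵥ u) := by
  rw [cfValid_mulVec_iff L M hL, cfValid_mulVec_iff L' M hL']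

lemma cfStable_mulVec_of_cfStable {u : Fin n → ℤ} (h : cfStable L M (L *ᵥ u)) :
    cfStable L' M (L' *ᵥ u) := by
  intro i
  rw [← mulVec_sub, ← cfValid_mulVec_congr hL hL', mulVec_sub]
  exact h i

lemma cfReachable_mulVec_of_cfReachable {u : Fin n → ℤ} (h : cfReachable L M (L *ᵥ u)) :
    cfReachable L' M (L' *ᵥ u) := by
  obtain ⟨d, hd, hfire, l, hsteps, hfinal⟩ := h
  set z : Fin n → ℤ := fun i => (l.count i : ℤ)
  obtain rfl : d = L *ᵥ (u + z) := by rw [mulVec_add, hfinal, sub_add_cancel]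
  refine ⟨L' *ᵥ (u + z), ?_, fun i => ?_, l, fun t ht => ?_, ?_⟩
  · exact (cfValid_mulVec_congr hL hL' _).mp hd
  · rw [← mulVec_sub, ← cfValid_mulVec_congr hL hL', mulVec_sub]
    exact hfire i
  · rw [← mulVec_sub, ← cfValid_mulVec_congr hL hL', mulVec_sub]
    exact hsteps t ht
  · rw [← mulVec_sub, add_sub_cancel_right]

lemma cfCritical_mulVec_of_cfCritical {u : Fin n → ℤ} (h : cfCritical L M (L *ᵥ u)) :
    cfCritical L' M (L' *ᵥ u) :=
  ⟨(cfValid_mulVec_congr hL hL' u).mp h.1, cfStable_mulVec_of_cfStable hL hL' h.2.1,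
    cfReachable_mulVec_of_cfReachable hL hL' h.2.2⟩

end Transfer

end ChipFiring

open ChipFiring in
theorem stmt14_general (n : ℕ) (hn : 1 ≤ n)
    (M : Matrix (Fin n) (Fin n) ℤ)
    (L : Matrix (Fin n) (Fin n) ℤ)
    (hLinv : IsUnit (L.map (Int.cast : ℤ → ℚ)))
    (eG : Fin n → ℤ)
    (heGcrit : cfCritical M M eG)
    (v : Fin n → ℤ) (heGim : eG = M.mulVec v) :
    ∃ e : Fin n → ℤ,
      (∀ i, (e i : ℚ) =
        (((L.map (Int.cast : ℤ → ℚ)) * (M.map (Int.cast : ℤ → ℚ))⁻¹).mulVec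
          (fun j => (eG j : ℚ))) i) ∧
      (∃ w : Fin n → ℤ, e = L.mulVec w) ∧
      cfCritical L M e := by
  have : NeZero n := ⟨by omega⟩
  have hMinv := isUnit_of_cfStable heGcrit.2.1
  subst heGim
  refine ⟨L *ᵥ v, fun i => ?_, ⟨v, rfl⟩, cfCritical_mulVec_of_cfCritical hMinv hLinv heGcrit⟩
  rw [mul_inv_mulVec_intCast_mulVec L M hMinv]

/-- Theorem `CriticalityIdentity`: for a signed graph `G_φ` with underlying connected
graph `G` (sink `q = Fin.last n`, nonsink vertices `i.castSucc`), reduced Laplacian `M`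
and reduced signed Laplacian `L = M + N`, if `e_G` is the identity of the critical group
of `G` (nonnegative, critical for the pair `(M, M)`, and in the image of `M`), then
`e = L·M⁻¹·e_G` has integer entries, lies in `L·ℤⁿ`, and is critical for `(L, M)`. -/
theorem stmt14 (n : ℕ) (hn : 1 ≤ n)
    (G : SimpleGraph (Fin (n + 1))) [DecidableRel G.Adj] (hconn : G.Connected)
    (M N : Matrix (Fin n) (Fin n) ℤ)
    (hM : ∀ i j : Fin n, M i j =
      if i = j then (G.degree i.castSucc : ℤ)
      else if G.Adj i.castSucc j.castSucc then -1 else 0)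
    (hNsymm : ∀ i j, N i j = N j i)
    (hNdiag : ∀ i, N i i = 0)
    (hNval : ∀ i j, N i j = 0 ∨ N i j = 2)
    (hNsupp : ∀ i j, N i j ≠ 0 → M i j = -1)
    (L : Matrix (Fin n) (Fin n) ℤ) (hLdef : L = M + N)
    (hLinv : IsUnit (L.map (Int.cast : ℤ → ℚ)))
    (eG : Fin n → ℤ) (heG0 : ∀ i, 0 ≤ eG i)
    (heGcrit : cfCritical M M eG)
    (v : Fin n → ℤ) (heGim : eG = M.mulVec v) :
    ∃ e : Fin n → ℤ,
      (∀ i, (e i : ℚ) =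
        (((L.map (Int.cast : ℤ → ℚ)) * (M.map (Int.cast : ℤ → ℚ))⁻¹).mulVec
          (fun j => (eG j : ℚ))) i) ∧
      (∃ w : Fin n → ℤ, e = L.mulVec w) ∧
      cfCritical L M e :=
  stmt14_general n hn M L hLinv eG heGcrit v heGim
end

section
/- Let G be a finite connected simple graph with vertices v₁,…,v_n and sink q such that the induced subgraph on {v₁,…,v_n} (i.e. G minus the sink) is connected. Let M be the reduced Laplacian of G and let L = M + N where N is a symmetric integer matrix with entries in {0,2}, zero on the diagonal and supported on positions where M_{ij} = −1; assume L is invertible over ℚ. Let s ∈ ℤⁿ be defined by s_i = 1 if v_i is adjacent to q and s_i = 0 otherwise. Assume s ∈ S⁺ for the chip-firing pair (L, M), and let N₀ be a positive integer such that L⁻¹·(N₀·s) has all entries in ℤ_{≥0}. Then a configuration c ∈ S⁺ is critical for the pair (L, M) if and only if c is stable and there exists a legal firing sequence from c + N₀·s to c. -/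
open Matrix

namespace CF

variable {n : ℕ} (L M : Matrix (Fin n) (Fin n) ℤ)

/-- integer vector cast to ℚ -/
def qc (c : Fin n → ℤ) : Fin n → ℚ := fun j => (c j : ℚ)

noncomputable def phi (c : Fin n → ℤ) : Fin n → ℚ :=
  ((M.map (Int.cast : ℤ → ℚ)) * (L.map (Int.cast : ℤ → ℚ))⁻¹).mulVec (qc c)

lemma valid_iff (c : Fin n → ℤ) : cfValid L M c ↔ ∀ i, 0 ≤ phi L M c i := Iff.rfl

lemma qc_add (a b : Fin n → ℤ) : qc (a + b) = qc a + qc b := by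
  funext i; simp [qc]

lemma qc_sub (a b : Fin n → ℤ) : qc (a - b) = qc a - qc b := by
  funext i; simp [qc]

lemma phi_add (a b : Fin n → ℤ) : phi L M (a + b) = phi L M a + phi L M b := by
  unfold phi; rw [qc_add, mulVec_add]

lemma phi_sub (a b : Fin n → ℤ) : phi L M (a - b) = phi L M a - phi L M b := by
  unfold phi; rw [qc_sub, mulVec_sub]

lemma qc_mulVec (A : Matrix (Fin n) (Fin n) ℤ) (v : Fin n → ℤ) :
    qc (A.mulVec v) = (A.map (Int.cast : ℤ → ℚ)).mulVec (qc v) := by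
  funext i
  exact RingHom.map_mulVec (Int.castRingHom ℚ) A v i

lemma phi_L (hLinv : IsUnit (L.map (Int.cast : ℤ → ℚ))) (z : Fin n → ℤ) :
    phi L M (L.mulVec z) = (M.map (Int.cast : ℤ → ℚ)).mulVec (qc z) := by
  unfold phi
  rw [qc_mulVec, mulVec_mulVec, Matrix.mul_assoc,
    Matrix.nonsing_inv_mul _ ((Matrix.isUnit_iff_isUnit_det _).mp hLinv), Matrix.mul_one]

/-- inductive legal firing sequences -/
inductive Seq : (Fin n → ℤ) → (Fin n → ℤ) → Prop
  | nil (a : Fin n → ℤ) (h : cfValid L M a) : Seq a a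
  | cons (a : Fin n → ℤ) (i : Fin n) (b : Fin n → ℤ) (ha : cfValid L M a)
      (h : Seq (a - L.mulVec (Pi.single i 1)) b) : Seq a b

lemma Seq.validStart {a b : Fin n → ℤ} (h : Seq L M a b) : cfValid L M a := by
  cases h with
  | nil _ h => exact h
  | cons _ _ _ ha _ => exact ha

lemma Seq.validEnd {a b : Fin n → ℤ} (h : Seq L M a b) : cfValid L M b := by
  induction h with
  | nil _ h => exact h
  | cons _ _ _ _ _ ih => exact ih

lemma Seq.trans {a b c : Fin n → ℤ} (h : Seq L M a b) (h' : Seq L M b c) :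
    Seq L M a c := by
  induction h with
  | nil _ _ => exact h'
  | cons a i b ha _ ih => exact Seq.cons a i c ha (ih h')

lemma mv0 : (L.mulVec fun _ : Fin n => (0:ℤ)) = 0 := by
  have h : (fun _ : Fin n => (0:ℤ)) = 0 := rfl
  rw [h, mulVec_zero]

lemma count_take_cons (x : Fin n) (l : List (Fin n)) (t : ℕ) :
    (fun i => ((((x :: l).take (t+1)).count i : ℤ))) =
      Pi.single x 1 + (fun i => (((l.take t).count i : ℤ))) := by
  funext i
  by_cases h : i = x
  · subst h
    simp only [List.take_succ_cons, List.count_cons, Pi.add_apply, Pi.single_eq_same]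
    simp only [beq_self_eq_true, if_true]
    push_cast; ring
  · have hbe : (x == i) = false := beq_eq_false_iff_ne.mpr (Ne.symm h)
    simp [List.take_succ_cons, List.count_cons, Pi.single_eq_of_ne h, hbe]

lemma count_cons (x : Fin n) (l : List (Fin n)) :
    (fun i => (((x :: l).count i : ℤ))) =
      Pi.single x 1 + (fun i => ((l.count i : ℤ))) := by
  funext i
  by_cases h : i = x
  · subst h
    simp only [List.count_cons, Pi.add_apply, Pi.single_eq_same]
    simp only [beq_self_eq_true, if_true]
    push_cast; ring
  · have hbe : (x == i) = false := beq_eq_false_iff_ne.mpr (Ne.symm h)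
    simp [List.count_cons, Pi.single_eq_of_ne h, hbe]

lemma seq_of_legal {d c : Fin n → ℤ} (h : cfLegal L M d c) : Seq L M d c := by
  obtain ⟨l, hval, hend⟩ := h
  induction l generalizing d with
  | nil =>
      have h0 := hval 0 (by simp)
      simp only [List.take_nil, List.count_nil, Int.natCast_zero, mv0, sub_zero] at h0 hend
      rw [hend]; exact Seq.nil d h0
  | cons x xs ih =>
      have hd : cfValid L M d := by
        have := hval 0 (by simp)
        simpa [mv0] using this
      have key : ∀ (v : Fin n → ℤ),
          d - L.mulVec (Pi.single x 1 + v) =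
            (d - L.mulVec (Pi.single x 1)) - L.mulVec v := by
        intro v; rw [mulVec_add, sub_sub]
      refine Seq.cons d x c hd (ih (d := d - L.mulVec (Pi.single x 1)) ?_ ?_)
      · intro t ht
        have := hval (t+1) (by simpa using Nat.succ_le_succ ht)
        rwa [count_take_cons, key] at this
      · rw [hend, count_cons, key]

lemma legal_of_seq {d c : Fin n → ℤ} (h : Seq L M d c) : cfLegal L M d c := by
  induction h with
  | nil a ha =>
      refine ⟨[], ?_, ?_⟩
      · intro t ht
        have ht0 : t = 0 := Nat.le_zero.mp ht
        subst ht0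
        simpa [mv0] using ha
      · simp [mv0]
  | cons a i b ha hs ih =>
      obtain ⟨l, hval, hend⟩ := ih
      have key : ∀ (v : Fin n → ℤ),
          a - L.mulVec (Pi.single i 1 + v) =
            (a - L.mulVec (Pi.single i 1)) - L.mulVec v := by
        intro v; rw [mulVec_add, sub_sub]
      refine ⟨i :: l, ?_, ?_⟩
      · intro t ht
        match t with
        | 0 =>
            simpa [mv0] using ha
        | t+1 =>
            rw [count_take_cons, key]
            exact hval t (by simpa using Nat.succ_le_succ_iff.mp ht)
      · rw [count_cons, key]; exact hend

end CF

namespace CF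
variable {n : ℕ} (L M : Matrix (Fin n) (Fin n) ℤ)

lemma qc_single (i : Fin n) : qc (Pi.single i 1) = Pi.single i (1 : ℚ) := by
  funext j
  rcases eq_or_ne j i with h | h
  · subst h; simp [qc]
  · simp [qc, Pi.single_eq_of_ne h]

/-- `i` can be legally fired at `a`. -/
def Fire (a : Fin n → ℤ) (i : Fin n) : Prop :=
  cfValid L M (a - L.mulVec (Pi.single i 1))

lemma phi_step (hLinv : IsUnit (L.map (Int.cast : ℤ → ℚ))) (a : Fin n → ℤ) (i j : Fin n) :
    phi L M (a - L.mulVec (Pi.single i 1)) j = phi L M a j - (M j i : ℚ) := by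
  rw [phi_sub, phi_L L M hLinv]
  simp [qc_single, Matrix.mulVec_single, Matrix.map_apply]

lemma fire_def (hLinv : IsUnit (L.map (Int.cast : ℤ → ℚ))) (a : Fin n → ℤ) (i : Fin n) :
    Fire L M a i ↔ ∀ j, (M j i : ℚ) ≤ phi L M a j := by
  unfold Fire
  rw [valid_iff]
  constructor
  · intro h j; have := h j; rw [phi_step L M hLinv] at this; linarith
  · intro h j; rw [phi_step L M hLinv]; have := h j; linarith

lemma fire_deg (hLinv : IsUnit (L.map (Int.cast : ℤ → ℚ))) {a : Fin n → ℤ} {i : Fin n} (h : Fire L M a i) :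
    (M i i : ℚ) ≤ phi L M a i :=
  (fire_def L M hLinv a i).mp h i

lemma fire_of_deg (hLinv : IsUnit (L.map (Int.cast : ℤ → ℚ)))
    (hP1 : ∀ i j : Fin n, i ≠ j → M i j ≤ 0) {a : Fin n → ℤ} {i : Fin n} (hav : cfValid L M a)
    (h : (M i i : ℚ) ≤ phi L M a i) : Fire L M a i := by
  rw [fire_def L M hLinv]
  intro j
  rcases eq_or_ne j i with hj | hj
  · subst hj; exact h
  · have h1 : (M j i : ℚ) ≤ 0 := by exact_mod_cast hP1 j i hj
    exact le_trans h1 (hav j)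

/-- two distinct fireable sites can be fired in sequence -/
lemma fire_two (hLinv : IsUnit (L.map (Int.cast : ℤ → ℚ)))
    (hP1 : ∀ i j : Fin n, i ≠ j → M i j ≤ 0) {a : Fin n → ℤ} {i j : Fin n} (hij : i ≠ j) (hav : cfValid L M a)
    (hi : Fire L M a i) (hj : Fire L M a j) :
    cfValid L M (a - L.mulVec (Pi.single j 1) - L.mulVec (Pi.single i 1)) := by
  rw [valid_iff]
  intro m
  rw [phi_step L M hLinv, phi_step L M hLinv]
  rcases eq_or_ne m i with hmi | hmi
  · subst hmi
    have h1 := fire_deg L M hLinv hi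
    have h2 : (M m j : ℚ) ≤ 0 := by exact_mod_cast hP1 m j (by simpa using hij)
    linarith
  · rcases eq_or_ne m j with hmj | hmj
    · subst hmj
      have h1 := fire_deg L M hLinv hj
      have h2 : (M m i : ℚ) ≤ 0 := by exact_mod_cast hP1 m i (Ne.symm hij)
      linarith
    · have h1 : (M m i : ℚ) ≤ 0 := by exact_mod_cast hP1 m i hmi
      have h2 : (M m j : ℚ) ≤ 0 := by exact_mod_cast hP1 m j hmj
      have h0 : 0 ≤ phi L M a m := hav m
      linarith

lemma step_comm (a : Fin n → ℤ) (i j : Fin n) :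
    a - L.mulVec (Pi.single j 1) - L.mulVec (Pi.single i 1) =
      a - L.mulVec (Pi.single i 1) - L.mulVec (Pi.single j 1) := by
  rw [sub_right_comm]

lemma Seq.pull (hLinv : IsUnit (L.map (Int.cast : ℤ → ℚ)))
    (hP1 : ∀ i j : Fin n, i ≠ j → M i j ≤ 0) :
    ∀ {a c : Fin n → ℤ}, Seq L M a c → ∀ {i : Fin n}, cfStable L M c → Fire L M a i →
      Seq L M (a - L.mulVec (Pi.single i 1)) c := by
  intro a c h
  induction h with
  | nil a hva => intro i hstab hf; exact absurd hf (hstab i)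
  | cons a j b hva hs ih =>
      intro i hstab hf
      rcases eq_or_ne i j with hij | hij
      · subst hij; exact hs
      · have hfj : Fire L M a j := hs.validStart
        have h2 : Fire L M (a - L.mulVec (Pi.single j 1)) i :=
          fire_two L M hLinv hP1 hij hva hf hfj
        have h3 := ih hstab h2
        rw [step_comm] at h3
        exact Seq.cons _ j _ hf h3

lemma Seq.bridge (hLinv : IsUnit (L.map (Int.cast : ℤ → ℚ)))
    (hP1 : ∀ i j : Fin n, i ≠ j → M i j ≤ 0) {a b c : Fin n → ℤ} (hab : Seq L M a b) (hac : Seq L M a c)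
    (hstab : cfStable L M c) : Seq L M b c := by
  induction hab with
  | nil _ _ => exact hac
  | cons a i b hva hs ih =>
      exact ih (Seq.pull L M hLinv hP1 hac hstab hs.validStart)

lemma Seq.shift {v : Fin n → ℤ} (hv : ∀ j, 0 ≤ phi L M v j) {a b : Fin n → ℤ}
    (h : Seq L M a b) : Seq L M (a + v) (b + v) := by
  induction h with
  | nil a hva =>
      refine Seq.nil _ ?_
      rw [valid_iff]; intro j; rw [phi_add]
      have := hva j; rw [valid_iff] at hva
      have := hva j
      simpa using add_nonneg this (hv j)
  | cons a i b hva hs ih =>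
      refine Seq.cons _ i _ ?_ ?_
      · rw [valid_iff]; intro j; rw [phi_add]
        rw [valid_iff] at hva
        simpa using add_nonneg (hva j) (hv j)
      · have : a + v - L.mulVec (Pi.single i 1) = a - L.mulVec (Pi.single i 1) + v := by
          abel
        rwa [this]

/-- fire site `v` exactly `f` times -/
lemma fireMany (hLinv : IsUnit (L.map (Int.cast : ℤ → ℚ)))
    (hP1 : ∀ i j : Fin n, i ≠ j → M i j ≤ 0) (hP2 : ∀ i, 0 ≤ M i i) {a : Fin n → ℤ} (hav : cfValid L M a)
    (v : Fin n) (f : ℕ) (hf : (f : ℚ) * (M v v : ℚ) ≤ phi L M a v) :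
    Seq L M a (a - L.mulVec ((f : ℤ) • Pi.single v 1)) := by
  induction f generalizing a with
  | zero =>
      simpa [mulVec_smul] using Seq.nil a hav
  | succ f ih =>
      have hMvv : (0:ℚ) ≤ (M v v : ℚ) := by exact_mod_cast hP2 v
      have hstep : cfValid L M (a - L.mulVec (Pi.single v 1)) := by
        refine fire_of_deg L M hLinv hP1 hav ?_
        push_cast at hf
        nlinarith
      have ih' := ih hstep ?h
      case h =>
        rw [phi_step L M hLinv]
        push_cast at hf ⊢
        linarith
      have key : a - L.mulVec (((f : ℤ) + 1) • Pi.single v 1) =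
          a - L.mulVec (Pi.single v 1) - L.mulVec ((f : ℤ) • Pi.single v 1) := by
        rw [add_smul, one_smul, mulVec_add, sub_sub, add_comm]
      refine Seq.cons _ v _ hav ?_
      push_cast
      rw [key]
      exact ih'

lemma phi_fireMany (hLinv : IsUnit (L.map (Int.cast : ℤ → ℚ))) (a : Fin n → ℤ) (v : Fin n) (f : ℕ) (j : Fin n) :
    phi L M (a - L.mulVec ((f : ℤ) • Pi.single v 1)) j =
      phi L M a j - (f : ℚ) * (M j v : ℚ) := by
  rw [phi_sub, phi_L L M hLinv]
  have : qc ((f : ℤ) • Pi.single v 1) = (f : ℚ) • (Pi.single v (1:ℚ) : Fin n → ℚ) := by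
    funext m
    rcases eq_or_ne m v with h | h
    · subst h; simp [qc]
    · simp [qc, Pi.single_eq_of_ne h]
  rw [this, mulVec_smul]
  simp [Matrix.mulVec_single, Matrix.map_apply, mul_comm]

end CF

namespace CF
variable {n : ℕ} (L M : Matrix (Fin n) (Fin n) ℤ)

lemma phi_addL (hLinv : IsUnit (L.map (Int.cast : ℤ → ℚ))) (d r : Fin n → ℤ) (m : Fin n) :
    phi L M (d + L.mulVec r) m = phi L M d m + ((M.mulVec r m : ℤ) : ℚ) := by
  rw [phi_add, phi_L L M hLinv, ← qc_mulVec]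
  rfl

lemma mulVec_eq_sum (r : Fin n → ℤ) (m : Fin n) : M.mulVec r m = ∑ j, M m j * r j := by
  simp [Matrix.mulVec, dotProduct]

lemma capped_key (hP1 : ∀ i j : Fin n, i ≠ j → M i j ≤ 0) (hP2 : ∀ i, 0 ≤ M i i)
    (hP3 : ∀ i, 0 ≤ ∑ j, M i j) (z r : Fin n → ℤ) (t : ℤ) (ht : 0 ≤ t)
    (hz : ∀ i, 0 ≤ z i) (hMz : ∀ i, 0 ≤ M.mulVec z i)
    (hb : ∀ j, min (z j) t ≤ r j ∧ r j ≤ min (z j) (t+1)) (m : Fin n) :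
    -(M m m) ≤ M.mulVec r m := by
  set w : Fin n → ℤ := fun j => min (z j) t with hw
  have hstep : ∀ j, M m j * w j + (if j = m then 0 else M m j) ≤ M m j * r j := by
    intro j
    rcases eq_or_ne j m with h | h
    · subst h
      simpa using mul_le_mul_of_nonneg_left (hb j).1 (hP2 j)
    · simp only [if_neg h]
      have h1 : r j ≤ w j + 1 := by
        have := (hb j).2; simp only [hw]; omega
      have h2 := mul_le_mul_of_nonpos_left h1 (hP1 m j (Ne.symm h))
      linarith
  have hsum : ∑ j, (M m j * w j + (if j = m then 0 else M m j)) ≤ ∑ j, M m j * r j :=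
    Finset.sum_le_sum (fun j _ => hstep j)
  have h2 : ∑ j, (if j = m then (0:ℤ) else M m j) = (∑ j, M m j) - M m m := by
    have he : ∀ j, (if j = m then (0:ℤ) else M m j) =
        M m j - (if j = m then M m j else 0) := by
      intro j; by_cases h : j = m <;> simp [h]
    rw [Finset.sum_congr rfl (fun j _ => he j), Finset.sum_sub_distrib,
      Finset.sum_ite_eq' Finset.univ m (fun j => M m j)]
    simp
  have hw0 : 0 ≤ ∑ j, M m j * w j := by
    rcases le_or_gt (z m) t with hc | hc
    · have hterm : ∀ j, M m j * z j ≤ M m j * w j := by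
        intro j
        rcases eq_or_ne j m with h | h
        · subst h
          have : w j = z j := by simp only [hw]; omega
          rw [this]
        · exact mul_le_mul_of_nonpos_left (min_le_left _ _) (hP1 m j (Ne.symm h))
      have : M.mulVec z m ≤ ∑ j, M m j * w j := by
        rw [mulVec_eq_sum]
        exact Finset.sum_le_sum (fun j _ => hterm j)
      linarith [hMz m]
    · have hterm : ∀ j, M m j * t ≤ M m j * w j := by
        intro j
        rcases eq_or_ne j m with h | h
        · subst h
          have : w j = t := by simp only [hw]; omega
          rw [this]
        · exact mul_le_mul_of_nonpos_left (min_le_right _ _) (hP1 m j (Ne.symm h))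
      have h3 : (∑ j, M m j) * t ≤ ∑ j, M m j * w j := by
        rw [Finset.sum_mul]
        exact Finset.sum_le_sum (fun j _ => hterm j)
      nlinarith [hP3 m]
  have := hsum
  rw [Finset.sum_add_distrib, h2] at this
  rw [mulVec_eq_sum]
  linarith [hP3 m]

lemma capped_valid (hLinv : IsUnit (L.map (Int.cast : ℤ → ℚ)))
    (hP1 : ∀ i j : Fin n, i ≠ j → M i j ≤ 0) (hP2 : ∀ i, 0 ≤ M i i)
    (hP3 : ∀ i, 0 ≤ ∑ j, M i j) (d z r : Fin n → ℤ)
    (hdf : ∀ i, Fire L M d i) (t : ℤ) (ht : 0 ≤ t)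
    (hz : ∀ i, 0 ≤ z i) (hMz : ∀ i, 0 ≤ M.mulVec z i)
    (hb : ∀ j, min (z j) t ≤ r j ∧ r j ≤ min (z j) (t+1)) :
    cfValid L M (d + L.mulVec r) := by
  rw [valid_iff]
  intro m
  rw [phi_addL L M hLinv]
  have h1 : (M m m : ℚ) ≤ phi L M d m := fire_deg L M hLinv (hdf m)
  have h2 : -(M m m : ℚ) ≤ ((M.mulVec r m : ℤ) : ℚ) := by
    exact_mod_cast capped_key M hP1 hP2 hP3 z r t ht hz hMz hb m
  linarith

lemma seqDown (hLinv : IsUnit (L.map (Int.cast : ℤ → ℚ)))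
    (hP1 : ∀ i j : Fin n, i ≠ j → M i j ≤ 0) (hP2 : ∀ i, 0 ≤ M i i)
    (hP3 : ∀ i, 0 ≤ ∑ j, M i j) (d z : Fin n → ℤ)
    (hdv : cfValid L M d) (hdf : ∀ i, Fire L M d i)
    (hz : ∀ i, 0 ≤ z i) (hMz : ∀ i, 0 ≤ M.mulVec z i) :
    Seq L M (d + L.mulVec z) d := by
  have key : ∀ (N : ℕ) (r : Fin n → ℤ) (t : ℤ), 0 ≤ t →
      (∀ j, min (z j) t ≤ r j ∧ r j ≤ min (z j) (t+1)) → (∑ j, r j) ≤ (N : ℤ) →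
      Seq L M (d + L.mulVec r) d := by
    intro N
    induction N with
    | zero =>
        intro r t ht hb hsum
        have hr0 : ∀ j, 0 ≤ r j := by
          intro j; have := (hb j).1; have := hz j; omega
        have hrz : r = 0 := by
          funext j
          by_contra hne
          have h1 : 1 ≤ r j := by
            have := hr0 j
            rcases lt_or_eq_of_le this with h | h
            · omega
            · exact absurd h.symm hne
          have : r j ≤ ∑ k, r k := Finset.single_le_sum (fun k _ => hr0 k) (Finset.mem_univ j)
          omega
        rw [hrz, mulVec_zero, add_zero]
        exact Seq.nil d hdv
    | succ N ih =>
        intro r t ht hb hsum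
        have hr0 : ∀ j, 0 ≤ r j := by
          intro j; have := (hb j).1; have := hz j; omega
        by_cases hrz : r = 0
        · rw [hrz, mulVec_zero, add_zero]; exact Seq.nil d hdv
        · -- find a good index to fire, possibly after lowering the cap
          obtain ⟨j₁, hj₁⟩ : ∃ j, r j ≠ 0 := Function.ne_iff.mp hrz
          have main : ∃ (t' : ℤ) (i : Fin n), 0 ≤ t' ∧
              (∀ j, min (z j) t' ≤ r j ∧ r j ≤ min (z j) (t'+1)) ∧
              min (z i) t' < r i := by
            by_cases hex : ∃ i, min (z i) t < r i
            · obtain ⟨i, hi⟩ := hex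
              exact ⟨t, i, ht, hb, hi⟩
            · push_neg at hex
              have req : ∀ j, r j = min (z j) t := by
                intro j; have := (hb j).1; have := hex j; omega
              have hne : (Finset.univ : Finset (Fin n)).Nonempty := ⟨j₁, Finset.mem_univ _⟩
              set T := Finset.univ.sup' hne r with hT
              obtain ⟨jm, _, hjm⟩ := Finset.exists_mem_eq_sup' hne r
              have hle : ∀ j, r j ≤ T := fun j => Finset.le_sup' r (Finset.mem_univ j)
              have hTeq : T = r jm := hT.trans hjm
              have hTle : T ≤ t := by
                have := req jm; have := hz jm; omega
              have hreq' : ∀ j, r j = min (z j) T := by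
                intro j; have := req j; have := hle j; omega
              have hT1 : 1 ≤ T := by
                have := hle j₁; have := hr0 j₁; omega
              refine ⟨T - 1, jm, by omega, ?_, ?_⟩
              · intro j; have := hreq' j; omega
              · have h1 := hreq' jm
                omega
          obtain ⟨t', i, ht', hb', hi⟩ := main
          set r' := r - Pi.single i 1 with hr'
          have hb'' : ∀ j, min (z j) t' ≤ r' j ∧ r' j ≤ min (z j) (t'+1) := by
            intro j
            rcases eq_or_ne j i with h | h
            · subst h
              have := hb' j
              simp only [hr', Pi.sub_apply, Pi.single_eq_same]
              omega
            · simp only [hr', Pi.sub_apply, Pi.single_eq_of_ne h]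
              have := hb' j
              omega
          have hsum' : (∑ j, r' j) ≤ (N : ℤ) := by
            have : ∑ j, r' j = (∑ j, r j) - 1 := by
              simp only [hr', Pi.sub_apply]
              rw [Finset.sum_sub_distrib]
              congr 1
              simp [Pi.single_apply]
            push_cast at hsum ⊢
            omega
          have hstep : d + L.mulVec r - L.mulVec (Pi.single i 1) = d + L.mulVec r' := by
            rw [hr', mulVec_sub, add_sub_assoc]
          refine Seq.cons _ i _ ?_ ?_
          · exact capped_valid L M hLinv hP1 hP2 hP3 d z r hdf t' ht' hz hMz hb'
          · rw [hstep]
            exact ih r' t' ht' hb'' hsum'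
  -- apply with r = z, t = max of z (or any large bound)
  have hne : 0 ≤ ∑ j, z j := Finset.sum_nonneg (fun j _ => hz j)
  refine key (∑ j, z j).toNat z ((∑ j, z j) + 1) (by omega) ?_ (by omega)
  intro j
  have h1 : z j ≤ ∑ k, z k := Finset.single_le_sum (fun k _ => hz k) (Finset.mem_univ j)
  omega

section Graph
open SimpleGraph

variable {V : Type*}

lemma propagate {G : SimpleGraph V} (A : Set V)
    (hA : ∀ a b, a ∈ A → G.Adj a b → b ∈ A) {u v : V} (w : G.Walk u v) (hu : u ∈ A) :
    v ∈ A := by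
  induction w with
  | nil => exact hu
  | cons h p ih => exact ih (hA _ _ hu h)

lemma propagate_univ {G : SimpleGraph V} (hc : G.Connected) (A : Set V)
    (hA : ∀ a b, a ∈ A → G.Adj a b → b ∈ A) {u : V} (hu : u ∈ A) (v : V) : v ∈ A := by
  obtain ⟨w⟩ := hc u v
  exact propagate A hA w hu

lemma dist_down {G : SimpleGraph V} (hc : G.Connected) (u v : V) (k : ℕ)
    (h : G.dist u v = k + 1) : ∃ b, G.Adj b v ∧ G.dist u b = k := by
  obtain ⟨p, hp⟩ := (hc u v).exists_walk_length_eq_dist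
  have hrl : p.reverse.length = k + 1 := by rw [SimpleGraph.Walk.length_reverse, hp, h]
  cases hpr : p.reverse with
  | nil => rw [hpr] at hrl; simp at hrl
  | cons hadj q =>
      rename_i b
      rw [hpr] at hrl
      simp only [SimpleGraph.Walk.length_cons] at hrl
      have hq : q.length = k := by omega
      have hcomm : G.dist u b = G.dist b u := SimpleGraph.dist_comm
      have h1 : G.dist b u ≤ k := by
        have h' := SimpleGraph.dist_le q
        omega
      have htri := hc.dist_triangle (u := u) (v := b) (w := v)
      have hbv : G.dist b v ≤ 1 := by
        have := SimpleGraph.dist_le (SimpleGraph.Walk.cons hadj.symm SimpleGraph.Walk.nil)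
        simpa using this
      exact ⟨b, hadj.symm, by omega⟩

lemma dist_lt_card {G : SimpleGraph V} [Fintype V] [DecidableEq V] (hc : G.Connected)
    (u v : V) : G.dist u v < Fintype.card V := by
  obtain ⟨p, hp, hl⟩ := (hc u v).exists_path_of_dist
  rw [← hl]
  exact hp.length_lt

end Graph

section Lap
open SimpleGraph

variable {n : ℕ} (G : SimpleGraph (Fin (n+1))) [DecidableRel G.Adj]
  (M : Matrix (Fin n) (Fin n) ℤ)
  (hM : ∀ i j : Fin n, M i j = if i = j then (G.degree i.castSucc : ℤ)
      else if G.Adj i.castSucc j.castSucc then -1 else 0)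

include hM

lemma lap_offdiag : ∀ i j : Fin n, i ≠ j → M i j ≤ 0 := by
  intro i j h
  rw [hM]
  simp only [if_neg h]
  split <;> omega

lemma lap_diag : ∀ i : Fin n, 0 ≤ M i i := by
  intro i
  rw [hM]
  simp

lemma lap_rowsum (m : Fin n) : ∑ j, M m j = (G.degree m.castSucc : ℤ) -
    ((Finset.univ.filter (fun j : Fin n => G.Adj m.castSucc j.castSucc)).card : ℤ) := by
  have hterm : ∀ j, M m j = (if m = j then (G.degree m.castSucc : ℤ) else 0) +
      (if G.Adj m.castSucc j.castSucc then -1 else 0) := by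
    intro j
    rw [hM]
    rcases eq_or_ne m j with h | h
    · subst h; simp [SimpleGraph.irrefl]
    · simp [h]
  rw [Finset.sum_congr rfl (fun j _ => hterm j), Finset.sum_add_distrib,
    Finset.sum_ite_eq Finset.univ m (fun _ => (G.degree m.castSucc : ℤ))]
  have h2 : ∑ j : Fin n, (if G.Adj m.castSucc j.castSucc then (-1 : ℤ) else 0) =
      -((Finset.univ.filter (fun j : Fin n => G.Adj m.castSucc j.castSucc)).card : ℤ) := by
    rw [← Finset.sum_filter, Finset.sum_const]
    simp
  rw [h2, if_pos (Finset.mem_univ m)]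
  ring

lemma lap_card_le (m : Fin n) :
    (Finset.univ.filter (fun j : Fin n => G.Adj m.castSucc j.castSucc)).card ≤
      G.degree m.castSucc := by
  rw [← SimpleGraph.card_neighborFinset_eq_degree]
  apply Finset.card_le_card_of_injOn Fin.castSucc
  · intro j hj
    rw [Finset.mem_coe, Finset.mem_filter] at hj
    rw [Finset.mem_coe, SimpleGraph.mem_neighborFinset]
    exact hj.2
  · intro a _ b _ h
    exact Fin.castSucc_injective _ h

lemma lap_card_lt (m : Fin n) (hadj : G.Adj m.castSucc (Fin.last n)) :
    (Finset.univ.filter (fun j : Fin n => G.Adj m.castSucc j.castSucc)).card + 1 ≤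
      G.degree m.castSucc := by
  rw [← SimpleGraph.card_neighborFinset_eq_degree]
  have hmem : Fin.last n ∈ G.neighborFinset m.castSucc := by
    rw [SimpleGraph.mem_neighborFinset]; exact hadj
  have hcard : ((G.neighborFinset m.castSucc).erase (Fin.last n)).card =
      (G.neighborFinset m.castSucc).card - 1 := Finset.card_erase_of_mem hmem
  have hle : (Finset.univ.filter (fun j : Fin n => G.Adj m.castSucc j.castSucc)).card ≤
      ((G.neighborFinset m.castSucc).erase (Fin.last n)).card := by
    apply Finset.card_le_card_of_injOn Fin.castSucc
    · intro j hj
      rw [Finset.mem_coe, Finset.mem_filter] at hj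
      rw [Finset.mem_coe, Finset.mem_erase, SimpleGraph.mem_neighborFinset]
      exact ⟨(Fin.castSucc_lt_last j).ne, hj.2⟩
    · intro a _ b _ h
      exact Fin.castSucc_injective _ h
  have hpos : 1 ≤ (G.neighborFinset m.castSucc).card := Finset.card_pos.mpr ⟨_, hmem⟩
  omega

lemma lap_rowsum_nonneg : ∀ m : Fin n, 0 ≤ ∑ j, M m j := by
  intro m
  rw [lap_rowsum G M hM m]
  have := lap_card_le G M hM m
  omega

lemma lap_rowsum_pos (m : Fin n) (hadj : G.Adj m.castSucc (Fin.last n)) :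
    1 ≤ ∑ j, M m j := by
  rw [lap_rowsum G M hM m]
  have := lap_card_lt G M hM m hadj
  omega

end Lap

open SimpleGraph in
lemma pump {n : ℕ} (hn : 1 ≤ n) (G : SimpleGraph (Fin (n+1))) [DecidableRel G.Adj]
    (hG' : (G.comap (fun i : Fin n => i.castSucc)).Connected)
    (L M : Matrix (Fin n) (Fin n) ℤ)
    (hLinv : IsUnit (L.map (Int.cast : ℤ → ℚ)))
    (hM : ∀ i j : Fin n, M i j = if i = j then (G.degree i.castSucc : ℤ)
      else if G.Adj i.castSucc j.castSucc then -1 else 0)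
    (v : Fin n → ℤ) (istar : Fin n) (c : Fin n → ℤ) (hc : cfValid L M c)
    (hv_nn : ∀ j, 0 ≤ phi L M v j) (hv_pos : 1 ≤ phi L M v istar) :
    ∃ (K : ℕ) (m : Fin n → ℤ), Seq L M (c + (K : ℤ) • v) m ∧ ∀ i, Fire L M m i := by
  classical
  have hP1 : ∀ i j : Fin n, i ≠ j → M i j ≤ 0 := lap_offdiag G M hM
  have hP2 : ∀ i : Fin n, 0 ≤ M i i := lap_diag G M hM
  set G' := G.comap (fun i : Fin n => i.castSucc) with hG'def
  set dQ : Fin n → ℕ := fun j => G'.dist istar j with hdQ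
  set D : ℕ := Finset.univ.sup (fun i : Fin (n+1) => G.degree i) with hD
  have hdeg_le : ∀ j : Fin n, M j j ≤ (D : ℤ) := by
    intro j
    have h := hM j j
    rw [if_pos rfl] at h
    rw [h]
    exact_mod_cast Finset.le_sup (f := fun i : Fin (n+1) => G.degree i)
      (Finset.mem_univ j.castSucc)
  set a : ℕ → ℕ := fun ℓ => (D+1)^(2*(n+1-ℓ)) with ha
  set F : ℚ → ℚ := id with hFjunk
  -- the fuel recurrence
  have hrec : ∀ ℓ : ℕ, ℓ + 1 ≤ n → ((a (ℓ+1) : ℚ) + 1) * (D : ℚ) ≤ (a ℓ : ℚ) := by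
    intro ℓ hℓ
    have hnat : (a (ℓ+1) + 1) * D ≤ a ℓ := by
      have he : 2*(n+1-ℓ) = 2*(n+1-(ℓ+1)) + 2 := by omega
      rw [ha]
      simp only []
      rw [he, pow_add]
      set x := (D+1)^(2*(n+1-(ℓ+1))) with hx
      have hx1 : 1 ≤ x := Nat.one_le_pow _ _ (by omega)
      have h1 : D ≤ x * D := Nat.le_mul_of_pos_left D (by omega)
      nlinarith [h1, hx1]
    exact_mod_cast hnat
  have haF : ∀ ℓ, (1:ℚ) ≤ (a ℓ : ℚ) := by
    intro ℓ
    have : 1 ≤ a ℓ := Nat.one_le_pow _ _ (by omega)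
    exact_mod_cast this
  set K : ℕ := (a 0 + 1) * (D + 1) with hK
  set start : Fin n → ℤ := c + (K : ℤ) • v with hstart
  have hphi_start : ∀ j, phi L M start j = phi L M c j + (K:ℚ) * phi L M v j := by
    intro j
    rw [hstart, phi_add]
    have : phi L M ((K:ℤ) • v) = (K:ℚ) • phi L M v := by
      unfold phi
      have hq : qc ((K:ℤ) • v) = (K:ℚ) • qc v := by
        funext i; simp [qc]
      rw [hq, mulVec_smul]
    rw [this]
    simp
  have hstart_valid : cfValid L M start := by
    rw [valid_iff]
    intro j
    rw [hphi_start]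
    have hA : 0 ≤ phi L M c j := hc j
    have hB := hv_nn j
    positivity
  have hstart_istar : ((a 0 : ℚ) + 1) * (D:ℚ) ≤ phi L M start istar := by
    rw [hphi_start]
    have h1 : ((K:ℚ)) ≤ (K:ℚ) * phi L M v istar := le_mul_of_one_le_right (by positivity) hv_pos
    have h2 : ((a 0 : ℚ) + 1) * (D:ℚ) ≤ (K:ℚ) := by
      rw [hK]
      push_cast
      nlinarith [haF 0]
    have h0 : 0 ≤ phi L M c istar := hc istar
    linarith
  -- main level induction
  have main : ∀ ℓ : ℕ, ℓ ≤ n → ∃ m, Seq L M start m ∧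
      (∀ j, dQ j < ℓ → (M j j : ℚ) ≤ phi L M m j) ∧
      (∀ j, dQ j = ℓ → ((a ℓ : ℚ) + 1) * (D:ℚ) ≤ phi L M m j) := by
    intro ℓ
    induction ℓ with
    | zero =>
        intro _
        refine ⟨start, Seq.nil _ hstart_valid, fun j hj => by omega, fun j hj => ?_⟩
        have : j = istar := by
          have := (hG'.dist_eq_zero_iff (u := istar) (v := j)).mp hj
          exact this.symm
        subst this
        exact hstart_istar
    | succ ℓ ih =>
        intro hℓn
        obtain ⟨m, hseq, hlow, hlev⟩ := ih (by omega)
        -- process the level-ℓ vertices one at a time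
        have inner : ∀ (k : ℕ) (S : Finset (Fin n)), S.card = k → (∀ x ∈ S, dQ x = ℓ) →
            ∀ m, Seq L M start m →
            (∀ j, dQ j < ℓ → (M j j : ℚ) ≤ phi L M m j) →
            (∀ j, j ∈ S → ((a ℓ : ℚ) + 1) * (D:ℚ) ≤ phi L M m j) →
            (∀ j, dQ j = ℓ → j ∉ S → (M j j : ℚ) ≤ phi L M m j) →
            (∀ j, dQ j = ℓ + 1 → (∃ b, dQ b = ℓ ∧ b ∉ S ∧ G'.Adj b j) →
              (a ℓ : ℚ) ≤ phi L M m j) →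
            ∃ m', Seq L M start m' ∧
              (∀ j, dQ j < ℓ → (M j j : ℚ) ≤ phi L M m' j) ∧
              (∀ j, dQ j = ℓ → (M j j : ℚ) ≤ phi L M m' j) ∧
              (∀ j, dQ j = ℓ + 1 → (∃ b, dQ b = ℓ ∧ G'.Adj b j) → (a ℓ : ℚ) ≤ phi L M m' j) := by
          intro k
          induction k with
          | zero =>
              intro S hScard hSlev m hseq hlow hin hout hfuel
              have hSempty : S = ∅ := Finset.card_eq_zero.mp hScard
              subst hSempty
              refine ⟨m, hseq, hlow, fun j hj => hout j hj (by simp), fun j hj ⟨b, hb1, hb2⟩ =>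
                hfuel j hj ⟨b, hb1, by simp, hb2⟩⟩
          | succ k ihk =>
              intro S hScard hSlev m hseq hlow hin hout hfuel
              have hSne : S.Nonempty := Finset.card_pos.mp (by omega)
              obtain ⟨w, hw⟩ := hSne
              have hdw : dQ w = ℓ := hSlev w hw
              have hvalidm : cfValid L M m := hseq.validEnd
              have hMww : (0:ℚ) ≤ (M w w : ℚ) := by exact_mod_cast hP2 w
              have hMwwD : (M w w : ℚ) ≤ (D:ℚ) := by exact_mod_cast hdeg_le w
              have hfire : ((a ℓ : ℕ) : ℚ) * (M w w : ℚ) ≤ phi L M m w := by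
                have h1 := hin w hw
                nlinarith [haF ℓ]
              have hseqf := fireMany L M hLinv hP1 hP2 hvalidm w (a ℓ) hfire
              set m' := m - L.mulVec (((a ℓ : ℕ) : ℤ) • Pi.single w 1) with hm'
              have hphim' : ∀ x, phi L M m' x = phi L M m x - (a ℓ : ℚ) * (M x w : ℚ) :=
                fun x => phi_fireMany L M hLinv m w (a ℓ) x
              have hmono : ∀ x, x ≠ w → phi L M m x ≤ phi L M m' x := by
                intro x hx
                rw [hphim' x]
                have h1 : (M x w : ℚ) ≤ 0 := by exact_mod_cast hP1 x w hx
                nlinarith [haF ℓ]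
              refine ihk (S.erase w) (by rw [Finset.card_erase_of_mem hw]; omega)
                (fun x hx => hSlev x (Finset.mem_of_mem_erase hx)) m'
                (hseq.trans _ _ hseqf) ?_ ?_ ?_ ?_
              · intro j hj
                have hjw : j ≠ w := fun h => by rw [h, hdw] at hj; omega
                exact le_trans (hlow j hj) (hmono j hjw)
              · intro j hj
                have hjw : j ≠ w := fun h => (Finset.notMem_erase w S) (h ▸ hj)
                exact le_trans (hin j (Finset.mem_of_mem_erase hj)) (hmono j hjw)
              · intro j hj hjnot
                rcases eq_or_ne j w with h | h
                · subst h
                  rw [hphim' j]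
                  have h1 := hin j hw
                  nlinarith
                · exact le_trans (hout j hj (fun hmem =>
                    hjnot (Finset.mem_erase.mpr ⟨h, hmem⟩))) (hmono j h)
              · intro j hj ⟨b, hb1, hb2, hb3⟩
                have hjw : j ≠ w := fun h => by rw [h, hdw] at hj; omega
                rcases eq_or_ne b w with hbw | hbw
                · subst hbw
                  rw [hphim' j]
                  have hadj : G.Adj j.castSucc b.castSucc := ((SimpleGraph.comap_adj).mp hb3).symm
                  have hMjw : M j b = -1 := by
                    rw [hM]
                    rw [if_neg hjw, if_pos hadj]
                  rw [hMjw]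
                  have h0 : 0 ≤ phi L M m j := hvalidm j
                  push_cast
                  linarith
                · have hbS : b ∉ S := fun hmem => hb2 (Finset.mem_erase.mpr ⟨hbw, hmem⟩)
                  exact le_trans (hfuel j hj ⟨b, hb1, hbS, hb3⟩) (hmono j hjw)
        -- apply inner with the full level set
        obtain ⟨m', hseq', hlow', hlev', hfuel'⟩ :=
          inner (Finset.univ.filter (fun x => dQ x = ℓ)).card _ rfl
            (fun x hx => (Finset.mem_filter.mp hx).2) m hseq hlow
            (fun j hj => hlev j (Finset.mem_filter.mp hj).2)
            (fun j hj hnot => absurd (Finset.mem_filter.mpr ⟨Finset.mem_univ j, hj⟩) hnot)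
            (fun j hj ⟨b, hb1, hb2, _⟩ =>
              absurd (Finset.mem_filter.mpr ⟨Finset.mem_univ b, hb1⟩) hb2)
        refine ⟨m', hseq', ?_, ?_⟩
        · intro j hj
          rcases Nat.lt_succ_iff_lt_or_eq.mp hj with h | h
          · exact hlow' j h
          · exact hlev' j h
        · intro j hj
          obtain ⟨b, hb1, hb2⟩ := dist_down hG' istar j ℓ hj
          have h1 := hfuel' j hj ⟨b, hb2, hb1⟩
          have h2 := hrec ℓ hℓn
          linarith
  obtain ⟨m, hseq, hlow, _⟩ := main n le_rfl
  refine ⟨K, m, hseq, fun i => ?_⟩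
  have hdist : dQ i < n := by
    have := dist_lt_card (G := G') hG' istar i
    simpa using this
  exact fire_of_deg L M hLinv hP1 hseq.validEnd (hlow i hdist)


open SimpleGraph in
lemma sink_exists {n : ℕ} (hn : 1 ≤ n) (G : SimpleGraph (Fin (n+1))) (hconn : G.Connected) :
    ∃ i₀ : Fin n, G.Adj (Fin.castSucc i₀) (Fin.last n) := by
  set u : Fin (n+1) := Fin.castSucc ⟨0, hn⟩ with hu
  have hne : u ≠ Fin.last n := (Fin.castSucc_lt_last ⟨0, hn⟩).ne
  have hpos : 0 < G.dist u (Fin.last n) := hconn.pos_dist_of_ne hne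
  obtain ⟨k, hk⟩ : ∃ k, G.dist u (Fin.last n) = k + 1 :=
    ⟨G.dist u (Fin.last n) - 1, by omega⟩
  obtain ⟨b, hb1, _⟩ := dist_down hconn u (Fin.last n) k hk
  have hbne : b ≠ Fin.last n := hb1.ne
  obtain ⟨i₀, hi₀⟩ := Fin.exists_castSucc_eq.mpr hbne
  exact ⟨i₀, by rw [hi₀]; exact hb1⟩

open SimpleGraph in
lemma fuel {n : ℕ} (hn : 1 ≤ n) (G : SimpleGraph (Fin (n+1))) [DecidableRel G.Adj]
    (hG' : (G.comap (fun i : Fin n => i.castSucc)).Connected)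
    (M : Matrix (Fin n) (Fin n) ℤ)
    (hM : ∀ i j : Fin n, M i j = if i = j then (G.degree i.castSucc : ℤ)
      else if G.Adj i.castSucc j.castSucc then -1 else 0)
    (i₀ : Fin n) (hi₀ : G.Adj (Fin.castSucc i₀) (Fin.last n))
    (z₀ : Fin n → ℤ) (hz₀nn : ∀ i, 0 ≤ z₀ i) (hz₀ne : z₀ ≠ 0)
    (hMz : ∀ i, 0 ≤ M.mulVec z₀ i) :
    ∃ istar : Fin n, 0 < M.mulVec z₀ istar := by
  by_contra hno
  push_neg at hno
  have heq : ∀ i, M.mulVec z₀ i = 0 := fun i => le_antisymm (hno i) (hMz i)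
  have hne : (Finset.univ : Finset (Fin n)).Nonempty := ⟨⟨0, hn⟩, Finset.mem_univ _⟩
  set T := Finset.univ.sup' hne z₀ with hT
  obtain ⟨jm, _, hjm⟩ := Finset.exists_mem_eq_sup' hne z₀
  have hle : ∀ j, z₀ j ≤ T := fun j => Finset.le_sup' z₀ (Finset.mem_univ j)
  have hTeq : T = z₀ jm := hT.trans hjm
  have hT0 : 0 ≤ T := by rw [hTeq]; exact hz₀nn jm
  rcases eq_or_lt_of_le hT0 with hT1 | hT1
  · -- T = 0 forces z₀ = 0
    apply hz₀ne
    funext j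
    have := hle j; have := hz₀nn j
    simp only [Pi.zero_apply]
    omega
  · -- T ≥ 1: propagate maximality over the connected graph G'
    set A : Set (Fin n) := {i | z₀ i = T} with hA
    have hprop : ∀ a b : Fin n, a ∈ A →
        (G.comap (fun i : Fin n => i.castSucc)).Adj a b → b ∈ A := by
      intro p q hp hadj
      have hpq : p ≠ q := hadj.ne
      have hadj' : G.Adj p.castSucc q.castSucc := hadj
      have hMpq : M p q = -1 := by rw [hM, if_neg hpq, if_pos hadj']
      by_contra hq
      have hqlt : z₀ q < T := lt_of_le_of_ne (hle q) hq
      have hterm : ∀ j ∈ Finset.univ, M p j * T ≤ M p j * z₀ j := by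
        intro j _
        rcases eq_or_ne j p with h | h
        · subst h; rw [hp]
        · exact mul_le_mul_of_nonpos_left (hle j) (lap_offdiag G M hM p j (Ne.symm h))
      have hstrict : ∑ j, M p j * T < ∑ j, M p j * z₀ j := by
        apply Finset.sum_lt_sum hterm
        refine ⟨q, Finset.mem_univ q, ?_⟩
        rw [hMpq]
        omega
      have hsum0 : ∑ j, M p j * z₀ j = 0 := by
        rw [← mulVec_eq_sum]; exact heq p
      have hsumT : 0 ≤ ∑ j, M p j * T := by
        rw [← Finset.sum_mul]
        exact mul_nonneg (lap_rowsum_nonneg G M hM p) hT0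
      omega
    have hall : ∀ i, i ∈ A := propagate_univ hG' A hprop (show jm ∈ A from hTeq.symm) 
    have hrow := lap_rowsum_pos G M hM i₀ hi₀
    have : M.mulVec z₀ i₀ = (∑ j, M i₀ j) * T := by
      rw [mulVec_eq_sum, Finset.sum_mul]
      exact Finset.sum_congr rfl (fun j _ => by rw [hall j])
    have hpos : 0 < M.mulVec z₀ i₀ := by
      rw [this]
      exact mul_pos (by omega) hT1
    exact absurd (heq i₀) hpos.ne'
  

end CF

/-- Theorem `EOfSinkFiring`: let `G` be connected with sink `q = Fin.last n` such that
`G` minus the sink is connected, `M` the reduced Laplacian, `L = M + N` the reduced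
signed Laplacian (invertible over ℚ), and `s` the 0-1 vector indicating the neighbors of
the sink.  If `s` is a valid configuration and `N₀ > 0` satisfies
`L⁻¹·(N₀·s) ∈ ℤ_{≥0}ⁿ`, then a valid configuration `c` is critical if and only if `c` is
stable and there is a legal firing sequence from `c + N₀·s` to `c`. -/
theorem stmt15 (n : ℕ) (hn : 1 ≤ n)
    (G : SimpleGraph (Fin (n + 1))) [DecidableRel G.Adj] (hconn : G.Connected)
    (hconn' : (G.comap (fun i : Fin n => i.castSucc)).Connected)
    (M N : Matrix (Fin n) (Fin n) ℤ)
    (hM : ∀ i j : Fin n, M i j =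
      if i = j then (G.degree i.castSucc : ℤ)
      else if G.Adj i.castSucc j.castSucc then -1 else 0)
    (hNsymm : ∀ i j, N i j = N j i)
    (hNdiag : ∀ i, N i i = 0)
    (hNval : ∀ i j, N i j = 0 ∨ N i j = 2)
    (hNsupp : ∀ i j, N i j ≠ 0 → M i j = -1)
    (L : Matrix (Fin n) (Fin n) ℤ) (hLdef : L = M + N)
    (hLinv : IsUnit (L.map (Int.cast : ℤ → ℚ)))
    (s : Fin n → ℤ)
    (hs : ∀ i, s i = if G.Adj i.castSucc (Fin.last n) then 1 else 0)
    (hsvalid : cfValid L M s)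
    (N₀ : ℕ) (hN₀pos : 0 < N₀)
    (hN₀ : ∀ i, ∃ k : ℕ,
      ((L.map (Int.cast : ℤ → ℚ))⁻¹.mulVec (fun j => (N₀ : ℚ) * (s j : ℚ))) i = k) :
    ∀ c : Fin n → ℤ, cfValid L M c →
      (cfCritical L M c ↔
        (cfStable L M c ∧ cfLegal L M (c + (N₀ : ℤ) • s) c)) := by
  intro c hc
  classical
  have hP1 : ∀ i j : Fin n, i ≠ j → M i j ≤ 0 := CF.lap_offdiag G M hM
  have hP2 : ∀ i : Fin n, 0 ≤ M i i := CF.lap_diag G M hM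
  have hP3 : ∀ i : Fin n, 0 ≤ ∑ j, M i j := CF.lap_rowsum_nonneg G M hM
  set z₀ : Fin n → ℤ := fun i => ((hN₀ i).choose : ℤ) with hz₀def
  have hz₀nn : ∀ i, 0 ≤ z₀ i := by
    intro i; simp only [hz₀def]; exact Int.natCast_nonneg _
  have h2 : CF.qc ((N₀:ℤ) • s) = fun j => (N₀:ℚ) * (s j : ℚ) := by
    funext j; simp only [CF.qc, Pi.smul_apply, smul_eq_mul]; push_cast; ring
  have hqz : CF.qc z₀ = (L.map (Int.cast : ℤ → ℚ))⁻¹.mulVec (CF.qc ((N₀:ℤ) • s)) := by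
    funext i
    rw [h2]
    have h1 := (hN₀ i).choose_spec
    show ((z₀ i : ℤ) : ℚ) = _
    simp only [hz₀def]
    push_cast
    exact h1.symm
  have hdet := (Matrix.isUnit_iff_isUnit_det _).mp hLinv
  have hLz₀ : L.mulVec z₀ = (N₀:ℤ) • s := by
    have hq : CF.qc (L.mulVec z₀) = CF.qc ((N₀:ℤ) • s) := by
      rw [CF.qc_mulVec, hqz, mulVec_mulVec, Matrix.mul_nonsing_inv _ hdet, Matrix.one_mulVec]
    funext i
    have h3 := congrFun hq i
    simp only [CF.qc] at h3
    exact_mod_cast h3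
  have hsigma : ∀ i, CF.phi L M ((N₀:ℤ) • s) i = ((M.mulVec z₀ i : ℤ) : ℚ) := by
    intro i
    rw [← hLz₀, CF.phi_L L M hLinv, ← CF.qc_mulVec]
    rfl
  have hphiNs : ∀ j, 0 ≤ CF.phi L M ((N₀:ℤ) • s) j := by
    intro j
    have hq : CF.qc ((N₀:ℤ) • s) = (N₀:ℚ) • CF.qc s := by
      funext i; simp only [CF.qc, Pi.smul_apply, smul_eq_mul]; push_cast; ring
    have he : CF.phi L M ((N₀:ℤ) • s) = (N₀:ℚ) • CF.phi L M s := by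
      unfold CF.phi; rw [hq, mulVec_smul]
    rw [he]
    have hs0 : 0 ≤ CF.phi L M s j := hsvalid j
    have hN0 : (0:ℚ) ≤ (N₀:ℚ) := by positivity
    simpa using mul_nonneg hN0 hs0
  have hMznn : ∀ i, 0 ≤ M.mulVec z₀ i := by
    intro i
    have h4 := hphiNs i
    rw [hsigma] at h4
    exact_mod_cast h4
  obtain ⟨i₀, hi₀⟩ := CF.sink_exists hn G hconn
  constructor
  · rintro ⟨hcv, hcs, d, hdv, hdf, hdl⟩
    have hSdc : CF.Seq L M d c := CF.seq_of_legal L M hdl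
    have hE : CF.Seq L M (d + L.mulVec z₀) d :=
      CF.seqDown L M hLinv hP1 hP2 hP3 d z₀ hdv hdf hz₀nn hMznn
    rw [hLz₀] at hE
    have htoc : CF.Seq L M (d + (N₀:ℤ) • s) c := CF.Seq.trans L M hE hSdc
    have hshift : CF.Seq L M (d + (N₀:ℤ) • s) (c + (N₀:ℤ) • s) :=
      CF.Seq.shift L M hphiNs hSdc
    exact ⟨hcs, CF.legal_of_seq L M (CF.Seq.bridge L M hLinv hP1 hshift htoc hcs)⟩
  · rintro ⟨hcs, hleg⟩
    refine ⟨hc, hcs, ?_⟩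
    have hS1 : CF.Seq L M (c + (N₀:ℤ) • s) c := CF.seq_of_legal L M hleg
    have hz₀ne : z₀ ≠ 0 := by
      intro h
      rw [h, mulVec_zero] at hLz₀
      have h1 := congrFun hLz₀ i₀
      have h2' : s i₀ = 1 := by rw [hs i₀, if_pos hi₀]
      simp only [Pi.zero_apply, Pi.smul_apply, smul_eq_mul] at h1
      rw [h2'] at h1
      omega
    obtain ⟨istar, histar⟩ := CF.fuel hn G hconn' M hM i₀ hi₀ z₀ hz₀nn hz₀ne hMznn
    have hv_pos : 1 ≤ CF.phi L M ((N₀:ℤ) • s) istar := by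
      rw [hsigma istar]; exact_mod_cast histar
    obtain ⟨K, m, hseq, hmf⟩ :=
      CF.pump hn G hconn' L M hLinv hM ((N₀:ℤ) • s) istar c hc hphiNs hv_pos
    have hrep : ∀ Kk : ℕ, CF.Seq L M (c + (Kk:ℤ) • ((N₀:ℤ) • s)) c := by
      intro Kk
      induction Kk with
      | zero => simpa using CF.Seq.nil c hc
      | succ Kk ih =>
          have hphiK : ∀ j, 0 ≤ CF.phi L M ((Kk:ℤ) • ((N₀:ℤ) • s)) j := by
            intro j
            have hq : CF.qc ((Kk:ℤ) • ((N₀:ℤ) • s)) = (Kk:ℚ) • CF.qc ((N₀:ℤ) • s) := by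
              funext i; simp only [CF.qc, Pi.smul_apply, smul_eq_mul]; push_cast; ring
            have he : CF.phi L M ((Kk:ℤ) • ((N₀:ℤ) • s)) =
                (Kk:ℚ) • CF.phi L M ((N₀:ℤ) • s) := by
              unfold CF.phi; rw [hq, mulVec_smul]
            rw [he]
            simpa using mul_nonneg (by positivity : (0:ℚ) ≤ (Kk:ℚ)) (hphiNs j)
          have h1 := CF.Seq.shift L M hphiK hS1
          have h2'' := CF.Seq.trans L M h1 ih
          have heq2 : c + ((Kk:ℤ)+1) • ((N₀:ℤ) • s) =
              c + (N₀:ℤ) • s + (Kk:ℤ) • ((N₀:ℤ) • s) := by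
            rw [add_smul, one_smul]; abel
          have hcast : ((Kk+1 : ℕ) : ℤ) = (Kk:ℤ) + 1 := by push_cast; ring
          rw [hcast, heq2]
          exact h2''
    exact ⟨m, hseq.validEnd, hmf, CF.legal_of_seq L M
      (CF.Seq.bridge L M hLinv hP1 hseq (hrep K) hcs)⟩
end
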